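/- arXiv:1702.00145 — 8 statements merged into one kernel-verified Lean document; each statement's English description precedes it below -/
import Mathlib

section
/- Let v be a weight on the unit disc and let (m_n)_{n≥1} be a strictly increasing sequence of positive integers tending to infinity such that for some constants 2 < k ≤ K one has k ≤ A(m_n, m_{n+1}) ≤ K and k ≤ B(m_n, m_{n+1}) ≤ K for every n. Then for every complex sequence (b_m)_{m=0}^∞ for which there exists f ∈ H_v^∞(𝔻) with Taylor coefficients (a_m) satisfying |b_m| ≤ |a_m| for all m, one has sup_{n≥1} v(r_{m_n}) ( Σ_{m = m_n + 1}^{m_{n+1}} |b_m|² r_{m_n}^{2m} )^{1/2} < ∞. -/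
/-!
Fix `n` and put `r = r_{m_n}`. By Parseval, `∑ |a_m|² r^{2m}` is the mean of `|f|²` over the
circle `|z| = r`, hence at most `(sup_{|z|=r} |f z|)² ≤ (‖f‖_v / v(r))²`; restricting the sum to
`m_n < m ≤ m_{n+1}` and replacing `a_m` by `b_m` only makes it smaller. Parseval for the power
series is obtained from Parseval for its partial sums, which converge uniformly on the circle.
-/

open Filter Polynomial Topology

theorem Polynomial.sum_sq_norm_coeff_le_sq_of_norm_eval_le (p : ℂ[X]) {L : ℝ}
    (hL : ∀ z : ℂ, ‖z‖ = 1 → ‖p.eval z‖ ≤ L) (s : Finset ℕ) :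
    ∑ i ∈ s, ‖p.coeff i‖ ^ 2 ≤ L ^ 2 := by
  have hzero : ∀ i ∈ s ∪ p.support, i ∉ p.support → ‖p.coeff i‖ ^ 2 = 0 := by simp
  calc ∑ i ∈ s, ‖p.coeff i‖ ^ 2
      ≤ ∑ i ∈ s ∪ p.support, ‖p.coeff i‖ ^ 2 :=
        Finset.sum_le_sum_of_subset_of_nonneg Finset.subset_union_left fun _ _ _ => by positivity
    _ = ∑ i ∈ p.support, ‖p.coeff i‖ ^ 2 :=
        (Finset.sum_subset Finset.subset_union_right hzero).symm
    _ = Real.circleAverage (fun z => ‖p.eval z‖ ^ 2) 0 1 := p.sum_sq_norm_coeff_eq_circleAverage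
    _ ≤ L ^ 2 := by
        refine Real.circleAverage_mono_on_of_le_circle
          (ContinuousOn.circleIntegrable' (by fun_prop)) fun z hz => ?_
        have hz : ‖z‖ = 1 := by simpa using hz
        exact pow_le_pow_left₀ (norm_nonneg _) (hL z hz) 2

theorem summable_norm_mul_pow_of_summable_mul_pow {c : ℕ → ℂ} {r ρ : ℝ} (hr : 0 ≤ r)
    (hrρ : r < ρ) (hc : Summable fun m => c m * (ρ : ℂ) ^ m) :
    Summable fun m => ‖c m‖ * r ^ m := by
  have hρ : 0 < ρ := hr.trans_lt hrρ
  obtain ⟨C, hC⟩ := hc.tendsto_atTop_zero.norm.bddAbove_range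
  have hbound : ∀ m, ‖c m‖ * ρ ^ m ≤ C := fun m => by
    simpa [abs_of_pos hρ] using hC (Set.mem_range_self m)
  refine Summable.of_nonneg_of_le (fun m => by positivity) (fun m => ?_)
    ((summable_geometric_of_lt_one (by positivity) ((div_lt_one hρ).2 hrρ)).mul_left C)
  calc ‖c m‖ * r ^ m = ‖c m‖ * ρ ^ m * (r / ρ) ^ m := by
        rw [div_pow, mul_assoc, mul_div_cancel₀ _ (by positivity)]
    _ ≤ C * (r / ρ) ^ m := by gcongr; exact hbound m

theorem sum_sq_norm_mul_pow_le_sq_of_norm_tsum_le {c : ℕ → ℂ} {r L : ℝ} (hr : 0 ≤ r)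
    (hc : Summable fun m => ‖c m‖ * r ^ m)
    (hL : ∀ z : ℂ, ‖z‖ = r → ‖∑' m, c m * z ^ m‖ ≤ L) (s : Finset ℕ) :
    ∑ j ∈ s, ‖c j‖ ^ 2 * r ^ (2 * j) ≤ L ^ 2 := by
  set tail : ℕ → ℝ := fun N => ∑' m, ‖c (m + N)‖ * r ^ (m + N)
  set partialSum : ℕ → ℂ[X] := fun N => ∑ m ∈ Finset.range N, monomial m (c m * r ^ m)
  have hpartial_eval : ∀ N, ∀ w : ℂ, ‖w‖ = 1 → ‖(partialSum N).eval w‖ ≤ L + tail N := by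
    intro N w hw
    have hrw : ‖(r : ℂ) * w‖ = r := by simp [hw, abs_of_nonneg hr]
    have hnorm : ∀ m, ‖c m * ((r : ℂ) * w) ^ m‖ = ‖c m‖ * r ^ m := fun m => by
      rw [norm_mul, norm_pow, hrw]
    have hsummable : Summable fun m => c m * ((r : ℂ) * w) ^ m :=
      .of_norm (by simpa only [hnorm] using hc)
    have heval : (partialSum N).eval w =
        ∑' m, c m * ((r : ℂ) * w) ^ m - ∑' m, c (m + N) * ((r : ℂ) * w) ^ (m + N) := by
      rw [← hsummable.sum_add_tsum_nat_add N, add_sub_cancel_right]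
      simp [partialSum, eval_finsetSum, mul_pow, mul_assoc]
    have htail : ‖∑' m, c (m + N) * ((r : ℂ) * w) ^ (m + N)‖ ≤ tail N := by
      refine (norm_tsum_le_tsum_norm ?_).trans_eq (tsum_congr fun m => hnorm (m + N))
      simpa only [hnorm] using (summable_nat_add_iff N).2 hc
    rw [heval]
    exact (norm_sub_le _ _).trans (add_le_add (hL _ hrw) htail)
  have hcoeff : ∀ N, ∀ j < N, ‖(partialSum N).coeff j‖ ^ 2 = ‖c j‖ ^ 2 * r ^ (2 * j) := by
    intro N j hj
    simp [partialSum, finsetSum_coeff, coeff_monomial, hj, abs_of_nonneg hr, mul_pow, pow_mul,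
      pow_right_comm r j 2]
  have hbound : ∀ᶠ N in atTop, ∑ j ∈ s, ‖c j‖ ^ 2 * r ^ (2 * j) ≤ (L + tail N) ^ 2 := by
    filter_upwards [eventually_gt_atTop (s.sup id)] with N hN
    calc ∑ j ∈ s, ‖c j‖ ^ 2 * r ^ (2 * j) = ∑ j ∈ s, ‖(partialSum N).coeff j‖ ^ 2 :=
          Finset.sum_congr rfl fun j hj =>
            (hcoeff N j ((Finset.le_sup (f := id) hj).trans_lt hN)).symm
      _ ≤ (L + tail N) ^ 2 :=
          (partialSum N).sum_sq_norm_coeff_le_sq_of_norm_eval_le (hpartial_eval N) s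
  have htail : Tendsto tail atTop (𝓝 0) := tendsto_sum_nat_add fun m => ‖c m‖ * r ^ m
  simpa using ge_of_tendsto ((tendsto_const_nhds.add htail).pow 2) hbound

theorem stmt_0_general
    (v : ℝ → ℝ)
    (hv_pos : ∀ r ∈ Set.Ico (0:ℝ) 1, 0 < v r)
    (rr : ℕ → ℝ)
    (hrr : ∀ m : ℕ, 0 < m → rr m ∈ Set.Ico (0:ℝ) 1 ∧
      IsMaxOn (fun r => r ^ m * v r) (Set.Ico 0 1) (rr m))
    (mseq : ℕ → ℕ)
    (hm_pos : ∀ n : ℕ, 0 < mseq n)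
    (b : ℕ → ℂ)
    (hb : ∃ (f : ℂ → ℂ) (c : ℕ → ℂ),
      (∀ z : ℂ, ‖z‖ < 1 → HasSum (fun m : ℕ => c m * z ^ m) (f z)) ∧
      (∃ M : ℝ, ∀ z : ℂ, ‖z‖ < 1 → v ‖z‖ * ‖f z‖ ≤ M) ∧
      (∀ m : ℕ, ‖b m‖ ≤ ‖c m‖)) :
    ∃ C : ℝ, ∀ n : ℕ,
      v (rr (mseq n)) *
        Real.sqrt (∑ j ∈ Finset.Ioc (mseq n) (mseq (n+1)),
          ‖b j‖ ^ 2 * rr (mseq n) ^ (2 * j)) ≤ C := by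
  obtain ⟨f, c, hf, ⟨M, hM⟩, hdom⟩ := hb
  have hM0 : 0 ≤ M :=
    (mul_nonneg (hv_pos 0 (by simp)).le (norm_nonneg (f 0))).trans (by simpa using hM 0 (by simp))
  refine ⟨M, fun n => ?_⟩
  obtain ⟨⟨hr0, hr1⟩, -⟩ := hrr (mseq n) (hm_pos n)
  set r := rr (mseq n)
  have hvr : 0 < v r := hv_pos r ⟨hr0, hr1⟩
  have hc : Summable fun m => ‖c m‖ * r ^ m :=
    summable_norm_mul_pow_of_summable_mul_pow hr0 (by linarith : r < (1 + r) / 2)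
      (hf _ (by rw [Complex.norm_real, Real.norm_of_nonneg (by linarith)]; linarith)).summable
  have hL : ∀ z : ℂ, ‖z‖ = r → ‖∑' m, c m * z ^ m‖ ≤ M / v r := by
    intro z hz
    rw [(hf z (hz ▸ hr1)).tsum_eq, le_div_iff₀ hvr, mul_comm, ← hz]
    exact hM z (hz ▸ hr1)
  have hsum :
      ∑ j ∈ Finset.Ioc (mseq n) (mseq (n + 1)), ‖b j‖ ^ 2 * r ^ (2 * j) ≤ (M / v r) ^ 2 :=
    (Finset.sum_le_sum fun j _ => by gcongr; exact hdom j).trans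
      (sum_sq_norm_mul_pow_le_sq_of_norm_tsum_le hr0 hc hL _)
  calc v r * Real.sqrt (∑ j ∈ Finset.Ioc (mseq n) (mseq (n + 1)), ‖b j‖ ^ 2 * r ^ (2 * j))
      ≤ v r * (M / v r) := by gcongr; exact Real.sqrt_le_iff.2 ⟨by positivity, hsum⟩
    _ = M := mul_div_cancel₀ M hvr.ne'

/-- Theorem 2.1 (solid hull, necessity direction).
If a weight `v` on the unit disc and a strictly increasing sequence of positive
integers `(m_n)` satisfy `k ≤ A(m_n, m_{n+1}) ≤ K`, `k ≤ B(m_n, m_{n+1}) ≤ K`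
for some `2 < k ≤ K`, then every sequence dominated coordinatewise by the Taylor
coefficients of some `f ∈ H_v^∞(𝔻)` satisfies the stated sup-condition. -/
theorem stmt_0
    (v : ℝ → ℝ)
    (hv_cont : ContinuousOn v (Set.Ico 0 1))
    (hv_pos : ∀ r ∈ Set.Ico (0:ℝ) 1, 0 < v r)
    (hv_mono : ∀ r s : ℝ, 0 ≤ r → r ≤ s → s < 1 → v s ≤ v r)
    (hv_lim : Filter.Tendsto v (nhdsWithin 1 (Set.Iio 1)) (nhds 0))
    (rr : ℕ → ℝ)
    (hrr : ∀ m : ℕ, 0 < m → rr m ∈ Set.Ico (0:ℝ) 1 ∧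
      IsMaxOn (fun r => r ^ m * v r) (Set.Ico 0 1) (rr m))
    (mseq : ℕ → ℕ)
    (hm_pos : ∀ n : ℕ, 0 < mseq n)
    (hm_mono : StrictMono mseq)
    (hm_tend : Filter.Tendsto (fun n => (mseq n : ℝ)) Filter.atTop Filter.atTop)
    (k K : ℝ) (hk : 2 < k) (hkK : k ≤ K)
    (hA : ∀ n : ℕ,
      k ≤ (rr (mseq n) / rr (mseq (n+1))) ^ (mseq n) *
            (v (rr (mseq n)) / v (rr (mseq (n+1)))) ∧
      (rr (mseq n) / rr (mseq (n+1))) ^ (mseq n) *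
            (v (rr (mseq n)) / v (rr (mseq (n+1)))) ≤ K)
    (hB : ∀ n : ℕ,
      k ≤ (rr (mseq (n+1)) / rr (mseq n)) ^ (mseq (n+1)) *
            (v (rr (mseq (n+1))) / v (rr (mseq n))) ∧
      (rr (mseq (n+1)) / rr (mseq n)) ^ (mseq (n+1)) *
            (v (rr (mseq (n+1))) / v (rr (mseq n))) ≤ K)
    (b : ℕ → ℂ)
    (hb : ∃ (f : ℂ → ℂ) (c : ℕ → ℂ),
      (∀ z : ℂ, ‖z‖ < 1 → HasSum (fun m : ℕ => c m * z ^ m) (f z)) ∧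
      (∃ M : ℝ, ∀ z : ℂ, ‖z‖ < 1 → v ‖z‖ * ‖f z‖ ≤ M) ∧
      (∀ m : ℕ, ‖b m‖ ≤ ‖c m‖)) :
    ∃ C : ℝ, ∀ n : ℕ,
      v (rr (mseq n)) *
        Real.sqrt (∑ j ∈ Finset.Ioc (mseq n) (mseq (n+1)),
          ‖b j‖ ^ 2 * rr (mseq n) ^ (2 * j)) ≤ C :=
  stmt_0_general v hv_pos rr hrr mseq hm_pos b hb
end

section
/- Let a > 0 and 0 < b < 2, let v(r) = exp(-a/(1-r)^b), set S := b·a^{-1/b}·α^{-1-1/b} and m_n := S·n^α for n ∈ ℕ. Then there exist constants 2 < k ≤ K and N ∈ ℕ such that for all n ≥ N: k ≤ A(m_n, m_{n+1}) ≤ K and k ≤ B(m_n, m_{n+1}) ≤ K. -/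
open Set Filter Real Topology

/-- If `g` has derivative `g' ≥ 0` on `[p,q]`, then `g p ≤ g q`. -/
lemma aux_le_of_deriv_nonneg (g g' : ℝ → ℝ) {p q : ℝ} (hpq : p ≤ q)
    (hd : ∀ x ∈ Icc p q, HasDerivAt g (g' x) x)
    (h' : ∀ x ∈ Icc p q, 0 ≤ g' x) : g p ≤ g q := by
  have hmono : MonotoneOn g (Icc p q) := by
    apply monotoneOn_of_deriv_nonneg (convex_Icc p q)
      (fun x hx => (hd x hx).continuousAt.continuousWithinAt)
    · intro x hx
      have hx' : x ∈ Icc p q := interior_subset hx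
      exact (hd x hx').differentiableAt.differentiableWithinAt
    · intro x hx
      have hx' : x ∈ Icc p q := interior_subset hx
      rw [(hd x hx').deriv]
      exact h' x hx'
  exact hmono (left_mem_Icc.2 hpq) (right_mem_Icc.2 hpq) hpq

lemma aux_ge_of_deriv_nonpos (g g' : ℝ → ℝ) {p q : ℝ} (hpq : p ≤ q)
    (hd : ∀ x ∈ Icc p q, HasDerivAt g (g' x) x)
    (h' : ∀ x ∈ Icc p q, g' x ≤ 0) : g q ≤ g p := by
  have h := aux_le_of_deriv_nonneg (fun x => -g x) (fun x => -g' x) hpq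
    (fun x hx => (hd x hx).neg) (fun x hx => by
      simp only [neg_nonneg]; exact h' x hx)
  simp only [neg_le_neg_iff] at h
  exact h

lemma aux_deriv_sq_half (c p x : ℝ) :
    HasDerivAt (fun x => c * (x - p) ^ 2 / 2) (c * (x - p)) x := by
  have h : HasDerivAt (fun x : ℝ => (x - p) ^ 2) (2 * (x - p)) x := by
    exact (((hasDerivAt_id x).sub_const p).pow 2).congr_deriv (by norm_num)
  have := (h.const_mul c).div_const 2
  exact this.congr_deriv (by ring)


lemma aux_deriv_lin (c p x : ℝ) : HasDerivAt (fun y => c * (y - p)) c x := by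
  simpa using ((hasDerivAt_id x).sub_const p).const_mul c

/-- Critical point at left end, `f'' ≤ -c`: `f p - f q ≥ c(q-p)²/2`. -/
lemma quad_lower_right (f f' f'' : ℝ → ℝ) {p q c : ℝ} (hpq : p ≤ q)
    (hd1 : ∀ x ∈ Icc p q, HasDerivAt f (f' x) x)
    (hd2 : ∀ x ∈ Icc p q, HasDerivAt f' (f'' x) x)
    (h0 : f' p = 0) (hc : ∀ x ∈ Icc p q, f'' x ≤ -c) :
    c * (q - p) ^ 2 / 2 ≤ f p - f q := by
  have hg'nonneg : ∀ x ∈ Icc p q, 0 ≤ -f' x - c * (x - p) := by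
    intro x hx
    have hsub : Icc p x ⊆ Icc p q := Icc_subset_Icc le_rfl hx.2
    have h := aux_le_of_deriv_nonneg (fun y => -f' y - c * (y - p))
      (fun y => -f'' y - c) hx.1
      (fun y hy => ((hd2 y (hsub hy)).neg.sub (aux_deriv_lin c p y)))
      (fun y hy => by show (0:ℝ) ≤ -f'' y - c; have := hc y (hsub hy); linarith)
    simp only [h0, sub_zero, neg_zero, sub_self, mul_zero] at h
    linarith [h]
  have h := aux_le_of_deriv_nonneg (fun x => f p - f x - c * (x - p) ^ 2 / 2)
    (fun x => -f' x - c * (x - p)) hpq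
    (fun x hx => (((hd1 x hx).const_sub (f p)).sub (aux_deriv_sq_half c p x)).congr_deriv
      (by ring))
    hg'nonneg
  simp only [sub_self] at h
  nlinarith [h]

/-- Critical point at left end, `-C ≤ f''`: `f p - f q ≤ C(q-p)²/2`. -/
lemma quad_upper_right (f f' f'' : ℝ → ℝ) {p q C : ℝ} (hpq : p ≤ q)
    (hd1 : ∀ x ∈ Icc p q, HasDerivAt f (f' x) x)
    (hd2 : ∀ x ∈ Icc p q, HasDerivAt f' (f'' x) x)
    (h0 : f' p = 0) (hC : ∀ x ∈ Icc p q, -C ≤ f'' x) :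
    f p - f q ≤ C * (q - p) ^ 2 / 2 := by
  have hg'nonneg : ∀ x ∈ Icc p q, 0 ≤ f' x + C * (x - p) := by
    intro x hx
    have hsub : Icc p x ⊆ Icc p q := Icc_subset_Icc le_rfl hx.2
    have h := aux_le_of_deriv_nonneg (fun y => f' y + C * (y - p))
      (fun y => f'' y + C) hx.1
      (fun y hy => ((hd2 y (hsub hy)).add (aux_deriv_lin C p y)))
      (fun y hy => by show (0:ℝ) ≤ f'' y + C; have := hC y (hsub hy); linarith)
    simp only [h0, sub_self, mul_zero, zero_add] at h
    linarith [h]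
  have h := aux_le_of_deriv_nonneg (fun x => f x - f p + C * (x - p) ^ 2 / 2)
    (fun x => f' x + C * (x - p)) hpq
    (fun x hx => (((hd1 x hx).sub_const (f p)).add (aux_deriv_sq_half C p x)))
    hg'nonneg
  simp only [sub_self] at h
  nlinarith [h]

/-- Critical point at right end, `f'' ≤ -c`: `f q - f p ≥ c(q-p)²/2`. -/
lemma quad_lower_left (f f' f'' : ℝ → ℝ) {p q c : ℝ} (hpq : p ≤ q)
    (hd1 : ∀ x ∈ Icc p q, HasDerivAt f (f' x) x)
    (hd2 : ∀ x ∈ Icc p q, HasDerivAt f' (f'' x) x)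
    (h0 : f' q = 0) (hc : ∀ x ∈ Icc p q, f'' x ≤ -c) :
    c * (q - p) ^ 2 / 2 ≤ f q - f p := by
  have hg'nonpos : ∀ x ∈ Icc p q, -f' x - c * (x - q) ≤ 0 := by
    intro x hx
    have hsub : Icc x q ⊆ Icc p q := Icc_subset_Icc hx.1 le_rfl
    have h := aux_le_of_deriv_nonneg (fun y => -f' y - c * (y - q))
      (fun y => -f'' y - c) hx.2
      (fun y hy => ((hd2 y (hsub hy)).neg.sub (aux_deriv_lin c q y)))
      (fun y hy => by show (0:ℝ) ≤ -f'' y - c; have := hc y (hsub hy); linarith)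
    simp only [h0, sub_self, mul_zero, neg_zero, sub_zero] at h
    linarith [h]
  have h := aux_ge_of_deriv_nonpos (fun x => f q - f x - c * (x - q) ^ 2 / 2)
    (fun x => -f' x - c * (x - q)) hpq
    (fun x hx => (((hd1 x hx).const_sub (f q)).sub (aux_deriv_sq_half c q x)).congr_deriv
      (by ring))
    hg'nonpos
  simp only [sub_self] at h
  nlinarith [h]

/-- Critical point at right end, `-C ≤ f''`: `f q - f p ≤ C(q-p)²/2`. -/
lemma quad_upper_left (f f' f'' : ℝ → ℝ) {p q C : ℝ} (hpq : p ≤ q)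
    (hd1 : ∀ x ∈ Icc p q, HasDerivAt f (f' x) x)
    (hd2 : ∀ x ∈ Icc p q, HasDerivAt f' (f'' x) x)
    (h0 : f' q = 0) (hC : ∀ x ∈ Icc p q, -C ≤ f'' x) :
    f q - f p ≤ C * (q - p) ^ 2 / 2 := by
  have hg'nonpos : ∀ x ∈ Icc p q, f' x + C * (x - q) ≤ 0 := by
    intro x hx
    have hsub : Icc x q ⊆ Icc p q := Icc_subset_Icc hx.1 le_rfl
    have h := aux_le_of_deriv_nonneg (fun y => f' y + C * (y - q))
      (fun y => f'' y + C) hx.2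
      (fun y hy => ((hd2 y (hsub hy)).add (aux_deriv_lin C q y)))
      (fun y hy => by show (0:ℝ) ≤ f'' y + C; have := hC y (hsub hy); linarith)
    simp only [h0, sub_self, mul_zero, add_zero, zero_add] at h
    linarith [h]
  have h := aux_ge_of_deriv_nonpos (fun x => f x - f q + C * (x - q) ^ 2 / 2)
    (fun x => f' x + C * (x - q)) hpq
    (fun x hx => (((hd1 x hx).sub_const (f q)).add (aux_deriv_sq_half C q x)))
    hg'nonpos
  simp only [sub_self] at h
  nlinarith [h]

/-- Concavity: for `0 < y ≤ x` and `0 < β ≤ 1`, `x^β - y^β ≤ β y^(β-1) (x-y)`. -/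
lemma aux_concave {x y β : ℝ} (hy : 0 < y) (hxy : y ≤ x) (hβ0 : 0 < β) (hβ1 : β ≤ 1) :
    x ^ β - y ^ β ≤ β * y ^ (β - 1) * (x - y) := by
  have key := aux_ge_of_deriv_nonpos (fun t => t ^ β - β * y ^ (β-1) * t)
    (fun t => β * t ^ (β-1) - β * y ^ (β-1)) hxy
    (fun t ht => by
      have ht0 : (0:ℝ) < t := lt_of_lt_of_le hy ht.1
      have h1 := Real.hasDerivAt_rpow_const (x := t) (p := β) (Or.inl ht0.ne')
      have h2 : HasDerivAt (fun t : ℝ => β * y ^ (β-1) * t) (β * y ^ (β-1)) t := by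
        simpa using (hasDerivAt_id t).const_mul (β * y ^ (β-1))
      exact h1.sub h2)
    (fun t ht => by
      show β * t ^ (β-1) - β * y ^ (β-1) ≤ 0
      have ht0 : (0:ℝ) < t := lt_of_lt_of_le hy ht.1
      have : t ^ (β-1) ≤ y ^ (β-1) :=
        Real.rpow_le_rpow_of_nonpos hy ht.1 (by linarith)
      nlinarith)
  nlinarith [key]

lemma aux_div_succ_tendsto : Tendsto (fun n : ℕ => (n:ℝ)/((n:ℝ)+1)) atTop (𝓝 1) := by
  exact tendsto_natCast_div_add_atTop (1:ℝ)

lemma aux_succ_div_tendsto : Tendsto (fun n : ℕ => ((n:ℝ)+1)/(n:ℝ)) atTop (𝓝 1) := by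
  have h : Tendsto (fun n : ℕ => 1 + 1/(n:ℝ)) atTop (𝓝 (1 + 0)) :=
    (tendsto_const_nhds).add (tendsto_one_div_atTop_nhds_zero_nat)
  rw [add_zero] at h
  apply h.congr'
  filter_upwards [eventually_gt_atTop 0] with n hn
  have : (n:ℝ) ≠ 0 := Nat.cast_ne_zero.2 hn.ne'
  field_simp

lemma aux_T2 {γ : ℝ} (hγ : 0 < γ) :
    Tendsto (fun n : ℕ => (n:ℝ) * (1 - ((n:ℝ)/((n:ℝ)+1)) ^ γ)) atTop (𝓝 γ) := by
  have h0 : HasDerivAt (fun x : ℝ => 1 + x) 1 0 := by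
    simpa using (hasDerivAt_id (0:ℝ)).const_add 1
  have h1 := (Real.hasDerivAt_rpow_const (x := (1:ℝ)+0) (p := -γ)
    (Or.inl (by norm_num))).comp 0 h0
  have h2 : HasDerivAt (fun x : ℝ => 1 - (1+x)^(-γ)) γ 0 := by
    have h3 := h1.const_sub 1
    exact h3.congr_deriv (by simp)
  rw [hasDerivAt_iff_tendsto_slope] at h2
  have hseq : Tendsto (fun n : ℕ => 1/(n:ℝ)) atTop (𝓝[≠] (0:ℝ)) := by
    apply tendsto_nhdsWithin_of_tendsto_nhds_of_eventually_within
    · exact tendsto_one_div_atTop_nhds_zero_nat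
    · filter_upwards [eventually_gt_atTop 0] with n hn
      have : (0:ℝ) < 1/(n:ℝ) := by positivity
      exact this.ne'
  have := h2.comp hseq
  apply this.congr'
  filter_upwards [eventually_gt_atTop 0] with n hn
  have hn0 : (n:ℝ) ≠ 0 := Nat.cast_ne_zero.2 hn.ne'
  have hnpos : (0:ℝ) < n := by exact_mod_cast hn
  show slope (fun x : ℝ => 1 - (1+x)^(-γ)) 0 (1/(n:ℝ)) = _
  rw [slope_def_field]
  have e1 : (1:ℝ) + 1/(n:ℝ) = ((n:ℝ)+1)/(n:ℝ) := by field_simp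
  have e2 : (((n:ℝ)+1)/(n:ℝ)) ^ (-γ) = ((n:ℝ)/((n:ℝ)+1)) ^ γ := by
    rw [Real.rpow_neg (by positivity), ← Real.inv_rpow (by positivity)]
    congr 1
    field_simp
  simp only [e1, e2, Real.rpow_zero]
  field_simp
  rw [add_zero, Real.one_rpow]
  ring


noncomputable def phi (a b m : ℝ) (x : ℝ) : ℝ := m * Real.log x - a / (1-x)^b
noncomputable def phi' (a b m : ℝ) (x : ℝ) : ℝ := m / x - a*b / (1-x)^(b+1)
noncomputable def phi'' (a b m : ℝ) (x : ℝ) : ℝ := -(m / x^2) - a*b*(b+1) / (1-x)^(b+2)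

lemma aux_deriv_pow_term (a c x : ℝ) (hx1 : x < 1) (hc : 0 < c) :
    HasDerivAt (fun y : ℝ => a / (1-y)^c) (a * c / (1-x)^(c+1)) x := by
  have h1x : (0:ℝ) < 1 - x := by linarith
  have hg : HasDerivAt (fun y : ℝ => (1-y)^c) (c * (1-x)^(c-1) * (-1)) x := by
    have hinner : HasDerivAt (fun y : ℝ => 1 - y) (-1) x := by
      simpa using (hasDerivAt_id x).const_sub 1
    exact (Real.hasDerivAt_rpow_const (x := 1-x) (p := c) (Or.inl h1x.ne')).comp x hinner
  have hgne : (1-x)^c ≠ 0 := (Real.rpow_pos_of_pos h1x c).ne'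
  have h := (hasDerivAt_const x a).div hg hgne
  refine h.congr_deriv (Eq.symm ?_)
  have e1 : ((1-x)^c)^2 = (1-x)^(c*2) := by
    rw [← Real.rpow_natCast ((1-x)^c) 2, ← Real.rpow_mul h1x.le]
    norm_num
  have e2 : (1-x)^(c+1) * (1-x)^(c-1) = (1-x)^(c*2) := by
    rw [← Real.rpow_add h1x]; ring_nf
  rw [div_eq_div_iff (Real.rpow_pos_of_pos h1x _).ne' (by positivity), e1]
  linear_combination (-(a*c)) * e2

lemma phi_deriv1 (a b m : ℝ) (hb : 0 < b) {x : ℝ} (hx0 : 0 < x) (hx1 : x < 1) :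
    HasDerivAt (phi a b m) (phi' a b m x) x := by
  have h1 : HasDerivAt (fun y : ℝ => m * Real.log y) (m / x) x := by
    have := (Real.hasDerivAt_log hx0.ne').const_mul m
    simpa [div_eq_mul_inv] using this
  have h2 := aux_deriv_pow_term a b x hx1 hb
  have := h1.sub h2
  exact this

lemma phi_deriv2 (a b m : ℝ) (hb : 0 < b) {x : ℝ} (hx0 : 0 < x) (hx1 : x < 1) :
    HasDerivAt (phi' a b m) (phi'' a b m x) x := by
  have h1 : HasDerivAt (fun y : ℝ => m / y) (-(m / x^2)) x := by
    have := (hasDerivAt_inv hx0.ne').const_mul m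
    simpa [div_eq_mul_inv, neg_div] using this
  have h2 := aux_deriv_pow_term (a*b) (b+1) x hx1 (by linarith)
  have := h1.sub h2
  have e : b + 1 + 1 = b + 2 := by ring
  rw [show phi'' a b m x = -(m / x^2) - a*b*(b+1)/(1-x)^(b+1+1) by simp [phi'', e]]
  exact this

/-- Two-sided bound for `phi m p - phi m q` when `p` is the critical point of `phi m`. -/
lemma keyA (a b m M p q : ℝ) (ha : 0 < a) (hb : 0 < b) (hm : 0 < m) (hmM : m ≤ M)
    (hp0 : 0 < p) (hq1 : q < 1) (hpq : p ≤ q)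
    (hcrit : phi' a b m p = 0) :
    (m + a*b*(b+1) * (1-p)^(-(b+2))) * (q-p)^2/2 ≤ phi a b m p - phi a b m q ∧
    phi a b m p - phi a b m q ≤ (M/p^2 + a*b*(b+1) * (1-q)^(-(b+2))) * (q-p)^2/2 := by
  have hq0 : 0 < q := lt_of_lt_of_le hp0 hpq
  have hp1 : p < 1 := lt_of_le_of_lt hpq hq1
  have hx : ∀ x ∈ Icc p q, 0 < x ∧ x < 1 :=
    fun x hx => ⟨lt_of_lt_of_le hp0 hx.1, lt_of_le_of_lt hx.2 hq1⟩
  have hd1 : ∀ x ∈ Icc p q, HasDerivAt (phi a b m) (phi' a b m x) x :=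
    fun x hxm => phi_deriv1 a b m hb (hx x hxm).1 (hx x hxm).2
  have hd2 : ∀ x ∈ Icc p q, HasDerivAt (phi' a b m) (phi'' a b m x) x :=
    fun x hxm => phi_deriv2 a b m hb (hx x hxm).1 (hx x hxm).2
  have hbd : ∀ x ∈ Icc p q,
      phi'' a b m x ≤ -(m + a*b*(b+1) * (1-p)^(-(b+2))) ∧
      -(M/p^2 + a*b*(b+1) * (1-q)^(-(b+2))) ≤ phi'' a b m x := by
    intro x hxm
    obtain ⟨hx0, hx1⟩ := hx x hxm
    have h1x : (0:ℝ) < 1 - x := by linarith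
    have h1p : (0:ℝ) < 1 - p := by linarith
    have h1q : (0:ℝ) < 1 - q := by linarith
    have habb : (0:ℝ) < a*b*(b+1) := by positivity
    -- m/x^2 bounds
    have hx2 : (0:ℝ) < x^2 := by positivity
    have hxsq : x^2 ≤ 1 := by nlinarith
    have hpsq : p^2 ≤ x^2 := by nlinarith [hxm.1]
    have hmx_lo : m ≤ m / x^2 := by
      rw [le_div_iff₀ hx2]; nlinarith
    have hmx_hi : m / x^2 ≤ M / p^2 := by
      apply div_le_div₀ (by linarith) hmM (by positivity) hpsq
    -- rpow bounds
    have hr_lo : (1-p)^(-(b+2)) ≤ ((1-x)^(b+2))⁻¹ := by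
      rw [Real.rpow_neg h1p.le]
      apply inv_anti₀ (by positivity)
      exact Real.rpow_le_rpow h1x.le (by linarith [hxm.1]) (by linarith)
    have hr_hi : ((1-x)^(b+2))⁻¹ ≤ (1-q)^(-(b+2)) := by
      rw [Real.rpow_neg h1q.le]
      apply inv_anti₀ (by positivity)
      exact Real.rpow_le_rpow h1q.le (by linarith [hxm.2]) (by linarith)
    constructor
    · show -(m/x^2) - a*b*(b+1)/(1-x)^(b+2) ≤ _
      rw [div_eq_mul_inv (a*b*(b+1))]
      have := mul_le_mul_of_nonneg_left hr_lo habb.le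
      linarith
    · show _ ≤ -(m/x^2) - a*b*(b+1)/(1-x)^(b+2)
      rw [div_eq_mul_inv (a*b*(b+1))]
      have := mul_le_mul_of_nonneg_left hr_hi habb.le
      linarith
  constructor
  · exact quad_lower_right _ _ _ hpq hd1 hd2 hcrit (fun x hxm => (hbd x hxm).1)
  · exact quad_upper_right _ _ _ hpq hd1 hd2 hcrit (fun x hxm => (hbd x hxm).2)

/-- Two-sided bound for `phi M q - phi M p` when `q` is the critical point of `phi M`. -/
lemma keyB (a b m M p q : ℝ) (ha : 0 < a) (hb : 0 < b) (hm : 0 < m) (hmM : m ≤ M)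
    (hp0 : 0 < p) (hq1 : q < 1) (hpq : p ≤ q)
    (hcrit : phi' a b M q = 0) :
    (m + a*b*(b+1) * (1-p)^(-(b+2))) * (q-p)^2/2 ≤ phi a b M q - phi a b M p ∧
    phi a b M q - phi a b M p ≤ (M/p^2 + a*b*(b+1) * (1-q)^(-(b+2))) * (q-p)^2/2 := by
  have hq0 : 0 < q := lt_of_lt_of_le hp0 hpq
  have hp1 : p < 1 := lt_of_le_of_lt hpq hq1
  have hx : ∀ x ∈ Icc p q, 0 < x ∧ x < 1 :=
    fun x hx => ⟨lt_of_lt_of_le hp0 hx.1, lt_of_le_of_lt hx.2 hq1⟩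
  have hd1 : ∀ x ∈ Icc p q, HasDerivAt (phi a b M) (phi' a b M x) x :=
    fun x hxm => phi_deriv1 a b M hb (hx x hxm).1 (hx x hxm).2
  have hd2 : ∀ x ∈ Icc p q, HasDerivAt (phi' a b M) (phi'' a b M x) x :=
    fun x hxm => phi_deriv2 a b M hb (hx x hxm).1 (hx x hxm).2
  have hbd : ∀ x ∈ Icc p q,
      phi'' a b M x ≤ -(m + a*b*(b+1) * (1-p)^(-(b+2))) ∧
      -(M/p^2 + a*b*(b+1) * (1-q)^(-(b+2))) ≤ phi'' a b M x := by
    intro x hxm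
    obtain ⟨hx0, hx1⟩ := hx x hxm
    have h1x : (0:ℝ) < 1 - x := by linarith
    have h1p : (0:ℝ) < 1 - p := by linarith
    have h1q : (0:ℝ) < 1 - q := by linarith
    have habb : (0:ℝ) < a*b*(b+1) := by positivity
    have hx2 : (0:ℝ) < x^2 := by positivity
    have hxsq : x^2 ≤ 1 := by nlinarith
    have hpsq : p^2 ≤ x^2 := by nlinarith [hxm.1]
    have hmx_lo : m ≤ M / x^2 := by
      rw [le_div_iff₀ hx2]; nlinarith
    have hmx_hi : M / x^2 ≤ M / p^2 := by
      apply div_le_div₀ (by linarith) le_rfl (by positivity) hpsq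
    have hr_lo : (1-p)^(-(b+2)) ≤ ((1-x)^(b+2))⁻¹ := by
      rw [Real.rpow_neg h1p.le]
      apply inv_anti₀ (by positivity)
      exact Real.rpow_le_rpow h1x.le (by linarith [hxm.1]) (by linarith)
    have hr_hi : ((1-x)^(b+2))⁻¹ ≤ (1-q)^(-(b+2)) := by
      rw [Real.rpow_neg h1q.le]
      apply inv_anti₀ (by positivity)
      exact Real.rpow_le_rpow h1q.le (by linarith [hxm.2]) (by linarith)
    constructor
    · show -(M/x^2) - a*b*(b+1)/(1-x)^(b+2) ≤ _
      rw [div_eq_mul_inv (a*b*(b+1))]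
      have := mul_le_mul_of_nonneg_left hr_lo habb.le
      linarith
    · show _ ≤ -(M/x^2) - a*b*(b+1)/(1-x)^(b+2)
      rw [div_eq_mul_inv (a*b*(b+1))]
      have := mul_le_mul_of_nonneg_left hr_hi habb.le
      linarith
  constructor
  · exact quad_lower_left _ _ _ hpq hd1 hd2 hcrit (fun x hxm => (hbd x hxm).1)
  · exact quad_upper_left _ _ _ hpq hd1 hd2 hcrit (fun x hxm => (hbd x hxm).2)

/-- The constant identity: the limit equals 1. -/
lemma aux_const (a b α S γ β c1 : ℝ) (ha : 0 < a) (hb : 0 < b)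
    (hα : α = 2 + 2/b) (hS : S = b * a ^ (-(1/b)) * α ^ (-1 - 1/b))
    (hγ : γ = 2/b) (hβ : β = 1/(b+1)) (hSpos : 0 < S)
    (hc1 : c1 = (a*b/S) ^ β) :
    a*b*(b+1)/2 * c1 ^ (-(b+2)) * (c1*γ)^2 = 1 := by
  have hb1 : (0:ℝ) < b + 1 := by linarith
  have hα0 : 0 < α := by rw [hα]; positivity
  set K := 2*a*(b+1)/b with hK
  have hK0 : 0 < K := by positivity
  have hαval : α = 2*(b+1)/b := by rw [hα]; field_simp
  -- S = a*b * K^(-((b+1)/b))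
  have hSK : S = a*b * K ^ (-((b+1)/b)) := by
    have hKα : K = a * α := by rw [hK, hαval]; ring
    rw [hKα, Real.mul_rpow ha.le hα0.le, hS]
    have e1 : a ^ (-((b+1)/b)) = a ^ (-(1/b)) * a⁻¹ := by
      rw [← Real.rpow_neg_one a, ← Real.rpow_add ha]
      congr 1; field_simp; ring
    have e2 : α ^ (-((b+1)/b)) = α ^ (-1-1/b) := by
      congr 1; field_simp; ring
    rw [e1, e2]
    field_simp
  have habS : a*b/S = K ^ ((b+1)/b) := by
    rw [hSK, Real.rpow_neg hK0.le]
    rw [div_mul_eq_div_div, div_self (by positivity), one_div, inv_inv]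
  have hc1pos : 0 < c1 := by
    rw [hc1]; apply Real.rpow_pos_of_pos; positivity
  -- c1 ^ (-b) = 1/K
  have hc1b : c1 ^ (-b) = K⁻¹ := by
    rw [hc1, habS, ← Real.rpow_mul hK0.le, ← Real.rpow_mul hK0.le]
    have e : (b+1)/b * β * (-b) = -1 := by rw [hβ]; field_simp
    rw [e, Real.rpow_neg_one]
  -- combine
  have hsplit : c1 ^ (-(b+2)) * c1^2 = c1 ^ (-b) := by
    rw [← Real.rpow_natCast c1 2, ← Real.rpow_add hc1pos]
    norm_num
  have : a*b*(b+1)/2 * c1 ^ (-(b+2)) * (c1*γ)^2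
      = (a*b*(b+1)/2 * γ^2) * (c1 ^ (-(b+2)) * c1^2) := by ring
  rw [this, hsplit, hc1b, hγ, hK]
  field_simp

set_option maxHeartbeats 1000000 in
lemma aux_limits (a b S γ β c1 : ℝ) (u : ℕ → ℝ)
    (ha : 0 < a) (hb0 : 0 < b) (hb2 : b < 2)
    (hγ : γ = 2/b) (hβ : β = 1/(b+1)) (hSpos : 0 < S) (hc1pos : 0 < c1)
    (hconst : a*b*(b+1)/2 * c1 ^ (-(b+2)) * (c1*γ)^2 = 1)
    (hu01 : ∀ n : ℕ, 1 ≤ n → 0 < u n ∧ u n < 1)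
    (hukey : ∀ n : ℕ, 1 ≤ n → u n = c1 * (n:ℝ)^(-γ) * (1 - u n)^β)
    (hmono : ∀ n : ℕ, 1 ≤ n → u (n+1) < u n) :
    Tendsto (fun n : ℕ => (S*(n:ℝ)^(2+γ) + a*b*(b+1) * (u n)^(-(b+2)))
        * (u n - u (n+1))^2 / 2) atTop (𝓝 1) ∧
    Tendsto (fun n : ℕ => (S*((n:ℝ)+1)^(2+γ)/(1 - u n)^2 + a*b*(b+1) * (u (n+1))^(-(b+2)))
        * (u n - u (n+1))^2 / 2) atTop (𝓝 1) := by
  have hγ0 : 0 < γ := by rw [hγ]; positivity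
  have hγ1 : 1 < γ := by rw [hγ]; rw [lt_div_iff₀ hb0]; linarith
  have hγb : γ * b = 2 := by rw [hγ]; field_simp
  have hβ0 : 0 < β := by rw [hβ]; positivity
  have hβ1 : β ≤ 1 := by rw [hβ]; rw [div_le_one (by linarith)]; linarith
  -- basic limits
  have hnpow : ∀ c : ℝ, 0 < c → Tendsto (fun n : ℕ => (n:ℝ)^(-c)) atTop (𝓝 0) :=
    fun c hc => (tendsto_rpow_neg_atTop hc).comp tendsto_natCast_atTop_atTop
  have hub : ∀ n : ℕ, 1 ≤ n → u n ≤ c1 * (n:ℝ)^(-γ) := by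
    intro n hn
    have h01 := hu01 n hn
    rw [hukey n hn]
    have : (1 - u n)^β ≤ 1 :=
      Real.rpow_le_one (by linarith [h01.1]) (by linarith [h01.2]) hβ0.le
    have hpos : 0 < c1 * (n:ℝ)^(-γ) := by
      have : (0:ℝ) < n := by exact_mod_cast hn
      positivity
    nlinarith
  have hu0 : Tendsto u atTop (𝓝 0) := by
    apply tendsto_of_tendsto_of_tendsto_of_le_of_le' tendsto_const_nhds
      (by simpa using (hnpow γ hγ0).const_mul c1)
    · filter_upwards [eventually_ge_atTop 1] with n hn; exact (hu01 n hn).1.le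
    · filter_upwards [eventually_ge_atTop 1] with n hn; exact hub n hn
  have h1u : Tendsto (fun n => 1 - u n) atTop (𝓝 1) := by
    simpa using tendsto_const_nhds.sub hu0
  have hw : Tendsto (fun n => (1 - u n)^β) atTop (𝓝 1) := by
    simpa using h1u.rpow_const (Or.inl one_ne_zero)
  have hw' : Tendsto (fun n => (1 - u (n+1))^β) atTop (𝓝 1) :=
    hw.comp (tendsto_add_atTop_nat 1)
  -- hA : n^γ u n → c1
  have hA : Tendsto (fun n : ℕ => (n:ℝ)^γ * u n) atTop (𝓝 c1) := by
    have h := hw.const_mul c1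
    rw [mul_one] at h
    apply h.congr'
    filter_upwards [eventually_ge_atTop 1] with n hn
    have hn0 : (0:ℝ) < n := by exact_mod_cast hn
    have hk := hukey n hn
    have e1 : (n:ℝ)^γ * ((n:ℝ)^(-γ)) = 1 := by
      rw [← Real.rpow_add hn0]; norm_num
    show c1 * (1-u n)^β = (n:ℝ)^γ * u n
    linear_combination (-((n:ℝ)^γ)) * hk - (c1 * (1-u n)^β) * e1
  have hA1 : Tendsto (fun n : ℕ => ((n:ℝ)+1)^γ * u (n+1)) atTop (𝓝 c1) := by
    have h := hA.comp (tendsto_add_atTop_nat 1)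
    apply h.congr
    intro n
    show ((↑(n+1):ℝ))^γ * u (n+1) = _
    push_cast
    try ring
  have hA' : Tendsto (fun n : ℕ => (n:ℝ)^γ * u (n+1)) atTop (𝓝 c1) := by
    have hq : Tendsto (fun n : ℕ => ((n:ℝ)/((n:ℝ)+1))^γ) atTop (𝓝 1) := by
      simpa using aux_div_succ_tendsto.rpow_const (Or.inl one_ne_zero)
    have h := hq.mul hA1
    rw [one_mul] at h
    apply h.congr'
    filter_upwards [eventually_ge_atTop 1] with n hn
    have hn0 : (0:ℝ) < n := by exact_mod_cast hn
    have hn1 : (0:ℝ) < (n:ℝ)+1 := by positivity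
    show ((n:ℝ)/((n:ℝ)+1))^γ * (((n:ℝ)+1)^γ * u (n+1)) = (n:ℝ)^γ * u (n+1)
    rw [Real.div_rpow hn0.le hn1.le]
    field_simp
  -- X = n^(1+γ) Δ
  set X : ℕ → ℝ := fun n => (n:ℝ)^(1+γ) * (u n - u (n+1)) with hX_def
  have hXid : ∀ n : ℕ, 1 ≤ n → X n =
      c1 * ((n:ℝ)*((1-u n)^β - (1-u (n+1))^β))
      + c1 * (((n:ℝ)*(1 - ((n:ℝ)/((n:ℝ)+1))^γ)) * (1-u (n+1))^β) := by
    intro n hn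
    have hn0 : (0:ℝ) < n := by exact_mod_cast hn
    have hn1 : (0:ℝ) < (n:ℝ)+1 := by positivity
    have e1 : (n:ℝ)^(1+γ) * ((n:ℝ)^(-γ)) = (n:ℝ) := by
      rw [← Real.rpow_add hn0]; norm_num
    have e2 : (n:ℝ)^(1+γ) * (((n:ℝ)+1)^(-γ)) = (n:ℝ) * ((n:ℝ)/((n:ℝ)+1))^γ := by
      rw [Real.div_rpow hn0.le hn1.le, Real.rpow_neg hn1.le,
        show (1:ℝ)+γ = 1 + γ by rfl, Real.rpow_add hn0, Real.rpow_one]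
      field_simp
    have hk1 := hukey n hn
    have hk2 := hukey (n+1) (by omega)
    push_cast at hk2
    show (n:ℝ)^(1+γ) * (u n - u (n+1)) = _
    linear_combination (n:ℝ)^(1+γ)*hk1 - (n:ℝ)^(1+γ)*hk2
      + (c1*(1-u n)^β)*e1 - (c1*(1-u (n+1))^β)*e2
  -- T1 → 0
  have hT1 : Tendsto (fun n : ℕ => (n:ℝ)*((1-u n)^β - (1-u (n+1))^β)) atTop (𝓝 0) := by
    apply tendsto_of_tendsto_of_tendsto_of_le_of_le'
      (g := fun n : ℕ => -((2*β*c1) * (n:ℝ)^(1-γ))) (h := fun _ => (0:ℝ))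
    · rw [show (0:ℝ) = -((2*β*c1) * 0) by ring]
      apply Tendsto.neg
      apply Tendsto.const_mul
      rw [show (1:ℝ)-γ = -(γ-1) by ring]
      exact hnpow (γ-1) (by linarith)
    · exact tendsto_const_nhds
    · filter_upwards [eventually_ge_atTop 1, hu0.eventually (eventually_lt_nhds one_half_pos)]
        with n hn hhalf
      have hn0 : (0:ℝ) < n := by exact_mod_cast hn
      have h01 := hu01 n hn
      have h01' := hu01 (n+1) (by omega)
      have hmn := hmono n hn
      -- (1-u(n+1))^β - (1-u n)^β ≤ β (1-u n)^(β-1) Δ ≤ 2β Δ ≤ 2β c1 n^{-γ}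
      have hcc := aux_concave (x := 1 - u (n+1)) (y := 1 - u n)
        (by linarith [h01.2]) (by linarith) hβ0 hβ1
      have hpow2 : (1 - u n)^(β-1) ≤ 2 := by
        have h1 : (1 - u n)^(β-1) ≤ (1/2 : ℝ)^(β-1) :=
          Real.rpow_le_rpow_of_nonpos one_half_pos (by linarith) (by linarith)
        have h2 : ((1:ℝ)/2)^(β-1) = 2^(1-β) := by
          rw [one_div, ← Real.rpow_neg_one (2:ℝ), ← Real.rpow_mul (by norm_num)]
          ring_nf
        have h3 : (2:ℝ)^(1-β) ≤ 2^(1:ℝ) :=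
          Real.rpow_le_rpow_of_exponent_le one_le_two (by linarith)
        rw [h2] at h1
        calc (1-u n)^(β-1) ≤ 2^(1-β) := h1
          _ ≤ 2^(1:ℝ) := h3
          _ = 2 := Real.rpow_one 2
      have hΔub : u n - u (n+1) ≤ c1 * (n:ℝ)^(-γ) := by
        have := hub n hn
        linarith [h01'.1]
      have hkey : (1 - u (n+1))^β - (1 - u n)^β ≤ 2*β*c1*(n:ℝ)^(-γ) := by
        have hβpos2 : 0 ≤ β * (1-u n)^(β-1) :=
          mul_nonneg hβ0.le (Real.rpow_nonneg (by linarith [h01.2]) _)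
        calc (1 - u (n+1))^β - (1 - u n)^β
            ≤ β * (1-u n)^(β-1) * ((1-u (n+1)) - (1-u n)) := hcc
          _ = β * (1-u n)^(β-1) * (u n - u (n+1)) := by ring
          _ ≤ β * 2 * (u n - u (n+1)) := by
              apply mul_le_mul_of_nonneg_right _ (by linarith)
              nlinarith [hpow2, hβ0]
          _ ≤ β * 2 * (c1 * (n:ℝ)^(-γ)) := by
              apply mul_le_mul_of_nonneg_left hΔub (by linarith)
          _ = 2*β*c1*(n:ℝ)^(-γ) := by ring
      have he : (n:ℝ)^(1-γ) = (n:ℝ) * (n:ℝ)^(-γ) := by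
        rw [show (1:ℝ)-γ = 1 + -γ by ring, Real.rpow_add hn0, Real.rpow_one]
      rw [he]
      nlinarith [hkey, hn0]
    · filter_upwards [eventually_ge_atTop 1] with n hn
      have hn0 : (0:ℝ) ≤ n := by positivity
      have h01 := hu01 n hn
      have hmn := hmono n hn
      have : (1-u n)^β ≤ (1-u (n+1))^β :=
        Real.rpow_le_rpow (by linarith [h01.2]) (by linarith) hβ0.le
      nlinarith
  -- X → c1 γ
  have hX : Tendsto X atTop (𝓝 (c1*γ)) := by
    have h2 : Tendsto (fun n : ℕ => ((n:ℝ)*(1 - ((n:ℝ)/((n:ℝ)+1))^γ)) * (1-u (n+1))^β)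
        atTop (𝓝 γ) := by
      have := (aux_T2 hγ0).mul hw'
      rwa [mul_one] at this
    have hsum := (hT1.const_mul c1).add (h2.const_mul c1)
    rw [mul_zero, zero_add] at hsum
    apply hsum.congr'
    filter_upwards [eventually_ge_atTop 1] with n hn
    exact (hXid n hn).symm
  -- squared limit
  have hXsq : Tendsto (fun n => X n ^ 2) atTop (𝓝 ((c1*γ)^2)) := by
    have h := hX.mul hX
    simp only [← pow_two] at h
    exact h
  have habb2 : (a*b*(b+1)/2) * (c1 ^ (-(b+2)) * (c1*γ)^2) = 1 := by
    rw [← mul_assoc]; exact hconst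
  have hterm2 : Tendsto (fun n : ℕ => (a*b*(b+1)/2) * (((n:ℝ)^γ * u n)^(-(b+2)) * X n^2))
      atTop (𝓝 1) := by
    have h := ((hA.rpow_const (p := -(b+2)) (Or.inl hc1pos.ne')).mul hXsq).const_mul (a*b*(b+1)/2)
    rwa [habb2] at h
  have hterm2' : Tendsto (fun n : ℕ => (a*b*(b+1)/2) * (((n:ℝ)^γ * u (n+1))^(-(b+2)) * X n^2))
      atTop (𝓝 1) := by
    have h := ((hA'.rpow_const (p := -(b+2)) (Or.inl hc1pos.ne')).mul hXsq).const_mul (a*b*(b+1)/2)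
    rwa [habb2] at h
  have hterm1 : Tendsto (fun n : ℕ => (S/2) * ((n:ℝ)^(-γ) * X n^2)) atTop (𝓝 0) := by
    have h := ((hnpow γ hγ0).mul hXsq).const_mul (S/2)
    rwa [zero_mul, mul_zero] at h
  have hQ : Tendsto (fun n : ℕ => (((n:ℝ)+1)/(n:ℝ))^(2+γ)) atTop (𝓝 1) := by
    simpa using aux_succ_div_tendsto.rpow_const (Or.inl one_ne_zero)
  have hterm1' : Tendsto (fun n : ℕ =>
      (S/2) * ((((n:ℝ)+1)/(n:ℝ))^(2+γ) * ((n:ℝ)^(-γ) * X n^2)) / (1 - u n)^2)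
      atTop (𝓝 0) := by
    have h := (((hQ.mul ((hnpow γ hγ0).mul hXsq)).const_mul (S/2)).div
      (h1u.pow 2) (by norm_num))
    simpa [Pi.div_def] using h
  constructor
  · have hsum := hterm1.add hterm2
    rw [zero_add] at hsum
    apply hsum.congr'
    filter_upwards [eventually_ge_atTop 1] with n hn
    have hn0 : (0:ℝ) < n := by exact_mod_cast hn
    have h01 := hu01 n hn
    have ee : ((n:ℝ)^(1+γ))^2 * ((n:ℝ)^(-2-2*γ)) = 1 := by
      rw [← Real.rpow_natCast ((n:ℝ)^(1+γ)) 2, ← Real.rpow_mul hn0.le,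
        ← Real.rpow_add hn0, show (1+γ)*(2:ℕ) + (-2-2*γ) = (0:ℝ) by push_cast; ring,
        Real.rpow_zero]
    have eX2 : X n^2 = ((n:ℝ)^(1+γ))^2 * (u n - u (n+1))^2 := by
      show ((n:ℝ)^(1+γ) * (u n - u (n+1)))^2 = _
      ring
    have eDsq : (u n - u (n+1))^2 = X n^2 * (n:ℝ)^(-2-2*γ) := by
      linear_combination (-(n:ℝ)^(-2-2*γ)) * eX2 - (u n - u (n+1))^2 * ee
    have e1 : (n:ℝ)^(2+γ) * (n:ℝ)^(-2-2*γ) = (n:ℝ)^(-γ) := by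
      rw [← Real.rpow_add hn0]; congr 1; ring
    have e2 : ((n:ℝ)^γ * u n)^(-(b+2)) = (n:ℝ)^(-2-2*γ) * (u n)^(-(b+2)) := by
      rw [Real.mul_rpow (Real.rpow_nonneg hn0.le γ) h01.1.le, ← Real.rpow_mul hn0.le]
      congr 2
      linear_combination (-1 : ℝ) * hγb
    rw [e2]
    linear_combination (-(S*(n:ℝ)^(2+γ) + a*b*(b+1)*(u n)^(-(b+2)))/2) * eDsq
      - (S * X n^2/2) * e1
  · have hsum := hterm1'.add hterm2'
    rw [zero_add] at hsum
    apply hsum.congr'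
    filter_upwards [eventually_ge_atTop 1] with n hn
    have hn0 : (0:ℝ) < n := by exact_mod_cast hn
    have hn1 : (0:ℝ) < (n:ℝ)+1 := by positivity
    have h01' := hu01 (n+1) (by omega)
    have ee : ((n:ℝ)^(1+γ))^2 * ((n:ℝ)^(-2-2*γ)) = 1 := by
      rw [← Real.rpow_natCast ((n:ℝ)^(1+γ)) 2, ← Real.rpow_mul hn0.le,
        ← Real.rpow_add hn0, show (1+γ)*(2:ℕ) + (-2-2*γ) = (0:ℝ) by push_cast; ring,
        Real.rpow_zero]
    have eX2 : X n^2 = ((n:ℝ)^(1+γ))^2 * (u n - u (n+1))^2 := by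
      show ((n:ℝ)^(1+γ) * (u n - u (n+1)))^2 = _
      ring
    have eDsq : (u n - u (n+1))^2 = X n^2 * (n:ℝ)^(-2-2*γ) := by
      linear_combination (-(n:ℝ)^(-2-2*γ)) * eX2 - (u n - u (n+1))^2 * ee
    have e1 : (n:ℝ)^(2+γ) * (n:ℝ)^(-2-2*γ) = (n:ℝ)^(-γ) := by
      rw [← Real.rpow_add hn0]; congr 1; ring
    have e2' : ((n:ℝ)^γ * u (n+1))^(-(b+2)) = (n:ℝ)^(-2-2*γ) * (u (n+1))^(-(b+2)) := by
      rw [Real.mul_rpow (Real.rpow_nonneg hn0.le γ) h01'.1.le, ← Real.rpow_mul hn0.le]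
      congr 2
      linear_combination (-1 : ℝ) * hγb
    have e3 : (((n:ℝ)+1)/(n:ℝ))^(2+γ) * (n:ℝ)^(2+γ) = ((n:ℝ)+1)^(2+γ) := by
      rw [Real.div_rpow hn1.le hn0.le]
      field_simp
    have e4 : ((n:ℝ)+1)^(2+γ) * (n:ℝ)^(-2-2*γ) = (((n:ℝ)+1)/(n:ℝ))^(2+γ) * (n:ℝ)^(-γ) := by
      rw [← e3, mul_assoc, e1]
    rw [e2']
    linear_combination (-(S*((n:ℝ)+1)^(2+γ)/(1-u n)^2 + a*b*(b+1)*(u (n+1))^(-(b+2)))/2) * eDsq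
      - (S * X n^2/(1-u n)^2/2) * e4
set_option maxHeartbeats 1600000 in


/-- Lemma 4 for `0 < b < 2`.
With `v(r) = exp(-a/(1-r)^b)`, `α = 2 + 2/b`, `S = b a^{-1/b} α^{-1-1/b}` and
`m_n = S n^α`, the quantities `A(m_n, m_{n+1})` and `B(m_n, m_{n+1})` lie in some
interval `[k, K]` with `2 < k ≤ K`, for all large `n`. Here `r_m` is the unique
solution in `(0,1)` of `m(1-r)^{b+1} = ab r`, i.e. the maximum point of `r^m v(r)`. -/
theorem stmt_7
    (a b : ℝ) (ha : 0 < a) (hb0 : 0 < b) (hb2 : b < 2)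
    (α S : ℝ) (hα : α = 2 + 2 / b) (hS : S = b * a ^ (-(1 / b)) * α ^ (-1 - 1 / b))
    (rr : ℝ → ℝ)
    (hrr : ∀ m : ℝ, 0 < m → rr m ∈ Set.Ioo (0:ℝ) 1 ∧
      m * (1 - rr m) ^ (b + 1) = a * b * rr m)
    (mm : ℕ → ℝ) (hmm : ∀ n : ℕ, mm n = S * (n : ℝ) ^ α) :
    ∃ k K : ℝ, 2 < k ∧ k ≤ K ∧ ∃ N : ℕ, ∀ n : ℕ, N ≤ n →
      (k ≤ (rr (mm n) / rr (mm (n+1))) ^ (mm n) *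
            (Real.exp (-a / (1 - rr (mm n)) ^ b) /
             Real.exp (-a / (1 - rr (mm (n+1))) ^ b)) ∧
       (rr (mm n) / rr (mm (n+1))) ^ (mm n) *
            (Real.exp (-a / (1 - rr (mm n)) ^ b) /
             Real.exp (-a / (1 - rr (mm (n+1))) ^ b)) ≤ K) ∧
      (k ≤ (rr (mm (n+1)) / rr (mm n)) ^ (mm (n+1)) *
            (Real.exp (-a / (1 - rr (mm (n+1))) ^ b) /
             Real.exp (-a / (1 - rr (mm n)) ^ b)) ∧
       (rr (mm (n+1)) / rr (mm n)) ^ (mm (n+1)) *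
            (Real.exp (-a / (1 - rr (mm (n+1))) ^ b) /
             Real.exp (-a / (1 - rr (mm n)) ^ b)) ≤ K) := by
  have hb1 : (0:ℝ) < b + 1 := by linarith
  have hαpos : 0 < α := by rw [hα]; positivity
  have hSpos : 0 < S := by
    rw [hS]
    exact mul_pos (mul_pos hb0 (Real.rpow_pos_of_pos ha _)) (Real.rpow_pos_of_pos hαpos _)
  set γ : ℝ := 2/b with hγ_def
  set β : ℝ := 1/(b+1) with hβ_def
  have hγ0 : 0 < γ := by rw [hγ_def]; positivity
  have hβ0 : 0 < β := by rw [hβ_def]; positivity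
  have hα2 : α = 2 + γ := hα
  set c1 : ℝ := (a*b/S)^β with hc1_def
  have hc1pos : 0 < c1 := Real.rpow_pos_of_pos (by positivity) _
  have hconst : a*b*(b+1)/2 * c1 ^ (-(b+2)) * (c1*γ)^2 = 1 :=
    aux_const a b α S γ β c1 ha hb0 hα hS rfl rfl hSpos rfl
  set u : ℕ → ℝ := fun n => 1 - rr (mm n) with hu_def
  have hmpos : ∀ n : ℕ, 1 ≤ n → 0 < mm n := by
    intro n hn
    rw [hmm]
    have hn0 : (0:ℝ) < n := by exact_mod_cast hn
    exact mul_pos hSpos (Real.rpow_pos_of_pos hn0 _)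
  have hrr' : ∀ n : ℕ, 1 ≤ n → (0 < rr (mm n) ∧ rr (mm n) < 1) ∧
      mm n * (1 - rr (mm n)) ^ (b+1) = a * b * rr (mm n) := by
    intro n hn
    obtain ⟨h1, h2⟩ := hrr (mm n) (hmpos n hn)
    exact ⟨⟨h1.1, h1.2⟩, h2⟩
  have hu01 : ∀ n : ℕ, 1 ≤ n → 0 < u n ∧ u n < 1 := by
    intro n hn
    have h := (hrr' n hn).1
    constructor <;> [skip; skip] <;> simp only [hu_def] <;> [linarith [h.2]; linarith [h.1]]
  have hueq : ∀ n : ℕ, 1 ≤ n → mm n * (u n) ^ (b+1) = a * b * (1 - u n) := by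
    intro n hn
    have h := (hrr' n hn).2
    simp only [hu_def, sub_sub_cancel]
    exact h
  -- key identity for u
  have hukey : ∀ n : ℕ, 1 ≤ n → u n = c1 * (n:ℝ)^(-γ) * (1 - u n)^β := by
    intro n hn
    have hn0 : (0:ℝ) < n := by exact_mod_cast hn
    have h01 := hu01 n hn
    have h1u : 0 < 1 - u n := by linarith [h01.2]
    have hm := hmpos n hn
    have hnα : (0:ℝ) < (n:ℝ)^α := Real.rpow_pos_of_pos hn0 _
    have he : (u n)^(b+1) = (a*b/S) * (1 - u n) * ((n:ℝ)^α)⁻¹ := by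
      have h := hueq n hn
      rw [hmm] at h
      field_simp
      linarith [h]
    have hbβ : (b+1)*β = 1 := by rw [hβ_def]; field_simp
    have hres : u n = ((u n)^(b+1))^β := by
      conv_lhs => rw [← Real.rpow_one (u n), ← hbβ, Real.rpow_mul h01.1.le]
    rw [he] at hres
    nth_rewrite 1 [hres]
    rw [Real.mul_rpow (by positivity) (by positivity),
      Real.mul_rpow (by positivity) h1u.le]
    have einv : (((n:ℝ)^α)⁻¹)^β = (n:ℝ)^(-γ) := by
      rw [← Real.rpow_neg_one ((n:ℝ)^α), ← Real.rpow_mul hn0.le, ← Real.rpow_mul hn0.le]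
      congr 1
      rw [hα, hγ_def, hβ_def]
      field_simp
    rw [einv, hc1_def]
    ring
  -- monotonicity
  have hmono : ∀ n : ℕ, 1 ≤ n → u (n+1) < u n := by
    intro n hn
    by_contra hcon
    push_neg at hcon
    have h01 := hu01 n hn
    have h01' := hu01 (n+1) (by omega)
    have hmlt : mm n < mm (n+1) := by
      rw [hmm, hmm]
      apply mul_lt_mul_of_pos_left _ hSpos
      apply Real.rpow_lt_rpow (by positivity) _ hαpos
      push_cast; linarith
    have hrp : (u n)^(b+1) ≤ (u (n+1))^(b+1) :=
      Real.rpow_le_rpow h01.1.le hcon hb1.le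
    have hrp0 : 0 < (u (n+1))^(b+1) := Real.rpow_pos_of_pos h01'.1 _
    have e1 := hueq n hn
    have e2 := hueq (n+1) (by omega)
    nlinarith [mul_lt_mul_of_pos_right hmlt hrp0,
      mul_le_mul_of_nonneg_left hrp (hmpos n hn).le,
      mul_le_mul_of_nonneg_left hcon (show (0:ℝ) ≤ a*b by positivity)]
  -- the limits
  obtain ⟨hlow, hhigh⟩ := aux_limits a b S γ β c1 u ha hb0 hb2 rfl rfl hSpos hc1pos hconst
    hu01 hukey hmono
  have hev1 := hlow.eventually (eventually_gt_nhds (show (7:ℝ)/10 < 1 by norm_num))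
  have hev2 := hhigh.eventually (eventually_lt_nhds (show (1:ℝ) < 2 by norm_num))
  obtain ⟨N, hN⟩ := Filter.eventually_atTop.1 (hev1.and (hev2.and (Filter.eventually_ge_atTop 1)))
  refine ⟨Real.exp (7/10), Real.exp 2, ?_, Real.exp_le_exp.2 (by norm_num), N, ?_⟩
  · calc (2:ℝ) = Real.exp (Real.log 2) := (Real.exp_log two_pos).symm
      _ < Real.exp (7/10) := by
          apply Real.exp_lt_exp.2
          have := Real.log_two_lt_d9
          linarith
  intro n hn
  obtain ⟨h1, h2, hn1⟩ := hN n hn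
  -- notation
  have h01 := hu01 n hn1
  have h01' := hu01 (n+1) (by omega)
  have hp0 : 0 < rr (mm n) := by
    have := h01.2; simp only [hu_def] at this; linarith
  have hp1 : rr (mm n) < 1 := by
    have := h01.1; simp only [hu_def] at this; linarith
  have hq0 : 0 < rr (mm (n+1)) := by
    have := h01'.2; simp only [hu_def] at this; linarith
  have hq1 : rr (mm (n+1)) < 1 := by
    have := h01'.1; simp only [hu_def] at this; linarith
  have hpq : rr (mm n) ≤ rr (mm (n+1)) := by
    have := hmono n hn1; simp only [hu_def] at this; linarith
  have hmM : mm n ≤ mm (n+1) := by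
    rw [hmm, hmm]
    apply mul_le_mul_of_nonneg_left _ hSpos.le
    apply Real.rpow_le_rpow (by positivity) (by push_cast; linarith) hαpos.le
  -- critical points
  have hcritp : phi' a b (mm n) (rr (mm n)) = 0 := by
    have he := (hrr' n hn1).2
    show mm n / rr (mm n) - a*b/(1 - rr (mm n))^(b+1) = 0
    rw [sub_eq_zero, div_eq_div_iff hp0.ne' (Real.rpow_pos_of_pos (by linarith) _).ne']
    linarith [he]
  have hcritq : phi' a b (mm (n+1)) (rr (mm (n+1))) = 0 := by
    have he := (hrr' (n+1) (by omega)).2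
    show mm (n+1) / rr (mm (n+1)) - a*b/(1 - rr (mm (n+1)))^(b+1) = 0
    rw [sub_eq_zero, div_eq_div_iff hq0.ne' (Real.rpow_pos_of_pos (by linarith) _).ne']
    linarith [he]
  have hKA := keyA a b (mm n) (mm (n+1)) (rr (mm n)) (rr (mm (n+1))) ha hb0
    (hmpos n hn1) hmM hp0 hq1 hpq hcritp
  have hKB := keyB a b (mm n) (mm (n+1)) (rr (mm n)) (rr (mm (n+1))) ha hb0
    (hmpos n hn1) hmM hp0 hq1 hpq hcritq
  -- rewrite the bounds in terms of u
  have hlow_eq : (mm n + a*b*(b+1) * (1 - rr (mm n))^(-(b+2)))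
      * (rr (mm (n+1)) - rr (mm n))^2/2
      = (S*(n:ℝ)^(2+γ) + a*b*(b+1) * (u n)^(-(b+2))) * (u n - u (n+1))^2 / 2 := by
    simp only [hu_def, hmm, hα2]
    ring_nf
  have hhigh_eq : (mm (n+1)/(rr (mm n))^2 + a*b*(b+1) * (1 - rr (mm (n+1)))^(-(b+2)))
      * (rr (mm (n+1)) - rr (mm n))^2/2
      = (S*((n:ℝ)+1)^(2+γ)/(1 - u n)^2 + a*b*(b+1) * (u (n+1))^(-(b+2)))
        * (u n - u (n+1))^2 / 2 := by
    simp only [hu_def, hmm, hα2, sub_sub_cancel]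
    push_cast
    ring_nf
  rw [hlow_eq] at hKA hKB
  rw [hhigh_eq] at hKA hKB
  -- exponential form
  have hexpA : (rr (mm n) / rr (mm (n+1))) ^ (mm n) *
      (Real.exp (-a / (1 - rr (mm n)) ^ b) / Real.exp (-a / (1 - rr (mm (n+1))) ^ b))
      = Real.exp (phi a b (mm n) (rr (mm n)) - phi a b (mm n) (rr (mm (n+1)))) := by
    rw [Real.rpow_def_of_pos (div_pos hp0 hq0), ← Real.exp_sub, ← Real.exp_add]
    congr 1
    rw [Real.log_div hp0.ne' hq0.ne']
    simp only [phi, neg_div]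
    ring
  have hexpB : (rr (mm (n+1)) / rr (mm n)) ^ (mm (n+1)) *
      (Real.exp (-a / (1 - rr (mm (n+1))) ^ b) / Real.exp (-a / (1 - rr (mm n)) ^ b))
      = Real.exp (phi a b (mm (n+1)) (rr (mm (n+1))) - phi a b (mm (n+1)) (rr (mm n))) := by
    rw [Real.rpow_def_of_pos (div_pos hq0 hp0), ← Real.exp_sub, ← Real.exp_add]
    congr 1
    rw [Real.log_div hq0.ne' hp0.ne']
    simp only [phi, neg_div]
    ring
  rw [hexpA, hexpB]
  refine ⟨⟨?_, ?_⟩, ?_, ?_⟩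
  · exact Real.exp_le_exp.2 (le_trans h1.le hKA.1)
  · exact Real.exp_le_exp.2 (le_trans hKA.2 h2.le)
  · exact Real.exp_le_exp.2 (le_trans h1.le hKB.1)
  · exact Real.exp_le_exp.2 (le_trans hKB.2 h2.le)
end

section
/- Let a > 0 and b = 2, let v(r) = exp(-a/(1-r)²), set S := max{2a, 2a^{-1/2}} and m_n := S·n³ for n ∈ ℕ. Then there exist constants 2 < k ≤ K and N ∈ ℕ such that for all n ≥ N: k ≤ A(m_n, m_{n+1}) ≤ K and k ≤ B(m_n, m_{n+1}) ≤ K. -/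
lemma root_bounds (t ε : ℝ) (ht0 : 0 < t) (ht : t ≤ 1/3) (hε0 : 0 < ε)
    (heq : ε^3 = t^3*(1-ε)) :
    t - t^2/3 - t^3 ≤ ε ∧ ε ≤ t - t^2/3 + t^3/3 := by
  have key : ε^3 + t^3*ε = t^3 := by linarith
  have ht3 : 0 < t^3 := by positivity
  constructor
  · by_contra h
    push_neg at h
    have hL0 : 0 ≤ t - t^2/3 - t^3 := by nlinarith
    have h1 : ε^3 < (t - t^2/3 - t^3)^3 := pow_lt_pow_left₀ h (le_of_lt hε0) (by norm_num)
    have h2 : t^3*ε < t^3*(t - t^2/3 - t^3) := mul_lt_mul_of_pos_left h ht3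
    have hpoly : (t - t^2/3 - t^3)^3 + t^3*(t - t^2/3 - t^3) ≤ t^3 := by
      nlinarith [pow_pos ht0 3, pow_pos ht0 5, sq_nonneg t, sq_nonneg (t-1), mul_pos ht0 ht0, pow_pos ht0 4]
    linarith
  · by_contra h
    push_neg at h
    have hU0 : 0 ≤ t - t^2/3 + t^3/3 := by nlinarith
    have h1 : (t - t^2/3 + t^3/3)^3 < ε^3 := pow_lt_pow_left₀ h hU0 (by norm_num)
    have h2 : t^3*(t - t^2/3 + t^3/3) < t^3*ε := mul_lt_mul_of_pos_left h ht3
    have hpoly : t^3 ≤ (t - t^2/3 + t^3/3)^3 + t^3*(t - t^2/3 + t^3/3) := by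
      nlinarith [pow_pos ht0 3, pow_pos ht0 5, sq_nonneg t, sq_nonneg (t-1), mul_pos ht0 ht0, pow_pos ht0 4]
    linarith

lemma d_bounds (γ ν ε δ : ℝ) (hγ0 : 0 < γ) (hγ1 : γ ≤ 1) (hν : 100 ≤ ν)
    (hε1 : γ/ν - (γ/ν)^2/3 - (γ/ν)^3 ≤ ε)
    (hε2 : ε ≤ γ/ν - (γ/ν)^2/3 + (γ/ν)^3/3)
    (hδ1 : γ/(ν+1) - (γ/(ν+1))^2/3 - (γ/(ν+1))^3 ≤ δ)
    (hδ2 : δ ≤ γ/(ν+1) - (γ/(ν+1))^2/3 + (γ/(ν+1))^3/3) :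
    2/3*(γ/ν^2) ≤ ε - δ ∧ ε - δ ≤ 2*(γ/ν^2) := by
  have hν0 : (0:ℝ) < ν := by linarith
  have hμ0 : (0:ℝ) < ν+1 := by linarith
  have hγ2 : γ^2 ≤ 1 := by nlinarith
  constructor
  · have e1 : (γ/ν - (γ/ν)^2/3 - (γ/ν)^3) - (γ/(ν+1) - (γ/(ν+1))^2/3 + (γ/(ν+1))^3/3)
        - 2/3*(γ/ν^2)
        = γ*(3*ν^2*(ν+1)^2 - 2*ν*(ν+1)^3 - γ*ν*(ν+1)*(2*ν+1) - 3*γ^2*(ν+1)^3 - γ^2*ν^3)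
          / (3*ν^3*(ν+1)^3) := by
      field_simp
      ring
    have hnum : 0 ≤ γ*(3*ν^2*(ν+1)^2 - 2*ν*(ν+1)^3 - γ*ν*(ν+1)*(2*ν+1) - 3*γ^2*(ν+1)^3 - γ^2*ν^3) := by
      have hin : 0 ≤ 3*ν^2*(ν+1)^2 - 2*ν*(ν+1)^3 - γ*ν*(ν+1)*(2*ν+1) - 3*γ^2*(ν+1)^3 - γ^2*ν^3 := by
        nlinarith [mul_pos hν0 hμ0, sq_nonneg ν, mul_pos (mul_pos hν0 hν0) hν0,
          mul_le_of_le_one_left (le_of_lt (mul_pos (mul_pos hν0 hμ0) (by linarith : (0:ℝ) < 2*ν+1))) hγ1,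
          mul_le_of_le_one_left (le_of_lt (pow_pos hμ0 3)) hγ2,
          mul_le_of_le_one_left (le_of_lt (pow_pos hν0 3)) hγ2]
      positivity
    have := div_nonneg hnum (by positivity : (0:ℝ) ≤ 3*ν^3*(ν+1)^3)
    rw [← e1] at this
    linarith
  · have e2 : 2*(γ/ν^2) - ((γ/ν - (γ/ν)^2/3 + (γ/ν)^3/3) - (γ/(ν+1) - (γ/(ν+1))^2/3 - (γ/(ν+1))^3))
        = γ*(6*ν*(ν+1)^3 - 3*ν^2*(ν+1)^2 + γ*ν*(ν+1)^3 - γ*ν^3*(ν+1) - γ^2*(ν+1)^3 - 3*γ^2*ν^3)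
          / (3*ν^3*(ν+1)^3) := by
      field_simp
      ring
    have hnum : 0 ≤ γ*(6*ν*(ν+1)^3 - 3*ν^2*(ν+1)^2 + γ*ν*(ν+1)^3 - γ*ν^3*(ν+1) - γ^2*(ν+1)^3 - 3*γ^2*ν^3) := by
      have hin : 0 ≤ 6*ν*(ν+1)^3 - 3*ν^2*(ν+1)^2 + γ*ν*(ν+1)^3 - γ*ν^3*(ν+1) - γ^2*(ν+1)^3 - 3*γ^2*ν^3 := by
        have k1 : 0 ≤ γ*ν*(ν+1)^3 - γ*ν^3*(ν+1) := by
          nlinarith [mul_nonneg (le_of_lt hγ0) (le_of_lt (mul_pos (mul_pos hν0 hμ0) (show (0:ℝ)<2*ν+1 by linarith)))]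
        have k2 : γ^2*(ν+1)^3 ≤ (ν+1)^3 := mul_le_of_le_one_left (le_of_lt (pow_pos hμ0 3)) hγ2
        have k3 : 3*γ^2*ν^3 ≤ 3*ν^3 := by nlinarith [mul_le_of_le_one_left (le_of_lt (pow_pos hν0 3)) hγ2]
        nlinarith [k1, k2, k3, mul_pos hν0 hμ0]
      positivity
    have := div_nonneg hnum (by positivity : (0:ℝ) ≤ 3*ν^3*(ν+1)^3)
    rw [← e2] at this
    linarith


lemma simple_bounds_aux (t ε : ℝ) (ht0 : 0 < t) (ht : t ≤ 1/3)
    (h1 : t - t^2/3 - t^3 ≤ ε) (h2 : ε ≤ t - t^2/3 + t^3/3) : t/2 ≤ ε ∧ ε ≤ t := by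
  constructor <;> nlinarith

lemma half_bound (d e : ℝ) (hd : 0 < d) (he : e ≤ 1/2) : d/(1-e) ≤ 2*d := by
  rw [div_le_iff₀ (by linarith)]
  nlinarith

lemma y12_bound (γ ν : ℝ) (h1 : 0 < γ) (h2 : γ ≤ 1) (h3 : 100 ≤ ν) : 4*(γ/ν^2) ≤ 1/2 := by
  have h4 : γ/ν^2 ≤ 1/8 := by
    rw [div_le_iff₀ (by nlinarith)]
    nlinarith
  linarith

lemma log_ineq_up (x : ℝ) (hx : 0 ≤ x) : Real.log (1+x) ≤ x := by
  have := Real.log_le_sub_one_of_pos (show (0:ℝ) < 1 + x by linarith)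
  linarith

lemma log_ineq_lo (x : ℝ) (hx : 0 ≤ x) : x - x^2 ≤ Real.log (1+x) := by
  have hxpos1 : (0:ℝ) < 1 + x := by linarith
  have h1 : Real.log (1+x)⁻¹ ≤ (1+x)⁻¹ - 1 := Real.log_le_sub_one_of_pos (by positivity)
  rw [Real.log_inv] at h1
  have h3 : x - x^2 ≤ 1 - (1+x)⁻¹ := by
    have he : 1 - (1+x)⁻¹ = x/(1+x) := by field_simp; ring
    rw [he, le_div_iff₀ hxpos1]
    nlinarith
  linarith

lemma log_ineq2_lo (y : ℝ) (hy : 0 ≤ y) (hy2 : y ≤ 1/2) : y ≤ -Real.log (1-y) := by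
  have := Real.log_le_sub_one_of_pos (show (0:ℝ) < 1 - y by linarith)
  linarith

lemma log_ineq2_up (y : ℝ) (hy : 0 ≤ y) (hy2 : y ≤ 1/2) : -Real.log (1-y) ≤ y + 2*y^2 := by
  have h1y : (0:ℝ) < 1 - y := by linarith
  have h1 : Real.log (1-y)⁻¹ ≤ (1-y)⁻¹ - 1 := Real.log_le_sub_one_of_pos (by positivity)
  rw [Real.log_inv] at h1
  have h3 : (1-y)⁻¹ - 1 ≤ y + 2*y^2 := by
    have he : (1-y)⁻¹ - 1 = y/(1-y) := by field_simp; ring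
    rw [he, div_le_iff₀ h1y]
    nlinarith
  linarith

lemma quarter_le (γ ν : ℝ) (h1 : 0 < γ) (h3 : 1 ≤ ν) : γ/(4*ν) ≤ γ/(2*(ν+1)) := by
  rw [div_le_div_iff₀ (by positivity) (by positivity)]
  nlinarith

lemma sq_le_self_aux (γ : ℝ) (h0 : 0 < γ) (h1 : γ ≤ 1) : γ^2 ≤ γ := by nlinarith

set_option maxHeartbeats 2000000 in
/-- Lemma 4 for `b = 2`.
With `v(r) = exp(-a/(1-r)²)`, `S = max{2a, 2a^{-1/2}}` and
`m_n = S n³`, the quantities `A(m_n, m_{n+1})` and `B(m_n, m_{n+1})` lie in some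
interval `[k, K]` with `2 < k ≤ K`, for all large `n`. Here `r_m` is the unique
solution in `(0,1)` of `m(1-r)^{b+1} = ab r`, i.e. the maximum point of `r^m v(r)`. -/
theorem stmt_8
    (a b : ℝ) (ha : 0 < a) (hb : b = 2)
    (S : ℝ) (hS : S = max (2 * a) (2 * a ^ (-(1/2 : ℝ))))
    (rr : ℝ → ℝ)
    (hrr : ∀ m : ℝ, 0 < m → rr m ∈ Set.Ioo (0:ℝ) 1 ∧
      m * (1 - rr m) ^ (b + 1) = a * b * rr m)
    (mm : ℕ → ℝ) (hmm : ∀ n : ℕ, mm n = S * (n : ℝ) ^ 3) :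
    ∃ k K : ℝ, 2 < k ∧ k ≤ K ∧ ∃ N : ℕ, ∀ n : ℕ, N ≤ n →
      (k ≤ (rr (mm n) / rr (mm (n+1))) ^ (mm n) *
            (Real.exp (-a / (1 - rr (mm n)) ^ b) /
             Real.exp (-a / (1 - rr (mm (n+1))) ^ b)) ∧
       (rr (mm n) / rr (mm (n+1))) ^ (mm n) *
            (Real.exp (-a / (1 - rr (mm n)) ^ b) /
             Real.exp (-a / (1 - rr (mm (n+1))) ^ b)) ≤ K) ∧
      (k ≤ (rr (mm (n+1)) / rr (mm n)) ^ (mm (n+1)) *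
            (Real.exp (-a / (1 - rr (mm (n+1))) ^ b) /
             Real.exp (-a / (1 - rr (mm n)) ^ b)) ∧
       (rr (mm (n+1)) / rr (mm n)) ^ (mm (n+1)) *
            (Real.exp (-a / (1 - rr (mm (n+1))) ^ b) /
             Real.exp (-a / (1 - rr (mm n)) ^ b)) ≤ K) := by
  have ha2 : (0:ℝ) < 2*a := by linarith
  have hS2a : 2*a ≤ S := by rw [hS]; exact le_max_left _ _
  have hS0 : 0 < S := lt_of_lt_of_le ha2 hS2a
  set γ : ℝ := (2*a/S) ^ ((1:ℝ)/3) with hγdef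
  have hq0 : 0 < 2*a/S := div_pos ha2 hS0
  have hγ0 : 0 < γ := Real.rpow_pos_of_pos hq0 _
  have hγ1 : γ ≤ 1 := Real.rpow_le_one (le_of_lt hq0)
    (by rw [div_le_one hS0]; exact hS2a) (by norm_num)
  have hγ3 : γ^3 = 2*a/S := by
    rw [hγdef, ← Real.rpow_natCast ((2*a/S) ^ ((1:ℝ)/3)) 3, ← Real.rpow_mul (le_of_lt hq0)]
    norm_num
  have hSγ : S * γ^3 = 2*a := by rw [hγ3]; field_simp
  have hγ2a : γ^2 ≤ a := by
    have hSm : 2 * a ^ (-(1/2:ℝ)) ≤ S := by rw [hS]; exact le_max_right _ _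
    have haa : a ^ ((3:ℝ)/2) * a ^ (-(1/2:ℝ)) = a := by
      rw [← Real.rpow_add ha]; norm_num
    have h32 : 2*a/S ≤ a ^ ((3:ℝ)/2) := by
      rw [div_le_iff₀ hS0]
      calc 2*a = a ^ ((3:ℝ)/2) * (2 * a ^ (-(1/2:ℝ))) := by linear_combination -2*haa
        _ ≤ a ^ ((3:ℝ)/2) * S := by
            exact mul_le_mul_of_nonneg_left hSm (Real.rpow_nonneg (le_of_lt ha) _)
    have hγa : γ ≤ a ^ ((1:ℝ)/2) := by
      calc γ ≤ (a ^ ((3:ℝ)/2)) ^ ((1:ℝ)/3) := Real.rpow_le_rpow (le_of_lt hq0) h32 (by norm_num)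
        _ = a ^ ((1:ℝ)/2) := by rw [← Real.rpow_mul (le_of_lt ha)]; norm_num
    calc γ^2 ≤ (a ^ ((1:ℝ)/2))^2 := by
          exact pow_le_pow_left₀ (le_of_lt hγ0) hγa 2
      _ = a := by
          rw [← Real.rpow_natCast (a ^ ((1:ℝ)/2)) 2, ← Real.rpow_mul (le_of_lt ha)]; norm_num
  refine ⟨Real.exp 1, Real.exp (2100*a/γ^2), ?_, ?_, 100, ?_⟩
  · linarith [Real.exp_one_gt_d9]
  · apply Real.exp_le_exp.mpr
    rw [le_div_iff₀ (by positivity)]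
    nlinarith [hγ2a]
  intro n hn
  have hν : (100:ℝ) ≤ (n:ℝ) := by exact_mod_cast hn
  set ν : ℝ := (n:ℝ) with hνdef
  have hν0 : (0:ℝ) < ν := by linarith
  have hμ0 : (0:ℝ) < ν + 1 := by linarith
  have hmmn : mm n = S*ν^3 := hmm n
  have hmmn1 : mm (n+1) = S*(ν+1)^3 := by rw [hmm]; push_cast; ring
  have hm_pos : 0 < mm n := by rw [hmmn]; positivity
  have hm1_pos : 0 < mm (n+1) := by rw [hmmn1]; positivity
  obtain ⟨hr1mem, heqA⟩ := hrr (mm n) hm_pos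
  obtain ⟨hr2mem, heqB⟩ := hrr (mm (n+1)) hm1_pos
  set r1 := rr (mm n) with hr1def
  set r2 := rr (mm (n+1)) with hr2def
  obtain ⟨hr1a, hr1b⟩ := hr1mem
  obtain ⟨hr2a, hr2b⟩ := hr2mem
  set ε : ℝ := 1 - r1 with hεdef
  set δ : ℝ := 1 - r2 with hδdef
  have hε0 : 0 < ε := by rw [hεdef]; linarith
  have hε1 : ε < 1 := by rw [hεdef]; linarith
  have hδ0 : 0 < δ := by rw [hδdef]; linarith
  have hδ1 : δ < 1 := by rw [hδdef]; linarith
  have hbexp : ∀ z : ℝ, z ^ (b+1) = z^(3:ℕ) := fun z => by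
    rw [hb, show (2:ℝ)+1 = ((3:ℕ):ℝ) by norm_num, Real.rpow_natCast]
  have heqA' : mm n * ε^3 = 2*a*(1-ε) := by
    rw [hbexp, hb] at heqA
    linear_combination heqA + 2*a*hεdef
  have heqB' : mm (n+1) * δ^3 = 2*a*(1-δ) := by
    rw [hbexp, hb] at heqB
    linear_combination heqB + 2*a*hδdef
  have heqA'' : S*ν^3*ε^3 = 2*a*(1-ε) := by rw [← hmmn]; exact heqA'
  have heqB'' : S*(ν+1)^3*δ^3 = 2*a*(1-δ) := by rw [← hmmn1]; exact heqB'
  have hE : ε^3 = (γ/ν)^3*(1-ε) := by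
    have h1 : S*(ν^3*ε^3) = S*(γ^3*(1-ε)) := by linear_combination heqA'' - (1-ε)*hSγ
    have h2 : ν^3*ε^3 = γ^3*(1-ε) := mul_left_cancel₀ (ne_of_gt hS0) h1
    field_simp
    linear_combination h2
  have hD : δ^3 = (γ/(ν+1))^3*(1-δ) := by
    have h1 : S*((ν+1)^3*δ^3) = S*(γ^3*(1-δ)) := by linear_combination heqB'' - (1-δ)*hSγ
    have h2 : (ν+1)^3*δ^3 = γ^3*(1-δ) := mul_left_cancel₀ (ne_of_gt hS0) h1
    field_simp
    linear_combination h2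
  have ht0 : 0 < γ/ν := div_pos hγ0 hν0
  have ht : γ/ν ≤ 1/3 := by rw [div_le_iff₀ hν0]; linarith
  have ht0' : 0 < γ/(ν+1) := div_pos hγ0 hμ0
  have ht' : γ/(ν+1) ≤ 1/3 := by rw [div_le_iff₀ hμ0]; linarith
  obtain ⟨hεl', hεu'⟩ := root_bounds (γ/ν) ε ht0 ht hε0 hE
  obtain ⟨hδl', hδu'⟩ := root_bounds (γ/(ν+1)) δ ht0' ht' hδ0 hD
  obtain ⟨hdl, hdu⟩ := d_bounds γ ν ε δ hγ0 hγ1 hν hεl' hεu' hδl' hδu'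
  -- simple bounds
  obtain ⟨hεl0, hεu⟩ := simple_bounds_aux (γ/ν) ε ht0 ht hεl' hεu'
  have hεl : γ/(2*ν) ≤ ε := by
    have h : γ/(2*ν) = (γ/ν)/2 := by rw [div_div]; congr 1; ring
    rw [h]; linarith
  obtain ⟨hδl0, hδu1⟩ := simple_bounds_aux (γ/(ν+1)) δ ht0' ht' hδl' hδu'
  have hδu : δ ≤ γ/ν := le_trans hδu1 (by gcongr; linarith)
  have hδl : γ/(4*ν) ≤ δ := by
    have h1 : γ/(2*(ν+1)) ≤ δ := by
      have h : γ/(2*(ν+1)) = (γ/(ν+1))/2 := by rw [div_div]; congr 1; ring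
      rw [h]; linarith
    have h2 : γ/(4*ν) ≤ γ/(2*(ν+1)) := quarter_le γ ν hγ0 (by linarith)
    linarith
  set d : ℝ := ε - δ with hddef
  have hd0 : 0 < d := by
    have : 0 < 2/3*(γ/ν^2) := by positivity
    linarith
  have hδε : δ ≤ ε := by linarith
  have hε12 : ε ≤ 1/2 := by
    have : γ/ν ≤ 1/2 := by rw [div_le_iff₀ hν0]; linarith
    linarith
  have hδ12 : δ ≤ 1/2 := by linarith
  set x : ℝ := d/(1-ε) with hxdef
  set y : ℝ := d/(1-δ) with hydef
  have h1ε : (0:ℝ) < 1 - ε := by linarith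
  have h1δ : (0:ℝ) < 1 - δ := by linarith
  have hx0 : 0 ≤ x := by positivity
  have hy0 : 0 ≤ y := by positivity
  have hxu : x ≤ 4*(γ/ν^2) := by
    have h1 : x ≤ 2*d := by rw [hxdef]; exact half_bound d ε hd0 hε12
    have h2 : 2*d ≤ 4*(γ/ν^2) := by linarith [hdu]
    linarith
  have hyu : y ≤ 4*(γ/ν^2) := by
    have h1 : y ≤ 2*d := by rw [hydef]; exact half_bound d δ hd0 hδ12
    have h2 : 2*d ≤ 4*(γ/ν^2) := by linarith [hdu]
    linarith
  have hy12 : y ≤ 1/2 := le_trans hyu (y12_bound γ ν hγ0 hγ1 hν)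
  -- log bounds
  have hxpos1 : (0:ℝ) < 1 + x := by linarith
  have hlog_up : Real.log (1+x) ≤ x := log_ineq_up x hx0
  have hlog_lo : x - x^2 ≤ Real.log (1+x) := log_ineq_lo x hx0
  have hly_lo : y ≤ -Real.log (1-y) := log_ineq2_lo y hy0 hy12
  have hly_up : -Real.log (1-y) ≤ y + 2*y^2 := log_ineq2_up y hy0 hy12
  -- key products
  have hεne : ε ≠ 0 := ne_of_gt hε0
  have hδne : δ ≠ 0 := ne_of_gt hδ0
  have hmx : mm n * x = 2*a*d/ε^3 := by
    rw [hxdef, mul_div_assoc', div_eq_div_iff (ne_of_gt h1ε) (by positivity : (ε:ℝ)^3 ≠ 0)]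
    linear_combination d * heqA'
  have hMy : mm (n+1) * y = 2*a*d/δ^3 := by
    rw [hydef, mul_div_assoc', div_eq_div_iff (ne_of_gt h1δ) (by positivity : (δ:ℝ)^3 ≠ 0)]
    linear_combination d * heqB'
  -- identities
  have hidA : -(2*a*d/ε^3) + (a/δ^2 - a/ε^2) = a*d^2*(ε+2*δ)/(ε^3*δ^2) := by
    rw [hddef]; field_simp; ring
  have hidB : 2*a*d/δ^3 + (a/ε^2 - a/δ^2) = a*d^2*(2*ε+δ)/(ε^2*δ^3) := by
    rw [hddef]; field_simp; ring
  -- P bounds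
  have hdl2 : 2/3*(γ/ν^2) ≤ d := hdl
  have hdu2 : d ≤ 2*(γ/ν^2) := hdu
  have hPA_lo : 4*a/(3*γ^2) ≤ a*d^2*(ε+2*δ)/(ε^3*δ^2) := by
    have c1 : 4*a/(3*γ^2) = 3*a*(2/3*(γ/ν^2))^2/((γ/ν)^3*(γ/ν)) := by
      field_simp; ring
    have c2 : 3*a*(2/3*(γ/ν^2))^2/((γ/ν)^3*(γ/ν)) ≤ 3*a*d^2/(ε^3*δ) := by
      gcongr <;> first | positivity | linarith
    have c3 : 3*a*d^2/(ε^3*δ) = a*d^2*(3*δ)/(ε^3*δ^2) := by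
      field_simp
    have c4 : a*d^2*(3*δ)/(ε^3*δ^2) ≤ a*d^2*(ε+2*δ)/(ε^3*δ^2) := by
      gcongr <;> first | positivity | linarith
    linarith [c1 ▸ le_trans c2 (c3 ▸ c4)]
  have hPA_up : a*d^2*(ε+2*δ)/(ε^3*δ^2) ≤ 768*(a/γ^2) := by
    have c1 : a*d^2*(ε+2*δ)/(ε^3*δ^2) ≤ a*d^2*(3*ε)/(ε^3*δ^2) := by
      gcongr <;> first | positivity | linarith
    have c2 : a*d^2*(3*ε)/(ε^3*δ^2) = 3*a*d^2/(ε^2*δ^2) := by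
      field_simp
    have c3 : 3*a*d^2/(ε^2*δ^2) ≤ 3*a*(2*(γ/ν^2))^2/((γ/(2*ν))^2*(γ/(4*ν))^2) := by
      gcongr <;> first | positivity | linarith
    have c4 : 3*a*(2*(γ/ν^2))^2/((γ/(2*ν))^2*(γ/(4*ν))^2) = 768*(a/γ^2) := by
      field_simp; ring
    linarith [c2 ▸ c1, c4 ▸ c3]
  have hPB_lo : 4*a/(3*γ^2) ≤ a*d^2*(2*ε+δ)/(ε^2*δ^3) := by
    have c1 : 4*a/(3*γ^2) = 3*a*(2/3*(γ/ν^2))^2/((γ/ν)^2*(γ/ν)^2) := by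
      field_simp; ring
    have c2 : 3*a*(2/3*(γ/ν^2))^2/((γ/ν)^2*(γ/ν)^2) ≤ 3*a*d^2/(ε^2*δ^2) := by
      gcongr <;> first | positivity | linarith
    have c3 : 3*a*d^2/(ε^2*δ^2) = a*d^2*(3*δ)/(ε^2*δ^3) := by
      field_simp
    have c4 : a*d^2*(3*δ)/(ε^2*δ^3) ≤ a*d^2*(2*ε+δ)/(ε^2*δ^3) := by
      gcongr <;> first | positivity | linarith
    linarith [c1 ▸ le_trans c2 (c3 ▸ c4)]
  have hPB_up : a*d^2*(2*ε+δ)/(ε^2*δ^3) ≤ 1536*(a/γ^2) := by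
    have c1 : a*d^2*(2*ε+δ)/(ε^2*δ^3) ≤ a*d^2*(3*ε)/(ε^2*δ^3) := by
      gcongr <;> first | positivity | linarith
    have c2 : a*d^2*(3*ε)/(ε^2*δ^3) = 3*a*d^2/(ε*δ^3) := by
      field_simp
    have c3 : 3*a*d^2/(ε*δ^3) ≤ 3*a*(2*(γ/ν^2))^2/((γ/(2*ν))*(γ/(4*ν))^3) := by
      gcongr <;> first | positivity | linarith
    have c4 : 3*a*(2*(γ/ν^2))^2/((γ/(2*ν))*(γ/(4*ν))^3) = 1536*(a/γ^2) := by
      field_simp; ring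
    linarith [c2 ▸ c1, c4 ▸ c3]
  -- error bounds
  have hν1 : (1:ℝ) ≤ ν := by linarith
  have hSγ2 : 16*S*γ^2 = 32*(a/γ) := by
    field_simp; linear_combination 16*hSγ
  have hmx2 : mm n * x^2 ≤ 32*(a/γ^2) := by
    calc mm n * x^2 ≤ S*ν^3*(4*(γ/ν^2))^2 := by rw [hmmn]; gcongr
      _ = 16*S*γ^2/ν := by field_simp; ring
      _ ≤ 16*S*γ^2 := div_le_self (by positivity) hν1
      _ = 32*(a/γ) := hSγ2
      _ ≤ 32*(a/γ^2) := by gcongr <;> first | positivity | exact sq_le_self_aux γ hγ0 hγ1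
  have hMy2 : 2*(mm (n+1)) * y^2 ≤ 512*(a/γ^2) := by
    calc 2*(mm (n+1)) * y^2 ≤ 2*(S*(2*ν)^3)*(4*(γ/ν^2))^2 := by
          rw [hmmn1]; gcongr <;> linarith
      _ = 16*(16*S*γ^2)/ν := by field_simp; ring
      _ ≤ 16*(16*S*γ^2) := div_le_self (by positivity) hν1
      _ = 512*(a/γ) := by rw [hSγ2]; ring
      _ ≤ 512*(a/γ^2) := by gcongr <;> first | positivity | exact sq_le_self_aux γ hγ0 hγ1
  -- rewrite goal as exponentials
  have hr1r2 : (0:ℝ) < r1/r2 := div_pos hr1a hr2a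
  have hr2r1 : (0:ℝ) < r2/r1 := div_pos hr2a hr1a
  have hbsq : ∀ z : ℝ, z ^ b = z^(2:ℕ) := fun z => by
    rw [hb, show (2:ℝ) = ((2:ℕ):ℝ) by norm_num, Real.rpow_natCast]
  have hAexp : (r1/r2)^(mm n) * (Real.exp (-a/ε^b) / Real.exp (-a/δ^b))
      = Real.exp (Real.log (r1/r2) * mm n + (a/δ^2 - a/ε^2)) := by
    rw [Real.rpow_def_of_pos hr1r2, hbsq, hbsq, ← Real.exp_sub, ← Real.exp_add]
    congr 1
    ring
  have hBexp : (r2/r1)^(mm (n+1)) * (Real.exp (-a/δ^b) / Real.exp (-a/ε^b))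
      = Real.exp (Real.log (r2/r1) * mm (n+1) + (a/ε^2 - a/δ^2)) := by
    rw [Real.rpow_def_of_pos hr2r1, hbsq, hbsq, ← Real.exp_sub, ← Real.exp_add]
    congr 1
    ring
  have hx_eq : 1 + x = r2/r1 := by
    rw [hxdef, hddef, hεdef, hδdef]
    field_simp
    rw [show (1:ℝ) - (1 - r1) = r1 by ring]; field_simp; ring
  have hy_eq : 1 - y = r1/r2 := by
    rw [hydef, hddef, hεdef, hδdef]
    field_simp
    rw [show (1:ℝ) - (1 - r2) = r2 by ring]; field_simp; ring
  have hlogr1 : Real.log (r1/r2) = -Real.log (1+x) := by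
    rw [show r1/r2 = (1+x)⁻¹ by rw [hx_eq, inv_div], Real.log_inv]
  have hlogr2 : Real.log (r2/r1) = -Real.log (1-y) := by
    rw [show r2/r1 = (1-y)⁻¹ by rw [hy_eq, inv_div], Real.log_inv]
  have h43 : (1:ℝ) ≤ 4*a/(3*γ^2) := by
    rw [le_div_iff₀ (by positivity)]
    linarith [hγ2a]
  have hmx' : x * mm n = 2*a*d/ε^3 := by rw [mul_comm]; exact hmx
  have hMy' : y * mm (n+1) = 2*a*d/δ^3 := by rw [mul_comm]; exact hMy
  have hTA_lo : 1 ≤ Real.log (r1/r2) * mm n + (a/δ^2 - a/ε^2) := by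
    rw [hlogr1]
    have h1 : Real.log (1+x) * mm n ≤ x * mm n :=
      mul_le_mul_of_nonneg_right hlog_up (le_of_lt hm_pos)
    have h2 : -(x * mm n) + (a/δ^2 - a/ε^2) = a*d^2*(ε+2*δ)/(ε^3*δ^2) := by
      rw [hmx']; exact hidA
    linarith [h1, h2, hPA_lo, h43]
  have hTA_up : Real.log (r1/r2) * mm n + (a/δ^2 - a/ε^2) ≤ 2100*a/γ^2 := by
    rw [hlogr1, show (2100:ℝ)*a/γ^2 = 2100*(a/γ^2) by ring]
    have h1 : (x - x^2) * mm n ≤ Real.log (1+x) * mm n :=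
      mul_le_mul_of_nonneg_right hlog_lo (le_of_lt hm_pos)
    have h2 : -(x * mm n) + (a/δ^2 - a/ε^2) = a*d^2*(ε+2*δ)/(ε^3*δ^2) := by
      rw [hmx']; exact hidA
    have hx2 : x^2 * mm n ≤ 32*(a/γ^2) := by rw [mul_comm]; exact hmx2
    have hpos : (0:ℝ) ≤ a/γ^2 := by positivity
    linarith [h1, h2, hPA_up, hx2, hpos]
  have hTB_lo : 1 ≤ Real.log (r2/r1) * mm (n+1) + (a/ε^2 - a/δ^2) := by
    rw [hlogr2]
    have h1 : y * mm (n+1) ≤ -Real.log (1-y) * mm (n+1) :=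
      mul_le_mul_of_nonneg_right hly_lo (le_of_lt hm1_pos)
    have h2 : y * mm (n+1) + (a/ε^2 - a/δ^2) = a*d^2*(2*ε+δ)/(ε^2*δ^3) := by
      rw [hMy']; exact hidB
    linarith [h1, h2, hPB_lo, h43]
  have hTB_up : Real.log (r2/r1) * mm (n+1) + (a/ε^2 - a/δ^2) ≤ 2100*a/γ^2 := by
    rw [hlogr2, show (2100:ℝ)*a/γ^2 = 2100*(a/γ^2) by ring]
    have h1 : -Real.log (1-y) * mm (n+1) ≤ (y + 2*y^2) * mm (n+1) :=
      mul_le_mul_of_nonneg_right hly_up (le_of_lt hm1_pos)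
    have h2 : y * mm (n+1) + (a/ε^2 - a/δ^2) = a*d^2*(2*ε+δ)/(ε^2*δ^3) := by
      rw [hMy']; exact hidB
    have hy2 : 2*y^2 * mm (n+1) ≤ 512*(a/γ^2) := by
      calc 2*y^2 * mm (n+1) = 2*(mm (n+1))*y^2 := by ring
        _ ≤ 512*(a/γ^2) := hMy2
    have hpos : (0:ℝ) ≤ a/γ^2 := by positivity
    linarith [h1, h2, hPB_up, hy2, hpos]
  refine ⟨⟨?_, ?_⟩, ?_, ?_⟩
  · rw [hAexp]; exact Real.exp_le_exp.mpr hTA_lo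
  · rw [hAexp]; exact Real.exp_le_exp.mpr hTA_up
  · rw [hBexp]; exact Real.exp_le_exp.mpr hTB_lo
  · rw [hBexp]; exact Real.exp_le_exp.mpr hTB_up
end

section
/- Let a > 0 and b > 0. There exists a constant C > 0 such that for every m ≥ max{1, ab}, the global maximum point r_m in [0,1) of r ↦ r^m exp(-a/(1-r)^b) satisfies 1 - G·m^{-β} + βG²·m^{-2β} - C·m^{-3β} ≤ r_m ≤ 1 - G·m^{-β} + βG²·m^{-2β} + C·m^{-3β}. -/
/-!
Put `s = 1 - r_m` and `ε = G m^{-β} = (ab/m)^β`. Taking the `(b+1)`-th root of the critical point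
equation gives the fixed-point equation `s = ε (1 - s)^β`. The two Bernoulli inequalities
`(1 - s)^β ≤ 1 - β s` and `(1 - s)^{1-β} ≤ 1 - (1-β) s` squeeze `(1 - s)^β` between
`(1 - s) / (1 - (1-β) s)` and `1 - β s`; bootstrapping through `ε - ε² ≤ s ≤ ε` then gives
`|s - (ε - β ε²)| ≤ ε³`, i.e. the claim with `C = G³`.
-/

lemma one_sub_rpow_le_one_sub_mul {s p : ℝ} (hs : s ≤ 1) (hp0 : 0 ≤ p) (hp1 : p ≤ 1) :
    (1 - s) ^ p ≤ 1 - p * s := by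
  simpa [sub_eq_add_neg] using rpow_one_add_le_one_add_mul_self (s := -s) (by linarith) hp0 hp1

lemma one_sub_le_one_sub_rpow_mul {s p : ℝ} (hs : s ≤ 1) (hp0 : 0 ≤ p) (hp1 : p ≤ 1) :
    1 - s ≤ (1 - s) ^ p * (1 - (1 - p) * s) :=
  calc 1 - s = (1 - s) ^ p * (1 - s) ^ (1 - p) := by
        rw [← Real.rpow_add' (by linarith) (by norm_num), add_sub_cancel, Real.rpow_one]
    _ ≤ (1 - s) ^ p * (1 - (1 - p) * s) := by
        gcongr
        exact one_sub_rpow_le_one_sub_mul hs (by linarith) (by linarith)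

lemma eq_rpow_inv_mul_of_rpow_eq {s c t p : ℝ} (hs : 0 ≤ s) (hc : 0 ≤ c) (ht : 0 ≤ t)
    (hp : p ≠ 0) (h : s ^ p = c * t) : s = c ^ p⁻¹ * t ^ p⁻¹ := by
  rw [← Real.mul_rpow hc ht, ← h, Real.rpow_rpow_inv hs hp]

lemma one_sub_eq_mul_rpow_of_mul_one_sub_rpow_eq {c b β m r : ℝ} (hc : 0 ≤ c) (hb : 0 ≤ b)
    (hβ : β = 1 / (1 + b)) (hm : 0 < m) (hr0 : 0 ≤ r) (hr1 : r ≤ 1)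
    (h : m * (1 - r) ^ (b + 1) = c * r) : 1 - r = c ^ β * m ^ (-β) * r ^ β := by
  have hroot : (1 - r) ^ (b + 1) = c / m * r := by field_simp; linarith
  have hinv : (b + 1)⁻¹ = β := by rw [hβ, one_div, add_comm]
  rw [eq_rpow_inv_mul_of_rpow_eq (by linarith) (by positivity) hr0 (by positivity) hroot, hinv,
    Real.div_rpow hc hm.le, div_eq_mul_inv, ← Real.rpow_neg hm.le]

section FixedPoint

variable {β ε s : ℝ}

lemma le_of_eq_mul_one_sub_rpow (hβ : 0 ≤ β) (hε : 0 ≤ ε) (hs0 : 0 ≤ s) (hs1 : s ≤ 1)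
    (h : s = ε * (1 - s) ^ β) : s ≤ ε :=
  calc s = ε * (1 - s) ^ β := h
    _ ≤ ε * 1 := by gcongr; exact Real.rpow_le_one (by linarith) (by linarith) hβ
    _ = ε := mul_one ε

lemma sub_sq_le_of_eq_mul_one_sub_rpow (hβ0 : 0 ≤ β) (hβ1 : β ≤ 1) (hε : 0 ≤ ε) (hs0 : 0 ≤ s)
    (hs1 : s ≤ 1) (h : s = ε * (1 - s) ^ β) : ε - ε ^ 2 ≤ s := by
  have hsε := le_of_eq_mul_one_sub_rpow hβ0 hε hs0 hs1 h
  have hlin : ε * (1 - s) ≤ s :=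
    calc ε * (1 - s) ≤ ε * (1 - s) ^ β := by
          gcongr; exact Real.self_le_rpow_of_le_one (by linarith) (by linarith) hβ1
      _ = s := h.symm
  nlinarith

lemma le_sub_add_cube_of_eq_mul_one_sub_rpow (hβ0 : 0 ≤ β) (hβ1 : β ≤ 1) (hε : 0 ≤ ε)
    (hs0 : 0 ≤ s) (hs1 : s ≤ 1) (h : s = ε * (1 - s) ^ β) : s ≤ ε - β * ε ^ 2 + ε ^ 3 := by
  have hlow := sub_sq_le_of_eq_mul_one_sub_rpow hβ0 hβ1 hε hs0 hs1 h
  have hup : s ≤ ε * (1 - β * s) :=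
    calc s = ε * (1 - s) ^ β := h
      _ ≤ ε * (1 - β * s) := by gcongr; exact one_sub_rpow_le_one_sub_mul hs1 hβ0 hβ1
  nlinarith [mul_le_mul_of_nonneg_left hlow (mul_nonneg hβ0 hε), pow_nonneg hε 3]

lemma sub_sub_cube_le_of_eq_mul_one_sub_rpow (hβ0 : 0 ≤ β) (hβ1 : β ≤ 1) (hε : 0 ≤ ε)
    (hs0 : 0 ≤ s) (hs1 : s ≤ 1) (h : s = ε * (1 - s) ^ β) : ε - β * ε ^ 2 - ε ^ 3 ≤ s := by
  have hsε := le_of_eq_mul_one_sub_rpow hβ0 hε hs0 hs1 h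
  have hlow := sub_sq_le_of_eq_mul_one_sub_rpow hβ0 hβ1 hε hs0 hs1 h
  have hquad : ε * (1 - s) ≤ s * (1 - (1 - β) * s) :=
    calc ε * (1 - s) ≤ ε * ((1 - s) ^ β * (1 - (1 - β) * s)) := by
          gcongr; exact one_sub_le_one_sub_rpow_mul hs1 hβ0 hβ1
      _ = ε * (1 - s) ^ β * (1 - (1 - β) * s) := by ring
      _ = s * (1 - (1 - β) * s) := by rw [← h]
  have hsq : β * s ^ 2 ≤ β * ε ^ 2 := by gcongr
  have hgap : s * (ε - s) ≤ ε * ε ^ 2 := by gcongr; linarith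
  nlinarith

end FixedPoint

/-- Lemma 4.2. With `β = 1/(1+b)` and `G = (ab)^β`, there is a
constant `C > 0` such that for every `m ≥ max{1, ab}` the global maximum point
`r_m` of `r ↦ r^m exp(-a/(1-r)^b)` (the unique solution in `(0,1)` of
`m(1-r)^{b+1} = ab r`) satisfies
`1 - G m^{-β} + βG² m^{-2β} - C m^{-3β} ≤ r_m ≤ 1 - G m^{-β} + βG² m^{-2β} + C m^{-3β}`. -/
theorem stmt_10
    (a b : ℝ) (ha : 0 < a) (hb : 0 < b)
    (β G : ℝ) (hβ : β = 1 / (1 + b)) (hG : G = (a * b) ^ β) :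
    ∃ C : ℝ, 0 < C ∧ ∀ m : ℝ, max 1 (a * b) ≤ m →
      ∀ r : ℝ, r ∈ Set.Ioo (0:ℝ) 1 → m * (1 - r) ^ (b + 1) = a * b * r →
        1 - G * m ^ (-β) + β * G ^ 2 * m ^ (-(2 * β)) - C * m ^ (-(3 * β)) ≤ r ∧
        r ≤ 1 - G * m ^ (-β) + β * G ^ 2 * m ^ (-(2 * β)) + C * m ^ (-(3 * β)) := by
  have hβ0 : 0 ≤ β := by rw [hβ]; positivity
  have hβ1 : β ≤ 1 := by rw [hβ, div_le_one (by positivity)]; linarith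
  have hab : 0 ≤ a * b := by positivity
  have hG0 : 0 ≤ G := by rw [hG]; positivity
  refine ⟨G ^ 3, by rw [hG]; positivity, fun m hm r ⟨hr0, hr1⟩ heq => ?_⟩
  have hm : 0 < m := one_pos.trans_le ((le_max_left _ _).trans hm)
  have hfix : 1 - r = G * m ^ (-β) * (1 - (1 - r)) ^ β := by
    rw [sub_sub_cancel, hG]
    exact one_sub_eq_mul_rpow_of_mul_one_sub_rpow_eq hab hb.le hβ hm hr0.le hr1.le heq
  set ε := G * m ^ (-β)
  have hε2 : β * G ^ 2 * m ^ (-(2 * β)) = β * ε ^ 2 := by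
    rw [show -(2 * β) = -β * (2 : ℕ) by push_cast; ring, Real.rpow_mul_natCast hm.le]; ring
  have hε3 : G ^ 3 * m ^ (-(3 * β)) = ε ^ 3 := by
    rw [show -(3 * β) = -β * (3 : ℕ) by push_cast; ring, Real.rpow_mul_natCast hm.le]; ring
  have hε : 0 ≤ ε := by positivity
  have hs0 : 0 ≤ 1 - r := by linarith
  have hs1 : 1 - r ≤ 1 := by linarith
  rw [hε2, hε3]
  constructor
  · linarith [le_sub_add_cube_of_eq_mul_one_sub_rpow hβ0 hβ1 hε hs0 hs1 hfix]
  · linarith [sub_sub_cube_le_of_eq_mul_one_sub_rpow hβ0 hβ1 hε hs0 hs1 hfix]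
end

section
/- Let a > 0, 0 < b < 2, S > 0, and set m_n := S·n^α for n ∈ ℕ, with v(r) = exp(-a/(1-r)^b). Then there exist C > 0 and N ∈ ℕ such that for all n ≥ N: | log( v(r_{m_{n+1}}) / v(r_{m_n}) ) + (2G/b)·S^{bβ}·n + (G/b)·S^{bβ} | ≤ C·(n^{-1} + n^{1-2/b}). -/
open Real


lemma taylor1 (p : ℝ) : ∃ C : ℝ, 0 < C ∧ ∀ u : ℝ, |u| ≤ 1/2 → |(1+u)^p - 1| ≤ C * |u| := by
  set D : ℝ := |p| * ((1/2:ℝ)^(p-1) + (3/2:ℝ)^(p-1)) with hD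
  refine ⟨D + 1, by positivity, fun u hu => ?_⟩
  have habs := abs_le.mp hu
  set s : Set ℝ := Set.Icc (-(1/2):ℝ) (1/2) with hs
  have hderiv : ∀ t ∈ s, HasDerivWithinAt (fun x : ℝ => (1+x)^p)
      ((1 * (p * (1+t)^(p-1)))) s t := by
    intro t ht
    have h1t : (0:ℝ) < 1 + t := by
      have := ht.1; simp only [hs, Set.mem_Icc] at ht; linarith [ht.1]
    have : HasDerivAt (fun x : ℝ => (1+x)^p) (1 * (p * (1+t)^(p-1))) t := by
      have hid : HasDerivAt (fun x : ℝ => 1 + x) 1 t := by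
        simpa using (hasDerivAt_id t).const_add (1:ℝ)
      have := (Real.hasDerivAt_rpow_const (p := p) (x := 1 + t) (Or.inl h1t.ne')).comp t hid
      simpa [mul_comm, Function.comp_def] using this
    exact this.hasDerivWithinAt
  have hbound : ∀ t ∈ s, ‖1 * (p * (1+t)^(p-1))‖ ≤ D := by
    intro t ht
    simp only [hs, Set.mem_Icc] at ht
    have h1 : (1/2:ℝ) ≤ 1 + t := by linarith [ht.1]
    have h2 : 1 + t ≤ 3/2 := by linarith [ht.2]
    have hle : (1+t)^(p-1) ≤ (1/2:ℝ)^(p-1) + (3/2:ℝ)^(p-1) := by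
      rcases le_or_gt 0 (p-1) with hp | hp
      · have := Real.rpow_le_rpow (by linarith : (0:ℝ) ≤ 1+t) h2 hp
        have h0 : (0:ℝ) ≤ (1/2:ℝ)^(p-1) := by positivity
        linarith
      · have := Real.rpow_le_rpow_of_nonpos (by norm_num : (0:ℝ) < 1/2) h1 hp.le
        have h0 : (0:ℝ) ≤ (3/2:ℝ)^(p-1) := by positivity
        linarith
    have hpos : (0:ℝ) ≤ (1+t)^(p-1) := by positivity
    rw [norm_mul, norm_mul, Real.norm_eq_abs, Real.norm_eq_abs, Real.norm_eq_abs]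
    rw [abs_of_nonneg hpos]
    calc |(1:ℝ)| * (|p| * (1+t)^(p-1)) = |p| * (1+t)^(p-1) := by simp
      _ ≤ |p| * ((1/2:ℝ)^(p-1) + (3/2:ℝ)^(p-1)) := by
          exact mul_le_mul_of_nonneg_left hle (abs_nonneg p)
      _ = D := rfl
  have hconv : Convex ℝ s := convex_Icc _ _
  have h0 : (0:ℝ) ∈ s := by constructor <;> norm_num
  have hu' : u ∈ s := ⟨by linarith [habs.1], by linarith [habs.2]⟩
  have := hconv.norm_image_sub_le_of_norm_hasDerivWithin_le hderiv hbound h0 hu'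
  simp only [Real.norm_eq_abs, add_zero, sub_zero, Real.rpow_zero] at this
  have hD0 : 0 ≤ D := by positivity
  calc |(1+u)^p - 1| ≤ D * |u| := by simpa using this
    _ ≤ (D+1) * |u| := by nlinarith [abs_nonneg u]


lemma taylor2 (p : ℝ) : ∃ C : ℝ, 0 < C ∧ ∀ u : ℝ, |u| ≤ 1/2 → |(1+u)^p - 1 - p*u| ≤ C * u^2 := by
  obtain ⟨C₁, hC₁, h₁⟩ := taylor1 (p-1)
  refine ⟨|p| * C₁ + 1, by positivity, fun u hu => ?_⟩
  set s : Set ℝ := Set.uIcc (0:ℝ) u with hs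
  have hmem : ∀ t ∈ s, |t| ≤ |u| := by
    intro t ht
    rw [hs, Set.uIcc_eq_union] at ht
    rcases ht with ht | ht
    · rcases ht with ⟨h1, h2⟩
      rw [abs_le]; exact ⟨by linarith [abs_nonneg u], by linarith [le_abs_self u]⟩
    · rcases ht with ⟨h1, h2⟩
      rw [abs_le]; exact ⟨by linarith [neg_abs_le u], by linarith [abs_nonneg u]⟩
  have hderiv : ∀ t ∈ s, HasDerivWithinAt (fun x : ℝ => (1+x)^p - p*x)
      (p * (1+t)^(p-1) - p) s t := by
    intro t ht
    have h1t : (0:ℝ) < 1 + t := by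
      have := abs_le.mp ((hmem t ht).trans hu); linarith [this.1]
    have hid : HasDerivAt (fun x : ℝ => 1 + x) 1 t := by
      simpa using (hasDerivAt_id t).const_add (1:ℝ)
    have hA : HasDerivAt (fun x : ℝ => (1+x)^p) (p * (1+t)^(p-1)) t := by
      have := (Real.hasDerivAt_rpow_const (p := p) (x := 1 + t) (Or.inl h1t.ne')).comp t hid
      simpa [mul_comm, Function.comp_def] using this
    have hB : HasDerivAt (fun x : ℝ => p * x) p t := by
      simpa using (hasDerivAt_id t).const_mul p
    exact (hA.sub hB).hasDerivWithinAt
  have hbound : ∀ t ∈ s, ‖p * (1+t)^(p-1) - p‖ ≤ (|p| * C₁) * |u| := by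
    intro t ht
    have htu := hmem t ht
    have htu2 := htu.trans hu
    have : p * (1+t)^(p-1) - p = p * ((1+t)^(p-1) - 1) := by ring
    rw [Real.norm_eq_abs, this, abs_mul]
    have := h₁ t htu2
    calc |p| * |(1+t)^(p-1) - 1| ≤ |p| * (C₁ * |t|) :=
          mul_le_mul_of_nonneg_left this (abs_nonneg p)
      _ ≤ |p| * (C₁ * |u|) := by
          exact mul_le_mul_of_nonneg_left (mul_le_mul_of_nonneg_left htu hC₁.le) (abs_nonneg p)
      _ = (|p| * C₁) * |u| := by ring
  have hconv : Convex ℝ s := convex_uIcc _ _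
  have h0 : (0:ℝ) ∈ s := Set.left_mem_uIcc
  have hu' : u ∈ s := Set.right_mem_uIcc
  have key := hconv.norm_image_sub_le_of_norm_hasDerivWithin_le hderiv hbound h0 hu'
  simp only [Real.norm_eq_abs, add_zero, sub_zero, mul_zero, Real.rpow_zero] at key
  have : |(1+u)^p - p*u - 1| ≤ |p| * C₁ * |u| * |u| := by simpa using key
  have habs2 : |u| * |u| = u^2 := by rw [← abs_mul, ← sq, abs_sq]
  have h2 : (0:ℝ) ≤ u^2 := sq_nonneg u
  calc |(1+u)^p - 1 - p*u| = |(1+u)^p - p*u - 1| := by ring_nf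
    _ ≤ |p| * C₁ * |u| * |u| := this
    _ = (|p| * C₁) * u^2 := by rw [mul_assoc, habs2]
    _ ≤ (|p| * C₁ + 1) * u^2 := by nlinarith


lemma keyId (a b β G m r : ℝ) (ha : 0 < a) (hb : 0 < b)
    (hβ : β = 1/(1+b)) (hG : G = (a*b)^β)
    (hm : 0 < m) (hr0 : 0 < r) (hr1 : r < 1)
    (heq : m * (1-r)^(b+1) = a*b*r) :
    a / (1-r)^b = (G/b) * m^(b*β) * r^(-(b*β)) := by
  have h1b : (0:ℝ) < 1 + b := by linarith
  have hε : (0:ℝ) < 1 - r := by linarith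
  have hq : (0:ℝ) < a*b*r/m := by positivity
  have hstep1 : (1-r)^(b+1) = a*b*r/m := by
    field_simp
    linarith [heq]
  have h2 : (b+1)*β = 1 := by rw [hβ]; field_simp; ring
  have hstep2 : (1-r) = (a*b*r/m)^β := by
    calc (1-r) = (1-r)^((b+1)*β) := by rw [h2, Real.rpow_one]
      _ = ((1-r)^(b+1))^β := Real.rpow_mul hε.le _ _
      _ = (a*b*r/m)^β := by rw [hstep1]
  have hstep3 : (1-r)^b = (a*b)^(b*β) * r^(b*β) * m^(-(b*β)) := by
    have h3 : (1-r)^b = ((a*b*r/m)^β)^b := by rw [← hstep2]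
    rw [h3, ← Real.rpow_mul hq.le, mul_comm β b,
        show a*b*r/m = (a*b)*(r*m⁻¹) by ring,
        Real.mul_rpow (by positivity) (by positivity),
        Real.mul_rpow hr0.le (by positivity),
        Real.inv_rpow hm.le, Real.rpow_neg hm.le]
    ring
  have hexp : -(b*β) = β - 1 := by rw [hβ]; field_simp; ring
  have hac : a * ((a*b):ℝ)^(-(b*β)) = G/b := by
    rw [Real.mul_rpow ha.le hb.le, hG, Real.mul_rpow ha.le hb.le, hexp,
        Real.rpow_sub ha, Real.rpow_sub hb, Real.rpow_one, Real.rpow_one]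
    field_simp
  have hX : (0:ℝ) < (a*b)^(b*β) := Real.rpow_pos_of_pos (by positivity) _
  have hY : (0:ℝ) < r^(b*β) := Real.rpow_pos_of_pos hr0 _
  have hM : (0:ℝ) < m^(b*β) := Real.rpow_pos_of_pos hm _
  have hrinv : r^(-(b*β)) = (r^(b*β))⁻¹ := Real.rpow_neg hr0.le _
  have hminv : m^(-(b*β)) = (m^(b*β))⁻¹ := Real.rpow_neg hm.le _
  have ha' : a = (G/b) * (a*b)^(b*β) := by
    rw [← hac, Real.rpow_neg (by positivity)]
    field_simp
  rw [hstep3, hrinv, hminv]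
  nth_rewrite 1 [ha']
  field_simp


lemma core (a b β G : ℝ) (ha : 0 < a) (hb : 0 < b)
    (hβ : β = 1/(1+b)) (hG : G = (a*b)^β) :
    ∃ C M : ℝ, 0 < C ∧ 1 ≤ M ∧ ∀ m, M ≤ m → ∀ r, 0 < r → r < 1 →
      m * (1-r)^(b+1) = a*b*r →
      |r^(-(b*β)) - 1 - (b*β) * (G * m^(-β))| ≤ C * (G * m^(-β))^2 := by
  have h1b : (0:ℝ) < 1 + b := by linarith
  have hβ0 : 0 < β := by rw [hβ]; positivity
  have hG0 : 0 < G := by rw [hG]; positivity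
  obtain ⟨C₁, hC₁, h₁⟩ := taylor1 β
  obtain ⟨C₂, hC₂, h₂⟩ := taylor2 (-(b*β))
  refine ⟨C₂ + (b*β) * C₁ + 1, max 1 ((2*G)^(1/β)), by positivity, le_max_left _ _,
    fun m hm r hr0 hr1 heq => ?_⟩
  have hm1 : (1:ℝ) ≤ m := le_trans (le_max_left _ _) hm
  have hm0 : (0:ℝ) < m := by linarith
  have hε : (0:ℝ) < 1 - r := by linarith
  set t : ℝ := G * m^(-β) with ht
  have ht0 : 0 < t := by positivity
  have htle : t ≤ 1/2 := by
    have h2G : (0:ℝ) ≤ 2*G := by positivity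
    have hmb : (2*G) ≤ m^β := by
      have h1 : ((2*G)^(1/β))^β ≤ m^β :=
        Real.rpow_le_rpow (by positivity) (le_trans (le_max_right _ _) hm) hβ0.le
      rwa [← Real.rpow_mul h2G, one_div, inv_mul_cancel₀ hβ0.ne', Real.rpow_one] at h1
    have hmb0 : (0:ℝ) < m^β := Real.rpow_pos_of_pos hm0 _
    have hteq : t = G / m^β := by
      rw [ht, Real.rpow_neg hm0.le, div_eq_mul_inv]
    rw [hteq]
    calc G / m^β ≤ G / (2*G) := by gcongr
      _ = 1/2 := by field_simp
  -- ε = t * r^β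
  have hq : (0:ℝ) < a*b*r/m := by positivity
  have hstep1 : (1-r)^(b+1) = a*b*r/m := by
    field_simp
    linarith [heq]
  have h2 : (b+1)*β = 1 := by rw [hβ]; field_simp; ring
  have hstep2 : (1-r) = (a*b*r/m)^β := by
    calc (1-r) = (1-r)^((b+1)*β) := by rw [h2, Real.rpow_one]
      _ = ((1-r)^(b+1))^β := Real.rpow_mul hε.le _ _
      _ = (a*b*r/m)^β := by rw [hstep1]
  have hεt : 1 - r = t * r^β := by
    rw [hstep2, show a*b*r/m = ((a*b)*m⁻¹)*r by ring,
        Real.mul_rpow (by positivity) hr0.le,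
        Real.mul_rpow (by positivity) (by positivity),
        Real.inv_rpow hm0.le, ← Real.rpow_neg hm0.le, ht, hG]
  have hrβ1 : r^β ≤ 1 := Real.rpow_le_one hr0.le hr1.le hβ0.le
  have hεle : 1 - r ≤ t := by
    calc 1 - r = t * r^β := hεt
      _ ≤ t * 1 := mul_le_mul_of_nonneg_left hrβ1 ht0.le
      _ = t := mul_one t
  have hεhalf : |(-(1-r))| ≤ 1/2 := by
    rw [abs_neg, abs_of_pos hε]; linarith
  have happ1 := h₁ (-(1-r)) hεhalf
  rw [show (1 + -(1-r)) = r by ring, abs_neg, abs_of_pos hε] at happ1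
  have happ2 := h₂ (-(1-r)) hεhalf
  rw [show (1 + -(1-r)) = r by ring] at happ2
  have happ2' : |r^(-(b*β)) - 1 - (b*β)*(1-r)| ≤ C₂ * t^2 := by
    calc |r^(-(b*β)) - 1 - (b*β)*(1-r)| = |r^(-(b*β)) - 1 - (-(b*β))*(-(1-r))| := by
          ring_nf
      _ ≤ C₂ * (-(1-r))^2 := happ2
      _ = C₂ * (1-r)^2 := by ring
      _ ≤ C₂ * t^2 := mul_le_mul_of_nonneg_left (pow_le_pow_left₀ hε.le hεle 2) hC₂.le
  have hdiff : |(b*β)*(1-r) - (b*β)*t| ≤ (b*β) * C₁ * t^2 := by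
    have h3 : (b*β)*(1-r) - (b*β)*t = (b*β) * t * (r^β - 1) := by
      rw [hεt]; ring
    rw [h3, abs_mul, abs_of_pos (by positivity : (0:ℝ) < b*β*t)]
    calc (b*β*t) * |r^β - 1| ≤ (b*β*t) * (C₁ * (1-r)) := by
          exact mul_le_mul_of_nonneg_left happ1 (by positivity)
      _ ≤ (b*β*t) * (C₁ * t) := by
          apply mul_le_mul_of_nonneg_left _ (by positivity)
          exact mul_le_mul_of_nonneg_left hεle hC₁.le
      _ = (b*β) * C₁ * t^2 := by ring
  have ht2 : (0:ℝ) ≤ t^2 := sq_nonneg t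
  calc |r^(-(b*β)) - 1 - (b*β) * t|
      ≤ |r^(-(b*β)) - 1 - (b*β)*(1-r)| + |(b*β)*(1-r) - (b*β)*t| := by
        exact abs_sub_le _ _ _
    _ ≤ C₂ * t^2 + (b*β) * C₁ * t^2 := add_le_add happ2' hdiff
    _ ≤ (C₂ + (b*β) * C₁ + 1) * t^2 := by nlinarith

set_option maxHeartbeats 1000000 in
/-- Lemma 4.3 for `0 < b < 2`. With `m_n = S n^α`, `α = 2 + 2/b`,
`β = 1/(1+b)`, `G = (ab)^β` and `r_m` the unique solution in `(0,1)` of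
`m(1-r)^{b+1} = ab r`, one has for all large `n`:
`|log(v(r_{m_{n+1}})/v(r_{m_n})) + (2G/b) S^{bβ} n + (G/b) S^{bβ}| ≤ C(n^{-1} + n^{1-2/b})`. -/
theorem stmt_12
    (a b : ℝ) (ha : 0 < a) (hb0 : 0 < b) (hb2 : b < 2)
    (S : ℝ) (hS : 0 < S)
    (α β G : ℝ) (hα : α = 2 + 2 / b) (hβ : β = 1 / (1 + b)) (hG : G = (a * b) ^ β)
    (rr : ℝ → ℝ)
    (hrr : ∀ m : ℝ, 0 < m → rr m ∈ Set.Ioo (0:ℝ) 1 ∧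
      m * (1 - rr m) ^ (b + 1) = a * b * rr m)
    (mm : ℕ → ℝ) (hmm : ∀ n : ℕ, mm n = S * (n : ℝ) ^ α) :
    ∃ C : ℝ, 0 < C ∧ ∃ N : ℕ, ∀ n : ℕ, N ≤ n →
      |Real.log (Real.exp (-a / (1 - rr (mm (n+1))) ^ b) /
          Real.exp (-a / (1 - rr (mm n)) ^ b)) +
        (2 * G / b) * S ^ (b * β) * (n : ℝ) + (G / b) * S ^ (b * β)| ≤
      C * ((n : ℝ) ^ (-(1:ℝ)) + (n : ℝ) ^ (1 - 2 / b)) := by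
  have h1b : (0:ℝ) < 1 + b := by linarith
  have hβ0 : 0 < β := by rw [hβ]; positivity
  have hG0 : 0 < G := by rw [hG]; positivity
  have hc0 : 0 < b*β := by positivity
  have hα1 : 1 ≤ α := by
    have : 0 < 2/b := by positivity
    rw [hα]; linarith
  have hαc : α * (b*β) = 2 := by rw [hα, hβ]; field_simp; ring
  have hαmβ : α * (-β) = -(2/b) := by rw [hα, hβ]; field_simp; ring
  obtain ⟨C₀, M, hC₀, hM1, hcore⟩ := core a b β G ha hb0 hβ hG
  obtain ⟨C₄, hC₄, h₄⟩ := taylor1 (2 - 2/b)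
  have hSmβ : (0:ℝ) < S^(-β) := Real.rpow_pos_of_pos hS _
  have hSc : (0:ℝ) < S^(b*β) := Real.rpow_pos_of_pos hS _
  set J : ℝ := G * S^(-β) with hJ
  have hJ0 : 0 < J := by positivity
  set E : ℝ := (G/b) * S^(b*β) with hE
  have hE0 : 0 < E := by positivity
  refine ⟨E * (2*C₀*J^2 + (b*β)*J*C₄) + 1, by positivity, ⌈M/S⌉₊ + 2, fun n hn => ?_⟩
  have hn2 : (2:ℕ) ≤ n := le_trans (Nat.le_add_left 2 _) hn
  have hn1 : (1:ℝ) ≤ (n:ℝ) := by exact_mod_cast le_trans (by norm_num) hn2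
  have hn0 : (0:ℝ) < (n:ℝ) := by linarith
  -- per-k facts
  have hkey : ∀ k : ℕ, n ≤ k →
      (a/(1 - rr (mm k))^b = E * ((k:ℝ)^2) * (rr (mm k))^(-(b*β))) ∧
      |(rr (mm k))^(-(b*β)) - 1 - (b*β) * (J * (k:ℝ)^(-(2/b)))| ≤ C₀ * J^2 * (k:ℝ)^(-(4/b)) := by
    intro k hk
    have hk1 : (1:ℝ) ≤ (k:ℝ) := le_trans hn1 (by exact_mod_cast hk)
    have hk0 : (0:ℝ) < (k:ℝ) := by linarith
    have hmk0 : 0 < mm k := by rw [hmm]; positivity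
    have hMk : M ≤ mm k := by
      have hceil : (⌈M/S⌉₊:ℝ) ≤ (k:ℝ) := by
        have h1 : ⌈M/S⌉₊ ≤ k := le_trans (le_trans (Nat.le_add_right _ 2) hn) hk
        exact_mod_cast h1
      have h1 : (M/S) ≤ (k:ℝ) := le_trans (Nat.le_ceil _) hceil
      have h2 : (k:ℝ) ≤ (k:ℝ)^α := by
        calc (k:ℝ) = (k:ℝ)^(1:ℝ) := (Real.rpow_one _).symm
          _ ≤ (k:ℝ)^α := Real.rpow_le_rpow_of_exponent_le hk1 hα1
      calc M = S * (M/S) := by field_simp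
        _ ≤ S * (k:ℝ) := mul_le_mul_of_nonneg_left h1 hS.le
        _ ≤ S * (k:ℝ)^α := mul_le_mul_of_nonneg_left h2 hS.le
        _ = mm k := (hmm k).symm
    obtain ⟨⟨hr0, hr1⟩, heqk⟩ := hrr (mm k) hmk0
    have hid := keyId a b β G (mm k) (rr (mm k)) ha hb0 hβ hG hmk0 hr0 hr1 heqk
    have hmc : (mm k)^(b*β) = S^(b*β) * (k:ℝ)^2 := by
      rw [hmm, Real.mul_rpow hS.le (by positivity), ← Real.rpow_mul (Nat.cast_nonneg k), hαc,
          show (2:ℝ) = ((2:ℕ):ℝ) by norm_num, Real.rpow_natCast]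
    have hmβ : (mm k)^(-β) = S^(-β) * (k:ℝ)^(-(2/b)) := by
      rw [hmm, Real.mul_rpow hS.le (by positivity), ← Real.rpow_mul (Nat.cast_nonneg k), hαmβ]
    constructor
    · rw [hid, hmc, hE]; ring
    · have hco := hcore (mm k) hMk (rr (mm k)) hr0 hr1 heqk
      rw [hmβ] at hco
      have e1 : G * (S^(-β) * (k:ℝ)^(-(2/b))) = J * (k:ℝ)^(-(2/b)) := by rw [hJ]; ring
      rw [e1] at hco
      have e3 : ((k:ℝ)^(-(2/b)))^2 = (k:ℝ)^(-(4/b)) := by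
        rw [← Real.rpow_natCast ((k:ℝ)^(-(2/b))) 2, ← Real.rpow_mul (Nat.cast_nonneg k)]
        norm_num
        rw [show -(2 / b * 2) = -(4/b) by ring]
      refine hco.trans (le_of_eq ?_)
      rw [mul_pow, e3]; ring
  obtain ⟨hid0, hest0⟩ := hkey n le_rfl
  obtain ⟨hid1, hest1⟩ := hkey (n+1) (Nat.le_succ n)
  have hcast : ((n+1:ℕ):ℝ) = (n:ℝ)+1 := by push_cast; ring
  set X₀ : ℝ := (rr (mm n))^(-(b*β)) with hX₀
  set X₁ : ℝ := (rr (mm (n+1)))^(-(b*β)) with hX₁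
  set u₀ : ℝ := (n:ℝ)^(-(2/b)) with hu₀
  set u₁ : ℝ := ((n:ℝ)+1)^(-(2/b)) with hu₁
  rw [hcast] at hid1 hest1
  set D₀ : ℝ := X₀ - 1 - (b*β) * (J * u₀) with hD₀
  set D₁ : ℝ := X₁ - 1 - (b*β) * (J * u₁) with hD₁
  -- rewrite the log
  rw [← Real.exp_sub, Real.log_exp]
  have hstart : -a / (1 - rr (mm (n+1)))^b - (-a / (1 - rr (mm n))^b)
      = -(E * (((n:ℝ)+1)^2) * X₁) + E * ((n:ℝ)^2) * X₀ := by
    rw [neg_div, neg_div, hid0, hid1]; ring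
  rw [hstart]
  -- main algebraic identity
  have hmain : -(E * (((n:ℝ)+1)^2) * X₁) + E * ((n:ℝ)^2) * X₀
      + (2*G/b) * S^(b*β) * (n:ℝ) + (G/b) * S^(b*β)
      = E * ((n:ℝ)^2 * D₀ - ((n:ℝ)+1)^2 * D₁
          + (b*β)*J*((n:ℝ)^2 * u₀ - ((n:ℝ)+1)^2 * u₁)) := by
    rw [hD₀, hD₁, hE]; ring
  rw [hmain]
  -- power identities
  have pow_merge : ∀ (x : ℝ), 0 < x → ∀ p : ℝ, x^2 * x^p = x^(2+p) := by
    intro x hx p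
    rw [Real.rpow_add hx, ← Real.rpow_natCast x 2]
    norm_num
  have hnu : (n:ℝ)^2 * u₀ = (n:ℝ)^(2 - 2/b) := by
    rw [hu₀, pow_merge _ hn0, show 2 + -(2/b) = 2 - 2/b by ring]
  have hnu1 : ((n:ℝ)+1)^2 * u₁ = ((n:ℝ)+1)^(2 - 2/b) := by
    rw [hu₁, pow_merge _ (by linarith), show 2 + -(2/b) = 2 - 2/b by ring]
  have hnd : (n:ℝ)^2 * ((n:ℝ)^(-(4/b))) = (n:ℝ)^(2 - 4/b) := by
    rw [pow_merge _ hn0, show 2 + -(4/b) = 2 - 4/b by ring]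
  have hnd1 : ((n:ℝ)+1)^2 * (((n:ℝ)+1)^(-(4/b))) = ((n:ℝ)+1)^(2 - 4/b) := by
    rw [pow_merge _ (by linarith), show 2 + -(4/b) = 2 - 4/b by ring]
  -- bound on |n^γ - (n+1)^γ|
  have hinv : |1/(n:ℝ)| ≤ 1/2 := by
    rw [abs_of_pos (by positivity)]
    rw [div_le_div_iff₀ hn0 (by norm_num)]
    have : (2:ℝ) ≤ (n:ℝ) := by exact_mod_cast hn2
    linarith
  have hsplit : ((n:ℝ)+1)^(2-2/b) = (n:ℝ)^(2-2/b) * (1+1/(n:ℝ))^(2-2/b) := by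
    rw [show (n:ℝ)+1 = (n:ℝ) * (1+1/(n:ℝ)) by field_simp,
        Real.mul_rpow hn0.le (by positivity)]
  have hγdiff : |(n:ℝ)^(2-2/b) - ((n:ℝ)+1)^(2-2/b)| ≤ C₄ * (n:ℝ)^(1-2/b) := by
    have h5 := h₄ (1/(n:ℝ)) hinv
    rw [abs_of_pos (by positivity : (0:ℝ) < 1/(n:ℝ))] at h5
    have e4 : (n:ℝ)^(2-2/b) - ((n:ℝ)+1)^(2-2/b)
        = -((n:ℝ)^(2-2/b) * ((1+1/(n:ℝ))^(2-2/b) - 1)) := by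
      rw [hsplit]; ring
    rw [e4, abs_neg, abs_mul, abs_of_pos (Real.rpow_pos_of_pos hn0 _)]
    calc (n:ℝ)^(2-2/b) * |(1+1/(n:ℝ))^(2-2/b) - 1|
        ≤ (n:ℝ)^(2-2/b) * (C₄ * (1/(n:ℝ))) :=
          mul_le_mul_of_nonneg_left h5 (Real.rpow_pos_of_pos hn0 _).le
      _ = C₄ * ((n:ℝ)^(2-2/b) * (n:ℝ)^(-(1:ℝ))) := by
          rw [Real.rpow_neg_one]; ring
      _ = C₄ * (n:ℝ)^(1-2/b) := by
          rw [← Real.rpow_add hn0, show 2-2/b + -(1:ℝ) = 1-2/b by ring]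
  -- exponent comparisons
  have hexp1 : ((n:ℝ)+1)^(2-4/b) ≤ (n:ℝ)^(2-4/b) := by
    apply Real.rpow_le_rpow_of_nonpos hn0 (by linarith)
    have : (2:ℝ) ≤ 4/b := by rw [le_div_iff₀ hb0]; linarith
    linarith
  have hexp2 : (n:ℝ)^(2-4/b) ≤ (n:ℝ)^(1-2/b) := by
    apply Real.rpow_le_rpow_of_exponent_le hn1
    have h2b : (1:ℝ) ≤ 2/b := by rw [le_div_iff₀ hb0]; linarith
    have h4b : 4/b = 2*(2/b) := by ring
    linarith
  -- assemble
  have hb0' : |E * ((n:ℝ)^2 * D₀ - ((n:ℝ)+1)^2 * D₁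
      + (b*β)*J*((n:ℝ)^2 * u₀ - ((n:ℝ)+1)^2 * u₁))|
      ≤ E * (2*C₀*J^2 + (b*β)*J*C₄) * (n:ℝ)^(1-2/b) := by
    rw [abs_mul, abs_of_pos hE0]
    rw [show E * (2*C₀*J^2 + (b*β)*J*C₄) * (n:ℝ)^(1-2/b)
        = E * ((2*C₀*J^2 + (b*β)*J*C₄) * (n:ℝ)^(1-2/b)) by ring]
    apply mul_le_mul_of_nonneg_left _ hE0.le
    have t1 : |(n:ℝ)^2 * D₀| ≤ C₀ * J^2 * (n:ℝ)^(1-2/b) := by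
      rw [abs_mul, abs_of_nonneg (by positivity : (0:ℝ) ≤ (n:ℝ)^2)]
      calc (n:ℝ)^2 * |D₀| ≤ (n:ℝ)^2 * (C₀ * J^2 * (n:ℝ)^(-(4/b))) :=
            mul_le_mul_of_nonneg_left hest0 (by positivity)
        _ = C₀ * J^2 * ((n:ℝ)^2 * (n:ℝ)^(-(4/b))) := by ring
        _ = C₀ * J^2 * (n:ℝ)^(2-4/b) := by rw [hnd]
        _ ≤ C₀ * J^2 * (n:ℝ)^(1-2/b) := by
            exact mul_le_mul_of_nonneg_left hexp2 (by positivity)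
    have t2 : |((n:ℝ)+1)^2 * D₁| ≤ C₀ * J^2 * (n:ℝ)^(1-2/b) := by
      rw [abs_mul, abs_of_nonneg (by positivity : (0:ℝ) ≤ ((n:ℝ)+1)^2)]
      calc ((n:ℝ)+1)^2 * |D₁| ≤ ((n:ℝ)+1)^2 * (C₀ * J^2 * ((n:ℝ)+1)^(-(4/b))) :=
            mul_le_mul_of_nonneg_left hest1 (by positivity)
        _ = C₀ * J^2 * (((n:ℝ)+1)^2 * ((n:ℝ)+1)^(-(4/b))) := by ring
        _ = C₀ * J^2 * ((n:ℝ)+1)^(2-4/b) := by rw [hnd1]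
        _ ≤ C₀ * J^2 * (n:ℝ)^(2-4/b) := mul_le_mul_of_nonneg_left hexp1 (by positivity)
        _ ≤ C₀ * J^2 * (n:ℝ)^(1-2/b) := mul_le_mul_of_nonneg_left hexp2 (by positivity)
    have t3 : |(b*β)*J*((n:ℝ)^2 * u₀ - ((n:ℝ)+1)^2 * u₁)| ≤ (b*β)*J*C₄*(n:ℝ)^(1-2/b) := by
      rw [abs_mul, abs_of_pos (by positivity : (0:ℝ) < (b*β)*J)]
      rw [hnu, hnu1]
      calc (b*β)*J * |(n:ℝ)^(2-2/b) - ((n:ℝ)+1)^(2-2/b)|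
          ≤ (b*β)*J * (C₄ * (n:ℝ)^(1-2/b)) :=
            mul_le_mul_of_nonneg_left hγdiff (by positivity)
        _ = (b*β)*J*C₄*(n:ℝ)^(1-2/b) := by ring
    calc |(n:ℝ)^2 * D₀ - ((n:ℝ)+1)^2 * D₁ + (b*β)*J*((n:ℝ)^2 * u₀ - ((n:ℝ)+1)^2 * u₁)|
        ≤ |(n:ℝ)^2 * D₀ - ((n:ℝ)+1)^2 * D₁| + |(b*β)*J*((n:ℝ)^2 * u₀ - ((n:ℝ)+1)^2 * u₁)| :=
          abs_add_le _ _
      _ ≤ (|(n:ℝ)^2 * D₀| + |((n:ℝ)+1)^2 * D₁|) + |(b*β)*J*((n:ℝ)^2 * u₀ - ((n:ℝ)+1)^2 * u₁)| := by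
          have habs := abs_sub ((n:ℝ)^2 * D₀) (((n:ℝ)+1)^2 * D₁)
          linarith
      _ ≤ (C₀*J^2*(n:ℝ)^(1-2/b) + C₀*J^2*(n:ℝ)^(1-2/b)) + (b*β)*J*C₄*(n:ℝ)^(1-2/b) := by
          gcongr
      _ = (2*C₀*J^2 + (b*β)*J*C₄) * (n:ℝ)^(1-2/b) := by ring
  have hfin1 : (0:ℝ) < (n:ℝ)^(-(1:ℝ)) := Real.rpow_pos_of_pos hn0 _
  have hfin2 : (0:ℝ) < (n:ℝ)^(1-2/b) := Real.rpow_pos_of_pos hn0 _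
  calc |E * ((n:ℝ)^2 * D₀ - ((n:ℝ)+1)^2 * D₁ + (b*β)*J*((n:ℝ)^2 * u₀ - ((n:ℝ)+1)^2 * u₁))|
      ≤ E * (2*C₀*J^2 + (b*β)*J*C₄) * (n:ℝ)^(1-2/b) := hb0'
    _ ≤ (E * (2*C₀*J^2 + (b*β)*J*C₄) + 1) * ((n:ℝ)^(-(1:ℝ)) + (n:ℝ)^(1-2/b)) := by
        have hK : 0 < E * (2*C₀*J^2 + (b*β)*J*C₄) := by positivity
        have hexpand : (E * (2*C₀*J^2 + (b*β)*J*C₄) + 1) * ((n:ℝ)^(-(1:ℝ)) + (n:ℝ)^(1-2/b))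
            = E * (2*C₀*J^2 + (b*β)*J*C₄) * (n:ℝ)^(-(1:ℝ))
              + E * (2*C₀*J^2 + (b*β)*J*C₄) * (n:ℝ)^(1-2/b)
              + (n:ℝ)^(-(1:ℝ)) + (n:ℝ)^(1-2/b) := by ring
        have hpos := mul_pos hK hfin1
        linarith
end

section
/- Let a > 0, 0 < b < 2, S > 0, and set m_n := S·n^α for n ∈ ℕ, with v(r) = exp(-a/(1-r)^b). Then there exist C > 0 and N ∈ ℕ such that for all n ≥ N: | m_{n+1}·log( r_{m_{n+1}} / r_{m_n} ) - (2G/b)·S^{bβ}·n - (G/b)·(3 + 2/b)·S^{bβ} | ≤ C·(n^{-1} + n^{1-2/b}). -/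
open Real


lemma log_one_sub_bound {t : ℝ} (h0 : 0 ≤ t) (h1 : t ≤ 1/2) :
    |Real.log (1 - t) + t + t^2/2| ≤ 2 * t^3 := by
  have habs : |t| < 1 := by rw [abs_of_nonneg h0]; linarith
  have h := Real.abs_log_sub_add_sum_range_le habs 2
  have hsum : (∑ i ∈ Finset.range 2, t ^ (i+1) / ((i:ℝ)+1)) = t + t^2/2 := by
    norm_num [Finset.sum_range_succ]
  rw [hsum, abs_of_nonneg h0] at h
  have h2 : t^(2+1) / (1 - t) ≤ 2*t^3 := by
    rw [div_le_iff₀ (by linarith)]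
    norm_num
    nlinarith [mul_nonneg (pow_nonneg h0 3) (by linarith : (0:ℝ) ≤ 1 - 2*t)]
  have he : Real.log (1-t) + t + t^2/2 = (t + t^2/2) + Real.log (1-t) := by ring
  rw [he]
  exact h.trans h2

lemma log_one_add_bound {x : ℝ} (h0 : 0 ≤ x) (h1 : x ≤ 1/2) :
    |Real.log (1 + x) - x + x^2/2| ≤ 2 * x^3 := by
  have habs : |(-x)| < 1 := by rw [abs_neg, abs_of_nonneg h0]; linarith
  have h := Real.abs_log_sub_add_sum_range_le habs 2
  have hsum : (∑ i ∈ Finset.range 2, (-x) ^ (i+1) / ((i:ℝ)+1)) = -x + x^2/2 := by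
    norm_num [Finset.sum_range_succ]
  rw [hsum, abs_neg, abs_of_nonneg h0] at h
  have h2' : x^(2+1) / (1 - x) ≤ 2*x^3 := by
    rw [div_le_iff₀ (by linarith)]
    norm_num
    nlinarith [mul_nonneg (pow_nonneg h0 3) (by linarith : (0:ℝ) ≤ 1 - 2*x)]
  have he : Real.log (1+x) - x + x^2/2 = (-x + x^2/2) + Real.log (1 - -x) := by
    rw [sub_neg_eq_add]; ring
  rw [he]
  exact h.trans h2'

lemma exp_taylor2_bound {y : ℝ} (h : |y| ≤ 1) :
    |Real.exp y - 1 - y - y^2/2| ≤ |y|^3 := by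
  have h3 := Real.exp_bound h (n := 3) (by norm_num)
  have hsum : (∑ m ∈ Finset.range 3, y ^ m / (m.factorial : ℝ)) = 1 + y + y^2/2 := by
    norm_num [Finset.sum_range_succ, Nat.factorial]
  rw [hsum] at h3
  norm_num [Nat.factorial] at h3
  have he : Real.exp y - 1 - y - y^2/2 = Real.exp y - (1 + y + y^2/2) := by ring
  rw [he]
  refine h3.trans ?_
  have h0 : (0:ℝ) ≤ |y|^3 := by positivity
  linarith

lemma rpow_taylor2_bound {c x : ℝ} (hc : 1 ≤ c) (hx0 : 0 ≤ x) (hx1 : x ≤ 1/2)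
    (hx2 : c * x ≤ 1/2) :
    |(1+x)^c - 1 - c*x - c*(c-1)/2 * x^2| ≤ 10 * c^3 * x^3 := by
  have h1x : (0:ℝ) < 1 + x := by linarith
  have hc0 : (0:ℝ) ≤ c := by linarith
  set L := Real.log (1+x) with hLdef
  have hLb : |L - x + x^2/2| ≤ 2*x^3 := log_one_add_bound hx0 hx1
  have hx3x2 : 2*x^3 ≤ x^2 := by nlinarith [sq_nonneg x]
  have hLx : |L - x| ≤ 3/2 * x^2 := by
    have he : L - x = (L - x + x^2/2) + (- (x^2/2)) := by ring
    rw [he]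
    refine (abs_add_le _ _).trans ?_
    rw [abs_neg, abs_of_nonneg (by positivity : (0:ℝ) ≤ x^2/2)]
    linarith
  have hLabs : |L| ≤ 7/4 * x := by
    have he : L = (L - x) + x := by ring
    rw [he]
    refine (abs_add_le _ _).trans ?_
    rw [abs_of_nonneg hx0]
    nlinarith [sq_nonneg x]
  set y := L * c with hydef
  have hyabs : |y| ≤ 7/4 * (c*x) := by
    rw [hydef, abs_mul, abs_of_nonneg hc0]
    calc |L| * c ≤ (7/4*x) * c := by
          exact mul_le_mul_of_nonneg_right hLabs hc0
      _ = 7/4 * (c*x) := by ring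
  have hy1 : |y| ≤ 1 := by
    refine hyabs.trans ?_; linarith
  have hA : |Real.exp y - 1 - y - y^2/2| ≤ 343/64 * c^3 * x^3 := by
    refine (exp_taylor2_bound hy1).trans ?_
    calc |y|^3 ≤ (7/4*(c*x))^3 := by
          exact pow_le_pow_left₀ (abs_nonneg y) hyabs 3
      _ = 343/64 * c^3 * x^3 := by ring
  have hB : |y - c*x + c*x^2/2| ≤ 2 * c * x^3 := by
    have he : y - c*x + c*x^2/2 = (L - x + x^2/2) * c := by rw [hydef]; ring
    rw [he, abs_mul, abs_of_nonneg hc0]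
    calc |L - x + x^2/2| * c ≤ (2*x^3) * c := mul_le_mul_of_nonneg_right hLb hc0
      _ = 2*c*x^3 := by ring
  have hC : |y^2 - c^2*x^2| ≤ 33/8 * c^2 * x^3 := by
    have he : y^2 - c^2*x^2 = (y - c*x) * (y + c*x) := by ring
    rw [he, abs_mul]
    have h1 : |y - c*x| ≤ 3/2 * c * x^2 := by
      have he2 : y - c*x = (L - x) * c := by rw [hydef]; ring
      rw [he2, abs_mul, abs_of_nonneg hc0]
      calc |L - x| * c ≤ (3/2*x^2) * c := mul_le_mul_of_nonneg_right hLx hc0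
        _ = 3/2 * c * x^2 := by ring
    have h2 : |y + c*x| ≤ 11/4 * (c*x) := by
      refine (abs_add_le _ _).trans ?_
      rw [abs_of_nonneg (by positivity : (0:ℝ) ≤ c*x)]
      linarith
    calc |y - c*x| * |y + c*x| ≤ (3/2*c*x^2) * (11/4*(c*x)) := by
          exact mul_le_mul h1 h2 (abs_nonneg _) (by positivity)
      _ = 33/8 * c^2 * x^3 := by ring
  have key : (1+x)^c - 1 - c*x - c*(c-1)/2*x^2 =
      (Real.exp y - 1 - y - y^2/2) + ((y - c*x + c*x^2/2) + (y^2 - c^2*x^2)/2) := by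
    rw [Real.rpow_def_of_pos h1x, ← hLdef, ← hydef]; ring
  rw [key]
  have hC2 : |(y^2 - c^2*x^2)/2| ≤ 33/16 * c^2 * x^3 := by
    rw [abs_div, abs_two]; linarith
  have hx3 : (0:ℝ) ≤ x^3 := by positivity
  have hcc : c ≤ c^3 := by nlinarith
  have hcc2 : c^2 ≤ c^3 := by nlinarith
  have e1 : 2*c*x^3 ≤ 2*c^3*x^3 := by linarith [mul_le_mul_of_nonneg_right hcc hx3]
  have e2 : 33/16*c^2*x^3 ≤ 33/16*c^3*x^3 := by
    linarith [mul_le_mul_of_nonneg_right hcc2 hx3]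
  have hc3x3 : (0:ℝ) ≤ c^3*x^3 := by positivity
  calc |Real.exp y - 1 - y - y^2/2 + (y - c*x + c*x^2/2 + (y^2 - c^2*x^2)/2)|
      ≤ |Real.exp y - 1 - y - y^2/2| + |y - c*x + c*x^2/2 + (y^2 - c^2*x^2)/2| :=
        abs_add_le _ _
    _ ≤ 343/64*c^3*x^3 + (2*c*x^3 + 33/16*c^2*x^3) :=
        add_le_add hA ((abs_add_le _ _).trans (add_le_add hB hC2))
    _ ≤ 10 * c^3 * x^3 := by linarith

lemma rpow_beta_bound {β t : ℝ} (hβ0 : 0 < β) (hβ1 : β ≤ 1) (h0 : 0 ≤ t) (h1 : t ≤ 1/2) :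
    |(1-t)^β - 1 + β*t| ≤ 5 * t^2 := by
  have h1t : (0:ℝ) < 1 - t := by linarith
  set L := Real.log (1-t) with hLdef
  have hLb : |L + t + t^2/2| ≤ 2*t^3 := log_one_sub_bound h0 h1
  have ht3t2 : 2*t^3 ≤ t^2 := by nlinarith [sq_nonneg t]
  have hLt : |L + t| ≤ 3/2 * t^2 := by
    have he : L + t = (L + t + t^2/2) + (-(t^2/2)) := by ring
    rw [he]
    refine (abs_add_le _ _).trans ?_
    rw [abs_neg, abs_of_nonneg (by positivity : (0:ℝ) ≤ t^2/2)]
    linarith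
  have hLabs : |L| ≤ 7/4 * t := by
    have he : L = (L + t) + (-t) := by ring
    rw [he]
    refine (abs_add_le _ _).trans ?_
    rw [abs_neg, abs_of_nonneg h0]
    nlinarith [sq_nonneg t]
  set y := L * β with hydef
  have hyabs : |y| ≤ 7/4 * t := by
    rw [hydef, abs_mul, abs_of_nonneg hβ0.le]
    calc |L| * β ≤ |L| * 1 := by
          exact mul_le_mul_of_nonneg_left hβ1 (abs_nonneg L)
      _ = |L| := mul_one _
      _ ≤ 7/4 * t := hLabs
  have hy1 : |y| ≤ 1 := hyabs.trans (by linarith)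
  have hA : |Real.exp y - 1 - y| ≤ 49/16 * t^2 := by
    refine (Real.abs_exp_sub_one_sub_id_le hy1).trans ?_
    calc y^2 = |y|^2 := (sq_abs y).symm
      _ ≤ (7/4*t)^2 := pow_le_pow_left₀ (abs_nonneg y) hyabs 2
      _ = 49/16 * t^2 := by ring
  have hB : |y + β*t| ≤ 3/2 * t^2 := by
    have he : y + β*t = (L + t) * β := by rw [hydef]; ring
    rw [he, abs_mul, abs_of_nonneg hβ0.le]
    calc |L + t| * β ≤ |L + t| * 1 := mul_le_mul_of_nonneg_left hβ1 (abs_nonneg _)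
      _ = |L + t| := mul_one _
      _ ≤ 3/2 * t^2 := hLt
  have key : (1-t)^β - 1 + β*t = (Real.exp y - 1 - y) + (y + β*t) := by
    rw [Real.rpow_def_of_pos h1t, ← hLdef, ← hydef]; ring
  rw [key]
  refine (abs_add_le _ _).trans ?_
  nlinarith [sq_nonneg t]

lemma Ekey {a b β G m r : ℝ} (ha : 0 < a) (hb0 : 0 < b)
    (hβ : β = 1/(1+b)) (hG : G = (a*b)^β)
    (hr0 : 0 < r) (hr1 : r < 1) (heq : m * (1-r)^(b+1) = a*b*r) (hm : 0 < m) :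
    1 - r = G * r^β / m^β := by
  have hb1 : (0:ℝ) < 1 + b := by linarith
  have hE0 : (0:ℝ) < 1 - r := by linarith
  have hpow : ((1-r)^(b+1))^β = 1 - r := by
    rw [← Real.rpow_mul hE0.le]
    have : (b+1)*β = 1 := by rw [hβ]; field_simp; ring
    rw [this, Real.rpow_one]
  have heq2 : (1-r)^(b+1) = a*b*r/m := by
    field_simp at heq ⊢; linarith
  rw [heq2] at hpow
  rw [← hpow, Real.div_rpow (by positivity) hm.le, Real.mul_rpow (by positivity) hr0.le, hG]

lemma Emono {a b : ℝ} (ha : 0 < a) (hb0 : 0 < b) {m m' r r' : ℝ}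
    (hr0 : 0 < r) (hr1 : r < 1) (hr0' : 0 < r') (hr1' : r' < 1)
    (heq : m * (1-r)^(b+1) = a*b*r) (heq' : m' * (1-r')^(b+1) = a*b*r')
    (hm : 0 < m) (hmm' : m ≤ m') : r ≤ r' := by
  by_contra hcon
  push_neg at hcon
  have h1 : (1-r)^(b+1) < (1-r')^(b+1) :=
    Real.rpow_lt_rpow (by linarith) (by linarith) (by linarith)
  have hp : (0:ℝ) < (1-r)^(b+1) := Real.rpow_pos_of_pos (by linarith) _
  have h2 : m * (1-r)^(b+1) ≤ m' * (1-r)^(b+1) := by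
    exact mul_le_mul_of_nonneg_right hmm' hp.le
  have h3 : m' * (1-r)^(b+1) < m' * (1-r')^(b+1) := by
    exact mul_lt_mul_of_pos_left h1 (lt_of_lt_of_le hm hmm')
  have h4 : a*b*r' < a*b*r := by
    have := mul_lt_mul_of_pos_left hcon (by positivity : (0:ℝ) < a*b)
    linarith
  rw [heq] at h2; rw [heq'] at h3; linarith

lemma Ebounds {β g E : ℝ} (hβ0 : 0 < β) (hβ1 : β ≤ 1) (hg : 0 < g)
    (hE0 : 0 < E) (hE1 : E < 1) (hid : E = g * (1-E)^β) :
    E ≤ g ∧ |E - g| ≤ g^2 ∧ (E ≤ 1/2 → |E - g + β*g^2| ≤ 6*g^3) := by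
  have h1E : (0:ℝ) < 1 - E := by linarith
  have h1 : (1-E)^β ≤ 1 := Real.rpow_le_one h1E.le (by linarith) hβ0.le
  have h1' : (0:ℝ) ≤ (1-E)^β := (Real.rpow_pos_of_pos h1E β).le
  have h2 : 1 - E ≤ (1-E)^β := by
    have := Real.rpow_le_rpow_of_exponent_ge h1E (by linarith) hβ1
    rwa [Real.rpow_one] at this
  have hup : E ≤ g := by
    calc E = g * (1-E)^β := hid
      _ ≤ g * 1 := mul_le_mul_of_nonneg_left h1 hg.le
      _ = g := mul_one g
  have hs : E - g = -(g*(1-(1-E)^β)) := by linear_combination hid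
  have habs1 : |E - g| ≤ g^2 := by
    rw [hs, abs_neg, abs_of_nonneg (mul_nonneg hg.le (by linarith))]
    have e1 : g*(1-(1-E)^β) ≤ g*E := mul_le_mul_of_nonneg_left (by linarith) hg.le
    have e2 : g*E ≤ g*g := mul_le_mul_of_nonneg_left hup hg.le
    nlinarith
  refine ⟨hup, habs1, fun hhalf => ?_⟩
  have hR : |(1-E)^β - 1 + β*E| ≤ 5*E^2 := rpow_beta_bound hβ0 hβ1 hE0.le hhalf
  have keyid : E - g + β*g^2 = g*((1-E)^β - 1 + β*E) + β*g*(g - E) := by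
    linear_combination hid
  rw [keyid]
  refine (abs_add_le _ _).trans ?_
  have hE2 : E^2 ≤ g^2 := pow_le_pow_left₀ hE0.le hup 2
  have b1 : |g*((1-E)^β - 1 + β*E)| ≤ 5*g^3 := by
    rw [abs_mul, abs_of_nonneg hg.le]
    calc g * |(1-E)^β - 1 + β*E| ≤ g * (5*E^2) :=
          mul_le_mul_of_nonneg_left hR hg.le
      _ ≤ g * (5*g^2) := by nlinarith
      _ = 5*g^3 := by ring
  have b2 : |β*g*(g - E)| ≤ g^3 := by
    rw [abs_mul, abs_sub_comm, abs_of_nonneg (mul_nonneg hβ0.le hg.le)]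
    calc β*g*|E - g| ≤ β*g*g^2 := by
          exact mul_le_mul_of_nonneg_left habs1 (mul_nonneg hβ0.le hg.le)
      _ ≤ 1*g*g^2 := by nlinarith [mul_nonneg (by linarith : (0:ℝ) ≤ 1 - β) (by positivity : (0:ℝ) ≤ g*g^2)]
      _ = g^3 := by ring
  linarith

lemma mainA {c : ℝ} (hc : 1 < c) :
    ∃ CA : ℝ, 0 < CA ∧ ∃ NA : ℕ, 1 ≤ NA ∧ ∀ n : ℕ, NA ≤ n →
      |((n:ℝ)+1)^2 * ((1 + ((n:ℝ))⁻¹)^c - 1) - c*(n:ℝ) - 2*c - c*(c-1)/2|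
        ≤ CA * ((n:ℝ))⁻¹ := by
  refine ⟨c + 3/2*c*(c-1) + 40*c^3, by nlinarith [mul_pos (by linarith : (0:ℝ) < c) (by linarith : (0:ℝ) < c - 1), pow_pos (by linarith : (0:ℝ) < c) 3],
    max 2 ⌈2*c⌉₊, le_trans (by norm_num) (le_max_left _ _), fun n hn => ?_⟩
  have hn2 : 2 ≤ n := le_trans (le_max_left _ _) hn
  have hnc : (2*c:ℝ) ≤ n := by
    have h1 : (⌈2*c⌉₊:ℝ) ≤ n := by
      exact_mod_cast Nat.cast_le.mpr (le_trans (le_max_right _ _) hn)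
    exact le_trans (Nat.le_ceil _) h1
  have hX1 : (1:ℝ) ≤ (n:ℝ) := by
    have : ((2:ℕ):ℝ) ≤ (n:ℝ) := by exact_mod_cast hn2
    linarith [this]
  have hX0 : (0:ℝ) < (n:ℝ) := by linarith
  have hXne : (n:ℝ) ≠ 0 := ne_of_gt hX0
  set x : ℝ := ((n:ℝ))⁻¹ with hxdef
  have hx0 : 0 < x := by positivity
  have hnx : (n:ℝ) * x = 1 := mul_inv_cancel₀ hXne
  have hx1 : x ≤ 1/2 := by
    have h2n : (2:ℝ) ≤ (n:ℝ) := by exact_mod_cast hn2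
    rw [hxdef]
    rw [inv_le_comm₀ hX0 (by norm_num : (0:ℝ) < 1/2)]
    linarith
  have hcx : c * x ≤ 1/2 := by
    rw [hxdef, show c * ((n:ℝ))⁻¹ = c / n by ring, div_le_iff₀ hX0]
    linarith
  have hθ := rpow_taylor2_bound hc.le hx0.le hx1 hcx
  have key : ((n:ℝ)+1)^2 * ((1 + x)^c - 1) - c*(n:ℝ) - 2*c - c*(c-1)/2
      = ((n:ℝ)+1)^2 * ((1+x)^c - 1 - c*x - c*(c-1)/2 * x^2)
        + (c*x + c*(c-1)*x + c*(c-1)/2*x^2) := by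
    linear_combination (c*((n:ℝ)+2) + c*(c-1)/2*((n:ℝ)*x + 1 + 2*x)) * hnx
  have hA3 : |((n:ℝ)+1)^2 * ((1+x)^c - 1 - c*x - c*(c-1)/2 * x^2)| ≤ 40*c^3*x := by
    rw [abs_mul, abs_of_nonneg (by positivity : (0:ℝ) ≤ ((n:ℝ)+1)^2)]
    calc ((n:ℝ)+1)^2 * |(1+x)^c - 1 - c*x - c*(c-1)/2 * x^2|
        ≤ (2*(n:ℝ))^2 * (10*c^3*x^3) := by
          refine mul_le_mul (by nlinarith) hθ (abs_nonneg _) (by positivity)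
      _ = 40*c^3*x*((n:ℝ)*x)^2 := by ring
      _ = 40*c^3*x := by rw [hnx]; ring
  have hP2nn : (0:ℝ) ≤ c*x + c*(c-1)*x + c*(c-1)/2*x^2 := by
    nlinarith [mul_nonneg (by linarith : (0:ℝ) ≤ c) hx0.le,
      mul_nonneg (mul_nonneg (by linarith : (0:ℝ) ≤ c) (by linarith : (0:ℝ) ≤ c - 1)) hx0.le,
      mul_nonneg (mul_nonneg (by linarith : (0:ℝ) ≤ c) (by linarith : (0:ℝ) ≤ c - 1)) (sq_nonneg x)]
  have hP2 : c*x + c*(c-1)*x + c*(c-1)/2*x^2 ≤ (c + 3/2*c*(c-1))*x := by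
    nlinarith [mul_nonneg (by nlinarith : (0:ℝ) ≤ c*(c-1)/2)
      (by nlinarith : (0:ℝ) ≤ x - x^2)]
  rw [key]
  calc |((n:ℝ)+1)^2 * ((1+x)^c - 1 - c*x - c*(c-1)/2 * x^2)
        + (c*x + c*(c-1)*x + c*(c-1)/2*x^2)|
      ≤ |((n:ℝ)+1)^2 * ((1+x)^c - 1 - c*x - c*(c-1)/2 * x^2)|
        + |c*x + c*(c-1)*x + c*(c-1)/2*x^2| := abs_add_le _ _
    _ ≤ 40*c^3*x + (c + 3/2*c*(c-1))*x := by
        rw [abs_of_nonneg hP2nn]; exact add_le_add hA3 hP2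
    _ = (c + 3/2*c*(c-1) + 40*c^3) * x := by ring

lemma auxA {E E' : ℝ} (h0 : 0 ≤ E') (h : E' ≤ E) : (0:ℝ) ≤ (E^2 - E'^2)/2 := by nlinarith
lemma auxB {E E' g : ℝ} (h0 : 0 ≤ E') (h1 : E' ≤ E) (h2 : E ≤ g) :
    (E^2 - E'^2)/2 ≤ g*(E - E') := by
  nlinarith [sq_nonneg (E - E'), mul_le_mul_of_nonneg_right h2 (by linarith : (0:ℝ) ≤ E - E')]
lemma auxC {β g g' E E' δ δ' : ℝ} (h1 : E - E' = (g - g') - β*(g^2 - g'^2) + (δ - δ'))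
    (h2 : δ ≤ 6*g^3) (h3 : -(6*g'^3) ≤ δ') (h4 : g'^3 ≤ g^3) (h5 : 0 ≤ β*(g^2 - g'^2)) :
    E - E' ≤ (g - g') + 12*g^3 := by linarith

set_option maxHeartbeats 1000000 in
theorem stmt_14
    (a b : ℝ) (ha : 0 < a) (hb0 : 0 < b) (hb2 : b < 2)
    (S : ℝ) (hS : 0 < S)
    (α β G : ℝ) (hα : α = 2 + 2 / b) (hβ : β = 1 / (1 + b)) (hG : G = (a * b) ^ β)
    (rr : ℝ → ℝ)
    (hrr : ∀ m : ℝ, 0 < m → rr m ∈ Set.Ioo (0:ℝ) 1 ∧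
      m * (1 - rr m) ^ (b + 1) = a * b * rr m)
    (mm : ℕ → ℝ) (hmm : ∀ n : ℕ, mm n = S * (n : ℝ) ^ α) :
    ∃ C : ℝ, 0 < C ∧ ∃ N : ℕ, ∀ n : ℕ, N ≤ n →
      |mm (n+1) * Real.log (rr (mm (n+1)) / rr (mm n)) -
        (2 * G / b) * S ^ (b * β) * (n : ℝ) -
        (G / b) * (3 + 2 / b) * S ^ (b * β)| ≤
      C * ((n : ℝ) ^ (-(1:ℝ)) + (n : ℝ) ^ (1 - 2 / b)) := by
  have hb1 : (0:ℝ) < 1 + b := by linarith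
  have hbne : b ≠ 0 := ne_of_gt hb0
  have hb1ne : (1:ℝ) + b ≠ 0 := ne_of_gt hb1
  have hβ0 : 0 < β := by rw [hβ]; positivity
  have hβ1 : β ≤ 1 := by rw [hβ, div_le_one hb1]; linarith
  have hG0 : 0 < G := by rw [hG]; exact Real.rpow_pos_of_pos (by positivity) β
  have hSbβ : (0:ℝ) < S^(b*β) := Real.rpow_pos_of_pos hS _
  set c : ℝ := 2/b with hcdef
  have hc1 : 1 < c := by rw [hcdef, lt_div_iff₀ hb0]; linarith
  have hc0 : 0 < c := by linarith
  have hα0 : 0 < α := by rw [hα]; linarith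
  have hαβ : α * β = c := by rw [hα, hβ, hcdef]; field_simp; ring
  have hbβ1 : b*β + β = 1 := by rw [hβ]; field_simp; ring
  set Q : ℝ := S^β with hQdef
  have hQ0 : 0 < Q := Real.rpow_pos_of_pos hS β
  have hGQS : G/Q*S = G*S^(b*β) := by
    have h1 : S^(b*β) * Q = S := by
      rw [hQdef, ← Real.rpow_add hS, hbβ1, Real.rpow_one]
    have h2 : G/Q*S*Q = G*S := by field_simp
    have h3 : G*S^(b*β)*Q = G*S := by rw [mul_assoc, h1]
    exact mul_right_cancel₀ hQ0.ne' (h2.trans h3.symm)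
  obtain ⟨CA, hCA0, NA, hNA1, hmainA⟩ := mainA hc1
  set CB : ℝ := 3*c + c*(c-1)/2 + CA with hCBdef
  have hCB0 : 0 < CB := by
    rw [hCBdef]
    linarith [mul_pos hc0 (by linarith : (0:ℝ) < c - 1)]
  obtain ⟨N₀, hN₀⟩ := exists_nat_ge ((2*G/Q)^(c⁻¹))
  have h2α0 : (0:ℝ) < 2^α := Real.rpow_pos_of_pos (by norm_num) α
  set K2 : ℝ := 2*G^2*S^(b*β)*CB/Q with hK2def
  set K3 : ℝ := 12*(G^3*S*2^α/Q^3) with hK3def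
  set K4 : ℝ := G^2*S^(b*β)*CB/Q + 6*(G^3*S*2^α/Q^3) with hK4def
  set K5 : ℝ := 4*(G^3*S*2^α/Q^3) with hK5def
  have hB30 : (0:ℝ) < G^3*S*2^α/Q^3 :=
    div_pos (mul_pos (mul_pos (pow_pos hG0 3) hS) h2α0) (pow_pos hQ0 3)
  have hK20 : 0 < K2 := by
    rw [hK2def]
    exact div_pos (mul_pos (mul_pos (mul_pos (by norm_num) (pow_pos hG0 2)) hSbβ) hCB0) hQ0
  have hK30 : 0 < K3 := by rw [hK3def]; linarith
  have hK40 : 0 < K4 := by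
    rw [hK4def]
    have := div_pos (mul_pos (mul_pos (pow_pos hG0 2) hSbβ) hCB0) hQ0
    linarith
  have hK50 : 0 < K5 := by rw [hK5def]; linarith
  have hCmain0 : 0 < G*S^(b*β)*CA := mul_pos (mul_pos hG0 hSbβ) hCA0
  refine ⟨G*S^(b*β)*CA + K2 + K3 + K4 + K5, by linarith, max (max NA N₀) 1, fun n hn => ?_⟩
  have hnNA : NA ≤ n := le_trans (le_trans (le_max_left _ _) (le_max_left _ _)) hn
  have hnN₀ : N₀ ≤ n := le_trans (le_trans (le_max_right _ _) (le_max_left _ _)) hn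
  have hn1 : 1 ≤ n := le_trans (le_max_right _ _) hn
  set X : ℝ := (n:ℝ) with hXdef
  have hX1 : (1:ℝ) ≤ X := by rw [hXdef]; exact_mod_cast hn1
  have hX0 : (0:ℝ) < X := by linarith
  set X1 : ℝ := X + 1 with hX1def
  have hX10 : (0:ℝ) < X1 := by rw [hX1def]; linarith
  have hX12 : X1 ≤ 2*X := by rw [hX1def]; linarith
  have hXX1 : X ≤ X1 := by rw [hX1def]; linarith
  set u : ℝ := X^c with hudef
  set u' : ℝ := X1^c with hu'def
  have hu0 : 0 < u := Real.rpow_pos_of_pos hX0 c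
  have hu'0 : 0 < u' := Real.rpow_pos_of_pos hX10 c
  have huu' : u ≤ u' := Real.rpow_le_rpow hX0.le hXX1 hc0.le
  have hmeq : mm n = S * X^α := by rw [hmm n, hXdef]
  have hm'eq : mm (n+1) = S * X1^α := by
    rw [hmm (n+1), hX1def, hXdef]
    push_cast
    ring_nf
  have hm0 : 0 < mm n := by rw [hmeq]; exact mul_pos hS (Real.rpow_pos_of_pos hX0 α)
  have hm'0 : 0 < mm (n+1) := by
    rw [hm'eq]; exact mul_pos hS (Real.rpow_pos_of_pos hX10 α)
  have hmle : mm n ≤ mm (n+1) := by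
    rw [hmeq, hm'eq]
    exact mul_le_mul_of_nonneg_left (Real.rpow_le_rpow hX0.le hXX1 hα0.le) hS.le
  obtain ⟨⟨hr0, hr1⟩, heq⟩ := hrr (mm n) hm0
  obtain ⟨⟨hr'0, hr'1⟩, heq'⟩ := hrr (mm (n+1)) hm'0
  have hrmono : rr (mm n) ≤ rr (mm (n+1)) :=
    Emono ha hb0 hr0 hr1 hr'0 hr'1 heq heq' hm0 hmle
  set E : ℝ := 1 - rr (mm n) with hEdef
  set E' : ℝ := 1 - rr (mm (n+1)) with hE'def
  have hrE : rr (mm n) = 1 - E := by rw [hEdef]; ring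
  have hrE' : rr (mm (n+1)) = 1 - E' := by rw [hE'def]; ring
  have hE0 : 0 < E := by rw [hEdef]; linarith
  have hE1 : E < 1 := by rw [hEdef]; linarith
  have hE'0 : 0 < E' := by rw [hE'def]; linarith
  have hE'1 : E' < 1 := by rw [hE'def]; linarith
  have hE'E : E' ≤ E := by rw [hEdef, hE'def]; linarith
  set g : ℝ := G/(Q*u) with hgdef
  set g' : ℝ := G/(Q*u') with hg'def
  have hg0 : 0 < g := div_pos hG0 (mul_pos hQ0 hu0)
  have hg'0 : 0 < g' := div_pos hG0 (mul_pos hQ0 hu'0)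
  have hg'g : g' ≤ g := by
    rw [hgdef, hg'def, div_le_div_iff₀ (mul_pos hQ0 hu'0) (mul_pos hQ0 hu0)]
    exact mul_le_mul_of_nonneg_left (mul_le_mul_of_nonneg_left huu' hQ0.le) hG0.le
  have hmβ : (mm n)^β = Q*u := by
    rw [hQdef, hudef, hmeq, Real.mul_rpow hS.le (Real.rpow_nonneg hX0.le α),
      ← Real.rpow_mul hX0.le, hαβ]
  have hm'β : (mm (n+1))^β = Q*u' := by
    rw [hQdef, hu'def, hm'eq, Real.mul_rpow hS.le (Real.rpow_nonneg hX10.le α),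
      ← Real.rpow_mul hX10.le, hαβ]
  have hEk := Ekey ha hb0 hβ hG hr0 hr1 heq hm0
  rw [hmβ, hrE] at hEk
  have hid : E = g * (1-E)^β := by rw [hgdef]; linear_combination hEk
  have hEk' := Ekey ha hb0 hβ hG hr'0 hr'1 heq' hm'0
  rw [hm'β, hrE'] at hEk'
  have hid' : E' = g' * (1-E')^β := by rw [hg'def]; linear_combination hEk'
  obtain ⟨hEg, hEabs1, hEd⟩ := Ebounds hβ0 hβ1 hg0 hE0 hE1 hid
  obtain ⟨hE'g, hE'abs1, hE'd⟩ := Ebounds hβ0 hβ1 hg'0 hE'0 hE'1 hid'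
  -- g ≤ 1/2
  have hXN₀ : (2*G/Q)^(c⁻¹) ≤ X := by
    refine le_trans hN₀ ?_
    rw [hXdef]
    exact_mod_cast hnN₀
  have h2GQ : 2*G/Q ≤ u := by
    have h1 : ((2*G/Q)^(c⁻¹))^c ≤ X^c :=
      Real.rpow_le_rpow (Real.rpow_nonneg (by positivity) _) hXN₀ hc0.le
    rw [Real.rpow_inv_rpow (by positivity) hc0.ne'] at h1
    rw [hudef]; exact h1
  have hghalf : g ≤ 1/2 := by
    rw [hgdef, div_le_iff₀ (mul_pos hQ0 hu0)]
    rw [div_le_iff₀ hQ0] at h2GQ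
    linarith
  have hg'half : g' ≤ 1/2 := le_trans hg'g hghalf
  have hEhalf : E ≤ 1/2 := le_trans hEg hghalf
  have hE'half : E' ≤ 1/2 := le_trans hE'g hg'half
  have hδraw : |E - g + β*g^2| ≤ 6*g^3 := hEd hEhalf
  have hδ'raw : |E' - g' + β*g'^2| ≤ 6*g'^3 := hE'd hE'half
  set δ : ℝ := E - g + β*g^2 with hδdef
  set δ' : ℝ := E' - g' + β*g'^2 with hδ'def
  have hρraw : |Real.log (1 - E) + E + E^2/2| ≤ 2*E^3 := log_one_sub_bound hE0.le hEhalf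
  have hρ'raw : |Real.log (1 - E') + E' + E'^2/2| ≤ 2*E'^3 := log_one_sub_bound hE'0.le hE'half
  set ρ : ℝ := Real.log (1 - E) + E + E^2/2 with hρdef
  set ρ' : ℝ := Real.log (1 - E') + E' + E'^2/2 with hρ'def
  have e3 : Real.log (rr (mm n)) = -E - E^2/2 + ρ := by
    rw [hrE, hρdef]; ring
  have e4 : Real.log (rr (mm (n+1))) = -E' - E'^2/2 + ρ' := by
    rw [hrE', hρ'def]; ring
  have hlogdiv : Real.log (rr (mm (n+1)) / rr (mm n)) =
      Real.log (rr (mm (n+1))) - Real.log (rr (mm n)) := Real.log_div hr'0.ne' hr0.ne'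
  -- main asymptotic term
  have hAb := hmainA n hnNA
  rw [← hXdef, ← hX1def] at hAb
  set A : ℝ := X1^2 * ((1 + X⁻¹)^c - 1) with hAdef
  have hu'inv : (1 + X⁻¹)^c = u' * u⁻¹ := by
    have h1 : (1:ℝ) + X⁻¹ = X1/X := by rw [hX1def]; field_simp
    rw [h1, Real.div_rpow hX10.le hX0.le, div_eq_mul_inv, hudef, hu'def]
  have hX1αsplit : X1^α = X1^2 * u' := by
    rw [hu'def, hα, Real.rpow_add hX10, Real.rpow_two]
  have KeyM : (S*X1^α)*(g - g') = G*S^(b*β)*A := by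
    rw [hAdef, hgdef, hg'def, hX1αsplit]
    calc (S*(X1^2*u'))*(G/(Q*u) - G/(Q*u'))
        = (G/Q*S)*(X1^2*(u'*u⁻¹ - u'*u'⁻¹)) := by
          field_simp
      _ = (G*S^(b*β))*(X1^2*((1 + X⁻¹)^c - 1)) := by
          rw [hGQS, mul_inv_cancel₀ hu'0.ne', ← hu'inv]
      _ = G*S^(b*β)*(X1^2*((1 + X⁻¹)^c - 1)) := by ring
  have hconst : G*S^(b*β)*(c*X + 2*c + c*(c-1)/2)
      = 2*G/b*S^(b*β)*X + G/b*(3+c)*S^(b*β) := by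
    rw [hcdef]; field_simp; ring
  -- grand decomposition
  have grand : mm (n+1) * Real.log (rr (mm (n+1)) / rr (mm n)) -
      2*G/b*S^(b*β)*X - G/b*(3+c)*S^(b*β)
      = G*S^(b*β)*(A - c*X - 2*c - c*(c-1)/2)
        - (S*X1^α)*(β*(g^2 - g'^2)) + (S*X1^α)*(δ - δ')
        + (S*X1^α)*((E^2 - E'^2)/2) + (S*X1^α)*(ρ' - ρ) := by
    linear_combination (Real.log (rr (mm (n+1)) / rr (mm n)))*hm'eq
      + (S*X1^α)*hlogdiv + (S*X1^α)*e4 - (S*X1^α)*e3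
      - (S*X1^α)*hδdef + (S*X1^α)*hδ'def + KeyM + hconst
  -- bounds
  have hM'0 : (0:ℝ) ≤ S*X1^α := (mul_pos hS (Real.rpow_pos_of_pos hX10 α)).le
  have hXinv0 : (0:ℝ) < X⁻¹ := by positivity
  have hXinv1 : X⁻¹ ≤ 1 := by
    rw [inv_le_comm₀ hX0 one_pos]
    simpa using hX1
  have hZ0 : (0:ℝ) < X^((1:ℝ)-c) := Real.rpow_pos_of_pos hX0 _
  have hX1c : X^((1:ℝ)-c) = X*u⁻¹ := by
    rw [hudef, Real.rpow_sub hX0, Real.rpow_one, div_eq_mul_inv]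
  have hgX : g*X = (G/Q)*X^((1:ℝ)-c) := by
    rw [hgdef, hX1c]
    field_simp
  have hAle : A ≤ CB*X := by
    have h1 := (abs_le.mp hAb).2
    rw [hCBdef]
    linarith [mul_le_mul_of_nonneg_left (le_trans hXinv1 hX1) hCA0.le,
      mul_nonneg (mul_nonneg hc0.le (by linarith : (0:ℝ) ≤ c-1)) (by linarith : (0:ℝ) ≤ X - 1),
      mul_nonneg hc0.le (by linarith : (0:ℝ) ≤ X - 1)]
  have hgg'0 : (0:ℝ) ≤ g - g' := by linarith
  have hm'gg' : (S*X1^α)*(g - g') ≤ G*S^(b*β)*(CB*X) := by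
    rw [KeyM]
    exact mul_le_mul_of_nonneg_left hAle (mul_pos hG0 hSbβ).le
  have hX1α2 : X1^α ≤ 2^α * X^α := by
    have h1 := Real.rpow_le_rpow hX10.le hX12 hα0.le
    rwa [Real.mul_rpow (by norm_num) hX0.le] at h1
  have hXau3 : X^α/u^3 ≤ X^((1:ℝ)-c) := by
    have h1 : u^3 = X^(c*3) := by
      rw [hudef, ← Real.rpow_natCast (X^c) 3, ← Real.rpow_mul hX0.le]
      norm_num
    rw [h1, ← Real.rpow_sub hX0]
    exact Real.rpow_le_rpow_of_exponent_le hX1 (by rw [hα]; linarith)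
  have hm'g3 : (S*X1^α)*g^3 ≤ (G^3*S*2^α/Q^3)*X^((1:ℝ)-c) := by
    calc (S*X1^α)*g^3 = (S*G^3/Q^3)*(X1^α*(u^3)⁻¹) := by
          rw [hgdef]; field_simp
      _ ≤ (S*G^3/Q^3)*((2^α*X^α)*(u^3)⁻¹) := by
          refine mul_le_mul_of_nonneg_left
            (mul_le_mul_of_nonneg_right hX1α2 (by positivity)) ?_
          exact (div_nonneg (mul_nonneg hS.le (pow_nonneg hG0.le 3)) (pow_nonneg hQ0.le 3))
      _ = (G^3*S*2^α/Q^3)*(X^α/u^3) := by ring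
      _ ≤ (G^3*S*2^α/Q^3)*X^((1:ℝ)-c) := mul_le_mul_of_nonneg_left hXau3 hB30.le
  have hg3nn : (0:ℝ) ≤ (S*X1^α)*g^3 := mul_nonneg hM'0 (pow_nonneg hg0.le 3)
  -- b1
  have b1 : |G*S^(b*β)*(A - c*X - 2*c - c*(c-1)/2)| ≤ (G*S^(b*β)*CA)*X⁻¹ := by
    rw [abs_mul, abs_of_nonneg (mul_pos hG0 hSbβ).le]
    calc G*S^(b*β)*|A - c*X - 2*c - c*(c-1)/2| ≤ G*S^(b*β)*(CA*X⁻¹) := by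
          exact mul_le_mul_of_nonneg_left hAb (mul_pos hG0 hSbβ).le
      _ = (G*S^(b*β)*CA)*X⁻¹ := by ring
  -- b2
  have hg2nn : (0:ℝ) ≤ β*(g^2 - g'^2) := by
    have h := pow_le_pow_left₀ hg'0.le hg'g 2
    exact mul_nonneg hβ0.le (by linarith)
  have hg2le : β*(g^2 - g'^2) ≤ 2*g*(g - g') := by
    have hinner : (0:ℝ) ≤ 2*g - β*(g+g') := by
      linarith [mul_le_mul_of_nonneg_right hβ1 (by linarith : (0:ℝ) ≤ g + g')]
    linarith [mul_nonneg hgg'0 hinner]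
  have b2 : |(S*X1^α)*(β*(g^2 - g'^2))| ≤ K2*X^((1:ℝ)-c) := by
    rw [abs_mul, abs_of_nonneg hM'0, abs_of_nonneg hg2nn]
    calc (S*X1^α)*(β*(g^2 - g'^2)) ≤ (S*X1^α)*(2*g*(g - g')) := by
          exact mul_le_mul_of_nonneg_left hg2le hM'0
      _ = 2*g*((S*X1^α)*(g - g')) := by ring
      _ ≤ 2*g*(G*S^(b*β)*(CB*X)) := by
          exact mul_le_mul_of_nonneg_left hm'gg' (by linarith)
      _ = 2*G*S^(b*β)*CB*(g*X) := by ring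
      _ = 2*G*S^(b*β)*CB*((G/Q)*X^((1:ℝ)-c)) := by rw [hgX]
      _ = K2*X^((1:ℝ)-c) := by rw [hK2def]; field_simp
  -- b3
  have hδg : |δ - δ'| ≤ 12*g^3 := by
    have h1 := abs_sub δ δ'
    have h2 : g'^3 ≤ g^3 := pow_le_pow_left₀ hg'0.le hg'g 3
    linarith
  have b3 : |(S*X1^α)*(δ - δ')| ≤ K3*X^((1:ℝ)-c) := by
    rw [abs_mul, abs_of_nonneg hM'0]
    calc (S*X1^α)*|δ - δ'| ≤ (S*X1^α)*(12*g^3) := by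
          exact mul_le_mul_of_nonneg_left hδg hM'0
      _ = 12*((S*X1^α)*g^3) := by ring
      _ ≤ 12*((G^3*S*2^α/Q^3)*X^((1:ℝ)-c)) := by linarith
      _ = K3*X^((1:ℝ)-c) := by rw [hK3def]; ring
  -- b4
  have hE2nn : (0:ℝ) ≤ (E^2 - E'^2)/2 := auxA hE'0.le hE'E
  have hEE' : E - E' ≤ (g - g') + 12*g^3 := by
    have h1 : E - E' = (g - g') - β*(g^2 - g'^2) + (δ - δ') := by
      rw [hδdef, hδ'def]; ring
    have h2 : δ ≤ 6*g^3 := (abs_le.mp hδraw).2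
    have h3 : -(6*g'^3) ≤ δ' := (abs_le.mp hδ'raw).1
    have h4 : g'^3 ≤ g^3 := pow_le_pow_left₀ hg'0.le hg'g 3
    exact auxC h1 h2 h3 h4 hg2nn
  have hstep4 : (E^2 - E'^2)/2 ≤ g*((g - g') + 12*g^3) := by
    have e1 : (E^2 - E'^2)/2 ≤ g*(E - E') := auxB hE'0.le hE'E hEg
    have e2 : g*(E - E') ≤ g*((g - g') + 12*g^3) :=
      mul_le_mul_of_nonneg_left hEE' hg0.le
    exact le_trans e1 e2
  have b4 : |(S*X1^α)*((E^2 - E'^2)/2)| ≤ K4*X^((1:ℝ)-c) := by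
    rw [abs_mul, abs_of_nonneg hM'0, abs_of_nonneg hE2nn]
    calc (S*X1^α)*((E^2 - E'^2)/2) ≤ (S*X1^α)*(g*((g - g') + 12*g^3)) := by
          exact mul_le_mul_of_nonneg_left hstep4 hM'0
      _ = g*((S*X1^α)*(g - g')) + 12*g*((S*X1^α)*g^3) := by ring
      _ ≤ g*(G*S^(b*β)*(CB*X)) + 6*((G^3*S*2^α/Q^3)*X^((1:ℝ)-c)) := by
          have h1 : g*((S*X1^α)*(g - g')) ≤ g*(G*S^(b*β)*(CB*X)) :=
            mul_le_mul_of_nonneg_left hm'gg' hg0.le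
          have h2 : 12*g*((S*X1^α)*g^3) ≤ 6*((G^3*S*2^α/Q^3)*X^((1:ℝ)-c)) := by
            have h3 : 12*g ≤ 6 := by linarith
            calc 12*g*((S*X1^α)*g^3) ≤ 6*((S*X1^α)*g^3) := by
                  exact mul_le_mul_of_nonneg_right h3 hg3nn
              _ ≤ 6*((G^3*S*2^α/Q^3)*X^((1:ℝ)-c)) := by
                  exact mul_le_mul_of_nonneg_left hm'g3 (by norm_num)
          exact add_le_add h1 h2
      _ = G*S^(b*β)*CB*(g*X) + 6*((G^3*S*2^α/Q^3)*X^((1:ℝ)-c)) := by ring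
      _ = G*S^(b*β)*CB*((G/Q)*X^((1:ℝ)-c)) + 6*((G^3*S*2^α/Q^3)*X^((1:ℝ)-c)) := by rw [hgX]
      _ = K4*X^((1:ℝ)-c) := by rw [hK4def]; field_simp
  -- b5
  have hρg : |ρ' - ρ| ≤ 4*g^3 := by
    have h1 := abs_sub ρ' ρ
    have h2 : E'^3 ≤ E^3 := pow_le_pow_left₀ hE'0.le hE'E 3
    have h3 : E^3 ≤ g^3 := pow_le_pow_left₀ hE0.le hEg 3
    linarith
  have b5 : |(S*X1^α)*(ρ' - ρ)| ≤ K5*X^((1:ℝ)-c) := by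
    rw [abs_mul, abs_of_nonneg hM'0]
    calc (S*X1^α)*|ρ' - ρ| ≤ (S*X1^α)*(4*g^3) := by
          exact mul_le_mul_of_nonneg_left hρg hM'0
      _ = 4*((S*X1^α)*g^3) := by ring
      _ ≤ 4*((G^3*S*2^α/Q^3)*X^((1:ℝ)-c)) := by linarith
      _ = K5*X^((1:ℝ)-c) := by rw [hK5def]; ring
  -- final assembly
  have habs2 := abs_add_le (G*S^(b*β)*(A - c*X - 2*c - c*(c-1)/2)
      - (S*X1^α)*(β*(g^2 - g'^2)) + (S*X1^α)*(δ - δ')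
      + (S*X1^α)*((E^2 - E'^2)/2)) ((S*X1^α)*(ρ' - ρ))
  have habs3 := abs_add_le (G*S^(b*β)*(A - c*X - 2*c - c*(c-1)/2)
      - (S*X1^α)*(β*(g^2 - g'^2)) + (S*X1^α)*(δ - δ'))
      ((S*X1^α)*((E^2 - E'^2)/2))
  have habs4 := abs_add_le (G*S^(b*β)*(A - c*X - 2*c - c*(c-1)/2)
      - (S*X1^α)*(β*(g^2 - g'^2))) ((S*X1^α)*(δ - δ'))
  have habs5 := abs_sub (G*S^(b*β)*(A - c*X - 2*c - c*(c-1)/2))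
      ((S*X1^α)*(β*(g^2 - g'^2)))
  have hXm1 : X^(-(1:ℝ)) = X⁻¹ := Real.rpow_neg_one X
  have hh1 : (0:ℝ) ≤ (G*S^(b*β)*CA)*X^((1:ℝ)-c) := (mul_pos hCmain0 hZ0).le
  have hh2 : (0:ℝ) ≤ (K2+K3+K4+K5)*X⁻¹ :=
    (mul_pos (by linarith : (0:ℝ) < K2 + K3 + K4 + K5) hXinv0).le
  rw [grand, hXm1]
  linarith [b1, b2, b3, b4, b5, habs2, habs3, habs4, habs5, hh1, hh2]
end

section
/- Let a > 0, b = 2, S > 0, and set m_n := S·n³ for n ∈ ℕ, with v(r) = exp(-a/(1-r)²). Then there exist C > 0 and N ∈ ℕ such that for all n ≥ N: | m_{n+1}·log( r_{m_{n+1}} / r_{m_n} ) - G·S^{2/3}·n - 2G·S^{2/3} - (1/3)·G²·S^{1/3} | ≤ C·n^{-1}. -/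
/-!
Put `c = (2a/S)^{1/3}`. The defining equation of `r = r_{S x³}` reads `(1 - r)³ = (c/x)³ r`, so
with `y = r^{1/3}` one has `c/x = (1 - y³)/y`, and expanding `log r = 3 log (1 - (1 - y))` gives
`log r = -(c/x) - (c/x)²/6 + O(x⁻⁴)`. Multiplying the difference of these expansions at `x = n + 1`
and `x = n` by `m_{n+1} = S (n+1)³` turns the error terms into `O(n⁻¹)`, and the main terms
into `S c n + 2 S c + S c²/3 + O(n⁻¹)`, which is the claim since `S c = G S^{2/3}` and
`S c² = G² S^{1/3}`.
-/

open Real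

lemma abs_log_pow_three_add_le {y : ℝ} (hy : 1 / 2 ≤ y) (hy1 : y ≤ 1) :
    |log (y ^ 3) + ((1 - y ^ 3) / y + ((1 - y ^ 3) / y) ^ 2 / 6)| ≤ 14 * (1 - y) ^ 4 := by
  set t := 1 - y with ht
  have ht0 : 0 ≤ t := by linarith
  have hty : y = 1 - t := by ring
  have hlog : |t + t ^ 2 / 2 + t ^ 3 / 3 + log (1 - t)| ≤ 2 * t ^ 4 := by
    have h := Real.abs_log_sub_add_sum_range_le (x := t) (by rw [abs_of_nonneg ht0]; linarith) 3
    simp only [Finset.sum_range_succ, Finset.sum_range_zero, abs_of_nonneg ht0] at h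
    norm_num at h
    calc _ ≤ t ^ 4 / (1 - t) := h
      _ ≤ 2 * t ^ 4 := by rw [div_le_iff₀ (by linarith)]; nlinarith [pow_nonneg ht0 4]
  have hrest : |t ^ 4 * (12 - 12 * t + t ^ 2) / (6 * (1 - t) ^ 2)| ≤ 8 * t ^ 4 := by
    rw [abs_of_nonneg (div_nonneg (mul_nonneg (by positivity) (by nlinarith)) (by positivity)),
      div_le_iff₀ (by nlinarith)]
    nlinarith [pow_nonneg ht0 4, pow_nonneg ht0 5]
  have hexpand : log (y ^ 3) + ((1 - y ^ 3) / y + ((1 - y ^ 3) / y) ^ 2 / 6)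
      = 3 * (t + t ^ 2 / 2 + t ^ 3 / 3 + log (1 - t))
        + t ^ 4 * (12 - 12 * t + t ^ 2) / (6 * (1 - t) ^ 2) := by
    rw [Real.log_pow, hty]
    field_simp [show 1 - t ≠ 0 by linarith]
    ring
  rw [hexpand]
  calc _ ≤ |3 * (t + t ^ 2 / 2 + t ^ 3 / 3 + log (1 - t))|
        + |t ^ 4 * (12 - 12 * t + t ^ 2) / (6 * (1 - t) ^ 2)| := abs_add_le _ _
    _ ≤ 3 * (2 * t ^ 4) + 8 * t ^ 4 := by
        rw [abs_mul, abs_of_pos three_pos]; gcongr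
    _ = 14 * t ^ 4 := by ring

lemma abs_log_add_le_of_one_sub_pow_three_eq {r d : ℝ} (hr : 0 < r) (hd : 0 ≤ d) (hd2 : d ≤ 1 / 2)
    (h : (1 - r) ^ 3 = d ^ 3 * r) : |log r + (d + d ^ 2 / 6)| ≤ 14 * d ^ 4 := by
  obtain ⟨y, hy0, rfl⟩ : ∃ y : ℝ, 0 < y ∧ y ^ 3 = r :=
    ⟨r ^ ((3 : ℕ)⁻¹ : ℝ), by positivity, Real.rpow_inv_natCast_pow hr.le three_ne_zero⟩
  have hdy : 1 - y ^ 3 = d * y := by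
    rw [← mul_pow] at h
    exact (Odd.pow_inj (by decide)).mp h
  have hy1 : y ≤ 1 := by
    rw [← pow_le_one_iff_of_nonneg hy0.le three_ne_zero]; nlinarith [mul_nonneg hd hy0.le]
  have hty : 1 - y ≤ d := by nlinarith [mul_nonneg hy0.le (sub_nonneg.mpr hy1)]
  have hd_eq : d = (1 - y ^ 3) / y := by rw [hdy, mul_div_cancel_right₀ _ hy0.ne']
  calc _ ≤ 14 * (1 - y) ^ 4 := hd_eq ▸ abs_log_pow_three_add_le (by linarith) hy1
    _ ≤ 14 * d ^ 4 := by gcongr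

lemma abs_log_add_le_of_mul_one_sub_pow_three_eq {S A c x r : ℝ} (hS : 0 < S) (hc : 0 < c)
    (hc3 : c ^ 3 = A / S) (hcx : 2 * c ≤ x) (hr : 0 < r) (h : S * x ^ 3 * (1 - r) ^ 3 = A * r) :
    |log r + (c / x + (c / x) ^ 2 / 6)| ≤ 14 * (c / x) ^ 4 := by
  have hx : 0 < x := by linarith
  refine abs_log_add_le_of_one_sub_pow_three_eq hr (by positivity)
    (by rw [div_le_iff₀ hx]; linarith) ?_
  rw [div_pow, hc3]
  field_simp
  linear_combination h

lemma exists_cbrt_div {A S : ℝ} (hA : 0 < A) (hS : 0 < S) :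
    ∃ c : ℝ, 0 < c ∧ c ^ 3 = A / S ∧ A ^ ((1:ℝ) / 3) * S ^ ((2:ℝ) / 3) = S * c ∧
      (A ^ ((1:ℝ) / 3)) ^ 2 * S ^ ((1:ℝ) / 3) = S * c ^ 2 := by
  have hcbrt {B : ℝ} (hB : 0 < B) : (B ^ ((1:ℝ) / 3)) ^ 3 = B := by
    rw [one_div]; exact_mod_cast Real.rpow_inv_natCast_pow hB.le three_ne_zero
  have hS2 : S ^ ((2:ℝ) / 3) = (S ^ ((1:ℝ) / 3)) ^ 2 := by
    rw [← Real.rpow_mul_natCast hS.le]; norm_num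
  rw [hS2]
  set s := S ^ ((1:ℝ) / 3)
  have hs : 0 < s := by positivity
  have hs3 : s ^ 3 = S := hcbrt hS
  refine ⟨A ^ ((1:ℝ) / 3) / s, by positivity, ?_, ?_, ?_⟩
  · rw [div_pow, hcbrt hA, hs3]
  · rw [← hs3]; field_simp
  · rw [← hs3]; field_simp

lemma cube_mul_sub_expansion_eq {S c x : ℝ} (hx : x ≠ 0) (hx1 : x + 1 ≠ 0) :
    S * (x + 1) ^ 3 * ((c / x + (c / x) ^ 2 / 6) - (c / (x + 1) + (c / (x + 1)) ^ 2 / 6))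
      - S * c * x - 2 * (S * c) - 1 / 3 * (S * c ^ 2)
      = S * c / x + S * c ^ 2 * (3 * x + 1) / (6 * x ^ 2) := by
  field_simp
  ring

lemma abs_cube_mul_sub_sub_le_of_approx {S c x L₀ L₁ : ℝ} (hS : 0 < S) (hc : 0 < c) (hx : 1 ≤ x)
    (h₀ : |L₀ + (c / x + (c / x) ^ 2 / 6)| ≤ 14 * (c / x) ^ 4)
    (h₁ : |L₁ + (c / (x + 1) + (c / (x + 1)) ^ 2 / 6)| ≤ 14 * (c / (x + 1)) ^ 4) :
    |S * (x + 1) ^ 3 * (L₁ - L₀) - S * c * x - 2 * (S * c) - 1 / 3 * (S * c ^ 2)|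
      ≤ (S * c + S * c ^ 2 + 224 * S * c ^ 4) * x⁻¹ := by
  have hx0 : 0 < x := by linarith
  set E₀ := L₀ + (c / x + (c / x) ^ 2 / 6)
  set E₁ := L₁ + (c / (x + 1) + (c / (x + 1)) ^ 2 / 6)
  have hsplit : S * (x + 1) ^ 3 * (L₁ - L₀) - S * c * x - 2 * (S * c) - 1 / 3 * (S * c ^ 2)
      = S * (x + 1) ^ 3 * (E₁ - E₀) + (S * c / x + S * c ^ 2 * (3 * x + 1) / (6 * x ^ 2)) := by
    rw [← cube_mul_sub_expansion_eq hx0.ne' (by linarith)]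
    ring
  have hcx : c / (x + 1) ≤ c / x := div_le_div_of_nonneg_left hc.le hx0 (by linarith)
  have hE : |E₁ - E₀| ≤ 28 * (c / x) ^ 4 := by
    have : (c / (x + 1)) ^ 4 ≤ (c / x) ^ 4 := by gcongr
    linarith [abs_sub E₁ E₀]
  have herr : |S * (x + 1) ^ 3 * (E₁ - E₀)| ≤ 224 * S * c ^ 4 * x⁻¹ := by
    rw [abs_mul, abs_of_pos (by positivity)]
    calc _ ≤ S * (8 * x ^ 3) * (28 * (c / x) ^ 4) := by
          gcongr
          nlinarith
      _ = 224 * S * c ^ 4 * x⁻¹ := by field_simp; norm_num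
  have hmain : S * c / x + S * c ^ 2 * (3 * x + 1) / (6 * x ^ 2) ≤ (S * c + S * c ^ 2) * x⁻¹ := by
    have : (3 * x + 1) / (6 * x ^ 2) ≤ x⁻¹ := by
      rw [div_le_iff₀ (by positivity)]; field_simp; linarith
    calc _ = S * c * x⁻¹ + S * c ^ 2 * ((3 * x + 1) / (6 * x ^ 2)) := by ring
      _ ≤ S * c * x⁻¹ + S * c ^ 2 * x⁻¹ := by gcongr
      _ = _ := by ring
  rw [hsplit]
  calc _ ≤ |S * (x + 1) ^ 3 * (E₁ - E₀)| + |S * c / x + S * c ^ 2 * (3 * x + 1) / (6 * x ^ 2)| :=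
        abs_add_le _ _
    _ ≤ 224 * S * c ^ 4 * x⁻¹ + (S * c + S * c ^ 2) * x⁻¹ :=
        add_le_add herr ((abs_of_nonneg (by positivity)).trans_le hmain)
    _ = _ := by ring

/-- Lemma 4.4 for `b = 2`. With `m_n = S n³`, `G = (2a)^{1/3}` and
`r_m` the unique solution in `(0,1)` of `m(1-r)³ = 2a r`, one has for all large `n`:
`|m_{n+1} log(r_{m_{n+1}}/r_{m_n}) - G S^{2/3} n - 2G S^{2/3} - (1/3) G² S^{1/3}| ≤ C n^{-1}`. -/
theorem stmt_15
    (a : ℝ) (ha : 0 < a)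
    (S : ℝ) (hS : 0 < S)
    (G : ℝ) (hG : G = (2 * a) ^ ((1:ℝ) / 3))
    (rr : ℝ → ℝ)
    (hrr : ∀ m : ℝ, 0 < m → rr m ∈ Set.Ioo (0:ℝ) 1 ∧
      m * (1 - rr m) ^ 3 = 2 * a * rr m)
    (mm : ℕ → ℝ) (hmm : ∀ n : ℕ, mm n = S * (n : ℝ) ^ 3) :
    ∃ C : ℝ, 0 < C ∧ ∃ N : ℕ, ∀ n : ℕ, N ≤ n →
      |mm (n+1) * Real.log (rr (mm (n+1)) / rr (mm n)) -
        G * S ^ ((2:ℝ) / 3) * (n : ℝ) - 2 * G * S ^ ((2:ℝ) / 3) -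
        (1 / 3) * G ^ 2 * S ^ ((1:ℝ) / 3)| ≤ C * (n : ℝ)⁻¹ := by
  obtain ⟨c, hc, hc3, hGc, hGc2⟩ := exists_cbrt_div (by positivity : 0 < 2 * a) hS
  rw [← hG] at hGc hGc2
  have hlog : ∀ k : ℕ, 2 * c ≤ k →
      |log (rr (mm k)) + (c / k + (c / k) ^ 2 / 6)| ≤ 14 * (c / k) ^ 4 := by
    intro k hk
    have hk0 : (0:ℝ) < k := by linarith
    obtain ⟨⟨hr0, -⟩, hr⟩ := hrr (mm k) (by rw [hmm]; positivity)
    generalize rr (mm k) = r at hr0 hr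
    rw [hmm] at hr
    exact abs_log_add_le_of_mul_one_sub_pow_three_eq hS hc hc3 hk hr0 hr
  refine ⟨S * c + S * c ^ 2 + 224 * S * c ^ 4, by positivity, max 1 ⌈2 * c⌉₊, fun n hn => ?_⟩
  have hn1 : (1:ℝ) ≤ n := by exact_mod_cast (le_max_left _ _).trans hn
  have hnc : 2 * c ≤ n := (Nat.le_ceil _).trans (by exact_mod_cast (le_max_right _ _).trans hn)
  have h₀ := hlog n hnc
  have h₁ := hlog (n + 1) (by push_cast; linarith)
  push_cast at h₁
  have hr₀ := (hrr (mm n) (by rw [hmm]; positivity)).1.1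
  have hr₁ := (hrr (mm (n + 1)) (by rw [hmm]; positivity)).1.1
  calc _ = |S * ((n:ℝ) + 1) ^ 3 * (log (rr (mm (n + 1))) - log (rr (mm n)))
          - S * c * n - 2 * (S * c) - 1 / 3 * (S * c ^ 2)| := by
        rw [log_div hr₁.ne' hr₀.ne', hmm (n + 1)]
        push_cast
        congr 1
        linear_combination (-((n:ℝ) + 2)) * hGc - 1 / 3 * hGc2
    _ ≤ _ := abs_cube_mul_sub_sub_le_of_approx hS hc hn1 h₀ h₁
end

section
/- Let a > 0, b = 2, S > 0, and set m_n := S·n³ for n ∈ ℕ, with v(r) = exp(-a/(1-r)²). Then there exist C > 0 and N ∈ ℕ such that for all n ≥ N: | m_n·log( r_{m_{n+1}} / r_{m_n} ) - G·S^{2/3}·n + G·S^{2/3} - (1/3)·S^{1/3}·G² | ≤ C·n^{-1}. -/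
set_option maxHeartbeats 1000000 in
lemma lemA (t ε : ℝ) (ht : 0 < t) (ht2 : t ≤ 1/2) (hε0 : 0 < ε) (hε1 : ε < 1)
    (heq : ε ^ 3 = t ^ 3 * (1 - ε)) :
    |Real.log (1 - ε) + t + t ^ 2 / 6| ≤ 10 * t ^ 4 := by
  obtain ⟨u, hu⟩ : ∃ u : ℝ, u = t - t ^ 2 / 3 := ⟨_, rfl⟩
  obtain ⟨δ, hδ⟩ : ∃ δ : ℝ, δ = ε - u := ⟨_, rfl⟩
  have hεud : ε = u + δ := by rw [hδ]; ring
  have hid : δ * (3 * u ^ 2 + 3 * u * δ + δ ^ 2 + t ^ 3) = t ^ 6 / 27 := by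
    rw [hδ, hu]; linear_combination heq
  have hu5 : 5 / 6 * t ≤ u := by rw [hu]; nlinarith
  have hupos : 0 < u := by nlinarith
  have hDpos : 0 < 3 * u ^ 2 + 3 * u * δ + δ ^ 2 + t ^ 3 := by
    nlinarith [sq_nonneg (δ + 3 * u / 2), pow_pos ht 3]
  have hδpos : 0 < δ := by
    by_contra h
    push_neg at h
    nlinarith [pow_pos ht 6]
  have hD2 : 25 / 48 * t ^ 2 ≤ 3 * u ^ 2 + 3 * u * δ + δ ^ 2 + t ^ 3 := by
    nlinarith [sq_nonneg (δ + 3 * u / 2),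
      mul_nonneg (by linarith : (0:ℝ) ≤ u - 5/6*t) (by linarith : (0:ℝ) ≤ u + 5/6*t),
      pow_pos ht 3]
  have hδle : δ ≤ t ^ 4 := by
    have h1 : δ * (25 / 48 * t ^ 2) ≤ t ^ 6 / 27 := by
      calc δ * (25 / 48 * t ^ 2) ≤ δ * (3 * u ^ 2 + 3 * u * δ + δ ^ 2 + t ^ 3) :=
            mul_le_mul_of_nonneg_left hD2 hδpos.le
        _ = t ^ 6 / 27 := hid
    have h2 : δ * t ^ 2 ≤ t ^ 4 * t ^ 2 := by nlinarith [pow_pos ht 6]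
    exact le_of_mul_le_mul_right h2 (pow_pos ht 2)
  have hut : u ≤ t := by nlinarith
  have hεt : ε ≤ t := by nlinarith
  have hεhalf : ε ≤ 1 / 2 := le_trans hεt ht2
  have huhalf : u ≤ 1 / 2 := le_trans hut ht2
  have hlog := Real.abs_log_sub_add_sum_range_le (x := ε) (by rw [abs_of_pos hε0]; linarith) 3
  rw [abs_of_pos hε0] at hlog
  have hsum : ∑ i ∈ Finset.range 3, ε ^ (i + 1) / ((i : ℝ) + 1) = ε + ε ^ 2 / 2 + ε ^ 3 / 3 := by
    simp [Finset.sum_range_succ]; ring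
  rw [hsum] at hlog
  have hrem : ε ^ (3 + 1) / (1 - ε) ≤ 2 * t ^ 4 := by
    have h1 : ε ^ 4 ≤ t ^ 4 := pow_le_pow_left₀ hε0.le hεt 4
    have h2 : (1:ℝ)/2 ≤ 1 - ε := by linarith
    calc ε ^ (3+1) / (1 - ε) ≤ ε ^ 4 / (1/2) := by
          apply div_le_div_of_nonneg_left (by positivity) (by norm_num) h2
      _ = 2 * ε ^ 4 := by ring
      _ ≤ 2 * t ^ 4 := by linarith
  -- polynomial part
  have hPdiff : (ε + ε^2/2 + ε^3/3) - (u + u^2/2 + u^3/3)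
      = δ * (1 + (ε + u)/2 + (ε^2 + ε*u + u^2)/3) := by rw [hεud]; ring
  have hε2 : ε^2 ≤ 1/4 := by nlinarith
  have hu2 : u^2 ≤ 1/4 := by nlinarith
  have hεu : ε*u ≤ 1/4 := by nlinarith
  have hfac1 : (0:ℝ) ≤ 1 + (ε + u)/2 + (ε^2 + ε*u + u^2)/3 := by positivity
  have hfac2 : 1 + (ε + u)/2 + (ε^2 + ε*u + u^2)/3 ≤ 2 := by linarith
  have hPd1 : 0 ≤ (ε + ε^2/2 + ε^3/3) - (u + u^2/2 + u^3/3) := by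
    rw [hPdiff]; positivity
  have hPd2 : (ε + ε^2/2 + ε^3/3) - (u + u^2/2 + u^3/3) ≤ 2 * t ^ 4 := by
    rw [hPdiff]
    calc δ * (1 + (ε + u)/2 + (ε^2 + ε*u + u^2)/3) ≤ δ * 2 :=
          mul_le_mul_of_nonneg_left hfac2 hδpos.le
      _ ≤ 2 * t ^ 4 := by linarith
  have hPu : (u + u^2/2 + u^3/3) - (t + t^2/6) = -5*t^4/18 + t^5/9 - t^6/81 := by
    rw [hu]; ring
  have ht5 : t^5 ≤ t^4/2 := by nlinarith [pow_pos ht 4]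
  have ht6 : t^6 ≤ t^4/4 := by nlinarith [pow_pos ht 4, pow_pos ht 5]
  have ht6' : 0 < t^6 := pow_pos ht 6
  have ht4 : 0 < t^4 := pow_pos ht 4
  have ht5' : 0 < t^5 := pow_pos ht 5
  have hpoly : |(ε + ε ^ 2 / 2 + ε ^ 3 / 3) - (t + t ^ 2 / 6)| ≤ 3 * t ^ 4 := by
    rw [abs_le]; constructor <;> nlinarith
  calc |Real.log (1 - ε) + t + t ^ 2 / 6|
      = |(ε + ε ^ 2 / 2 + ε ^ 3 / 3 + Real.log (1 - ε)) - ((ε + ε ^ 2 / 2 + ε ^ 3 / 3) - (t + t ^ 2 / 6))| := by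
        congr 1; ring
    _ ≤ |ε + ε ^ 2 / 2 + ε ^ 3 / 3 + Real.log (1 - ε)| + |(ε + ε ^ 2 / 2 + ε ^ 3 / 3) - (t + t ^ 2 / 6)| :=
        abs_sub _ _
    _ ≤ 2 * t ^ 4 + 3 * t ^ 4 := add_le_add (le_trans hlog hrem) hpoly
    _ ≤ 10 * t ^ 4 := by linarith


set_option maxHeartbeats 1000000 in
/-- Lemma 4.5 for `b = 2`. With `m_n = S n³`, `G = (2a)^{1/3}` and
`r_m` the unique solution in `(0,1)` of `m(1-r)³ = 2a r`, one has for all large `n`: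
`|m_n log(r_{m_{n+1}}/r_{m_n}) - G S^{2/3} n + G S^{2/3} - (1/3) S^{1/3} G²| ≤ C n^{-1}`. -/
theorem stmt_17
    (a : ℝ) (ha : 0 < a)
    (S : ℝ) (hS : 0 < S)
    (G : ℝ) (hG : G = (2 * a) ^ ((1:ℝ) / 3))
    (rr : ℝ → ℝ)
    (hrr : ∀ m : ℝ, 0 < m → rr m ∈ Set.Ioo (0:ℝ) 1 ∧
      m * (1 - rr m) ^ 3 = 2 * a * rr m)
    (mm : ℕ → ℝ) (hmm : ∀ n : ℕ, mm n = S * (n : ℝ) ^ 3) :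
    ∃ C : ℝ, 0 < C ∧ ∃ N : ℕ, ∀ n : ℕ, N ≤ n →
      |mm n * Real.log (rr (mm (n+1)) / rr (mm n)) -
        G * S ^ ((2:ℝ) / 3) * (n : ℝ) + G * S ^ ((2:ℝ) / 3) -
        (1 / 3) * S ^ ((1:ℝ) / 3) * G ^ 2| ≤ C * (n : ℝ)⁻¹ := by
  obtain ⟨s, hsdef⟩ : ∃ s : ℝ, s = S ^ ((1:ℝ)/3) := ⟨_, rfl⟩
  have hs : 0 < s := hsdef ▸ Real.rpow_pos_of_pos hS _
  have hs3 : s ^ 3 = S := by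
    rw [hsdef, ← Real.rpow_natCast (S ^ ((1:ℝ)/3)) 3, ← Real.rpow_mul hS.le]
    norm_num
  have hGpos : 0 < G := by rw [hG]; exact Real.rpow_pos_of_pos (by linarith) _
  have hG3 : G ^ 3 = 2 * a := by
    rw [hG, ← Real.rpow_natCast ((2*a) ^ ((1:ℝ)/3)) 3, ← Real.rpow_mul (by linarith)]
    norm_num
  have hS23 : S ^ ((2:ℝ)/3) = s ^ 2 := by
    rw [hsdef, ← Real.rpow_natCast (S ^ ((1:ℝ)/3)) 2, ← Real.rpow_mul hS.le]
    norm_num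
  -- key estimate
  have key : ∀ n : ℕ, 1 ≤ n → G / (s * n) ≤ 1/2 →
      |Real.log (rr (mm n)) + G / (s * n) + (G / (s * n)) ^ 2 / 6| ≤ 10 * (G / (s * n)) ^ 4 := by
    intro n hn1 hhalf
    have hnpos : (0:ℝ) < n := by exact_mod_cast hn1
    have hmpos : 0 < mm n := by rw [hmm]; positivity
    obtain ⟨⟨hr0, hr1⟩, heqn⟩ := hrr (mm n) hmpos
    have htpos : 0 < G / (s * n) := by positivity
    have ht3 : (G / (s * n)) ^ 3 = 2 * a / mm n := by
      rw [div_pow, mul_pow, hG3, hs3, hmm]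
    have heq : (1 - rr (mm n)) ^ 3 = (G / (s * n)) ^ 3 * (1 - (1 - rr (mm n))) := by
      rw [ht3]
      field_simp
      linarith [heqn]
    have := lemA (G / (s * n)) (1 - rr (mm n)) htpos hhalf (by linarith) (by linarith) heq
    have hrw : (1:ℝ) - (1 - rr (mm n)) = rr (mm n) := by ring
    rwa [hrw] at this
  refine ⟨G*s^2 + G^2*s + 20*G^4/s + 1, by positivity, ⌈2*G/s⌉₊ + 1, ?_⟩
  intro n hn
  have hn1 : 1 ≤ n := le_trans (Nat.le_add_left 1 _) hn
  have hnpos : (0:ℝ) < n := by exact_mod_cast hn1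
  have hceil : 2*G/s ≤ (n:ℝ) := by
    calc 2*G/s ≤ (⌈2*G/s⌉₊ : ℝ) := Nat.le_ceil _
      _ ≤ (n:ℝ) := by exact_mod_cast le_trans (Nat.le_succ _) hn
  have hceil' : 2*G ≤ s * n := by rw [div_le_iff₀ hs] at hceil; linarith
  have hnn1 : (0:ℝ) < (n:ℝ) + 1 := by linarith
  obtain ⟨t1, ht1def⟩ : ∃ t : ℝ, t = G / (s * n) := ⟨_, rfl⟩
  obtain ⟨t2, ht2def⟩ : ∃ t : ℝ, t = G / (s * ((n:ℝ)+1)) := ⟨_, rfl⟩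
  have ht1pos : 0 < t1 := by rw [ht1def]; positivity
  have ht2pos : 0 < t2 := by rw [ht2def]; positivity
  have ht1half : t1 ≤ 1/2 := by
    rw [ht1def, div_le_iff₀ (by positivity)]; linarith
  have ht2half : t2 ≤ 1/2 := by
    rw [ht2def, div_le_iff₀ (by positivity)]; nlinarith
  have ht21 : t2 ≤ t1 := by
    rw [ht1def, ht2def]
    exact div_le_div_of_nonneg_left hGpos.le (by positivity) (by nlinarith)
  obtain ⟨⟨hr10, hr11⟩, -⟩ := hrr (mm n) (by rw [hmm]; positivity)
  obtain ⟨⟨hr20, hr21⟩, -⟩ := hrr (mm (n+1)) (by rw [hmm]; positivity)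
  obtain ⟨e1, he1def⟩ : ∃ e : ℝ, e = Real.log (rr (mm n)) + t1 + t1 ^ 2 / 6 := ⟨_, rfl⟩
  obtain ⟨e2, he2def⟩ : ∃ e : ℝ, e = Real.log (rr (mm (n+1))) + t2 + t2 ^ 2 / 6 := ⟨_, rfl⟩
  have hk1 : |e1| ≤ 10 * t1 ^ 4 := by
    rw [he1def, ht1def]; exact key n hn1 (ht1def ▸ ht1half)
  have hk2 : |e2| ≤ 10 * t2 ^ 4 := by
    have h := key (n+1) (by omega) (by push_cast; rw [← ht2def]; exact ht2half)
    push_cast at h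
    rw [he2def, ht2def]; exact h
  have hlogdiv : Real.log (rr (mm (n+1)) / rr (mm n)) =
      Real.log (rr (mm (n+1))) - Real.log (rr (mm n)) :=
    Real.log_div (ne_of_gt hr20) (ne_of_gt hr10)
  have hlog1 : Real.log (rr (mm n)) = -t1 - t1 ^ 2 / 6 + e1 := by rw [he1def]; ring
  have hlog2 : Real.log (rr (mm (n+1))) = -t2 - t2 ^ 2 / 6 + e2 := by rw [he2def]; ring
  have hmmn : mm n = s^3 * (n:ℝ)^3 := by rw [hmm, hs3]
  -- exact identity for the main part
  have hmain : s^3 * (n:ℝ)^3 * ((t1 - t2) + (t1^2 - t2^2)/6) - G * s^2 * n + G * s^2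
      - (1/3) * s * G^2
      = G*s^2/((n:ℝ)+1) - G^2*s*(3*(n:ℝ)+2)/(6*((n:ℝ)+1)^2) := by
    rw [ht1def, ht2def]
    field_simp
    ring
  -- bound on the main part
  have hsplit : (G*s^2 + G^2*s)/(n:ℝ) = G*s^2/(n:ℝ) + G^2*s/(n:ℝ) := add_div _ _ _
  have hA1 : G*s^2/((n:ℝ)+1) ≤ G*s^2/(n:ℝ) :=
    div_le_div_of_nonneg_left (by positivity) hnpos (by linarith)
  have hA1' : 0 ≤ G*s^2/((n:ℝ)+1) := by positivity
  have hA1'' : 0 ≤ G*s^2/(n:ℝ) := by positivity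
  have hA2 : G^2*s*(3*(n:ℝ)+2)/(6*((n:ℝ)+1)^2) ≤ G^2*s/(n:ℝ) := by
    rw [div_le_div_iff₀ (by positivity) hnpos]
    nlinarith [mul_pos (mul_pos hGpos hGpos) hs]
  have hA2' : 0 ≤ G^2*s*(3*(n:ℝ)+2)/(6*((n:ℝ)+1)^2) := by positivity
  have hA2'' : 0 ≤ G^2*s/(n:ℝ) := by positivity
  have hAabs : |G*s^2/((n:ℝ)+1) - G^2*s*(3*(n:ℝ)+2)/(6*((n:ℝ)+1)^2)|
      ≤ (G*s^2 + G^2*s)/(n:ℝ) := by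
    rw [abs_le, hsplit]
    constructor <;> linarith
  -- bound the error part
  have herr : s^3 * (n:ℝ)^3 * (|e2| + |e1|) ≤ 20*G^4/s / (n:ℝ) := by
    have ht24 : t2 ^ 4 ≤ t1 ^ 4 := pow_le_pow_left₀ ht2pos.le ht21 4
    have h2 : |e2| ≤ 10 * t1 ^ 4 := by linarith
    have ht14 : t1 ^ 4 = G^4 / (s^4 * (n:ℝ)^4) := by rw [ht1def, div_pow, mul_pow]
    calc s^3 * (n:ℝ)^3 * (|e2| + |e1|) ≤ s^3 * (n:ℝ)^3 * (20 * t1 ^ 4) :=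
          mul_le_mul_of_nonneg_left (by linarith) (by positivity)
      _ = 20*G^4/s / (n:ℝ) := by rw [ht14]; field_simp
  -- assemble
  have hX : mm n * Real.log (rr (mm (n+1)) / rr (mm n)) -
        G * S ^ ((2:ℝ) / 3) * (n : ℝ) + G * S ^ ((2:ℝ) / 3) -
        (1 / 3) * S ^ ((1:ℝ) / 3) * G ^ 2
      = (G*s^2/((n:ℝ)+1) - G^2*s*(3*(n:ℝ)+2)/(6*((n:ℝ)+1)^2))
        + s^3 * (n:ℝ)^3 * (e2 - e1) := by
    rw [hlogdiv, hlog1, hlog2, hmmn, hS23, ← hsdef, ← hmain]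
    ring
  rw [hX]
  calc |(G*s^2/((n:ℝ)+1) - G^2*s*(3*(n:ℝ)+2)/(6*((n:ℝ)+1)^2)) + s^3 * (n:ℝ)^3 * (e2 - e1)|
      ≤ |G*s^2/((n:ℝ)+1) - G^2*s*(3*(n:ℝ)+2)/(6*((n:ℝ)+1)^2)| + |s^3 * (n:ℝ)^3 * (e2 - e1)| :=
        abs_add_le _ _
    _ ≤ (G*s^2 + G^2*s)/(n:ℝ) + s^3 * (n:ℝ)^3 * (|e2| + |e1|) := by
        apply add_le_add hAabs
        rw [abs_mul, abs_of_pos (show (0:ℝ) < s^3 * (n:ℝ)^3 by positivity)]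
        exact mul_le_mul_of_nonneg_left (abs_sub _ _) (by positivity)
    _ ≤ (G*s^2 + G^2*s)/(n:ℝ) + 20*G^4/s / (n:ℝ) := by linarith
    _ ≤ (G*s^2 + G^2*s + 20*G^4/s + 1) * (n:ℝ)⁻¹ := by
        rw [← add_div, div_eq_mul_inv]
        exact mul_le_mul_of_nonneg_right (by linarith) (by positivity)
end
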